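/- arXiv:2505.01641 — 5 statements merged into one kernel-verified Lean document; each statement's English description precedes it below -/
import Mathlib

section
/- Under Assumption 1, Σ_R = { (A,B) ∈ ℝ^{n×n}×ℝ^{n×m} : [A B]ᵀ ∈ Z_{n,n+m}(N) }, where N := [E 𝐗] Φ̂ [E 𝐗]ᵀ ∈ S^{2n+m} and [A B]ᵀ denotes the (n+m)×n transpose of the horizontal concatenation [A B]. -/
open Matrix

noncomputable section

/-- Moore–Penrose pseudoinverse of a real square matrix, defined via classical choice
(the Moore–Penrose inverse exists and is unique for real matrices). -/
def pinv {k : Type*} [Fintype k] (A : Matrix k k ℝ) : Matrix k k ℝ := by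
  classical
  exact if h : ∃ B : Matrix k k ℝ,
      A * B * A = A ∧ B * A * B = B ∧ (A * B)ᵀ = A * B ∧ (B * A)ᵀ = B * A
    then h.choose else 0

/-- Positive semidefinite square root of a real matrix (junk value `0` if not PSD). -/
def msqrt {k : Type*} [Fintype k] [DecidableEq k] (A : Matrix k k ℝ) : Matrix k k ℝ := by
  classical
  exact if h : A.PosSemidef then
    (h.1.eigenvectorUnitary : Matrix k k ℝ) * diagonal (fun i => Real.sqrt (h.1.eigenvalues i)) *
      (star h.1.eigenvectorUnitary : Matrix k k ℝ) else 0

/-- `Z_{q,r}(N) = { Z : [I; Z]ᵀ N [I; Z] ⪰ 0 }`. -/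
def ZSet {q r : Type*} [Fintype q] [Fintype r] [DecidableEq q]
    (N : Matrix (q ⊕ r) (q ⊕ r) ℝ) : Set (Matrix r q ℝ) :=
  {Z | ((fromRows (1 : Matrix q q ℝ) Z)ᵀ * N * fromRows (1 : Matrix q q ℝ) Z).PosSemidef}

/-- `Z⁺_{q,r}(N) = { Z : [I; Z]ᵀ N [I; Z] ≻ 0 }`. -/
def ZSetP {q r : Type*} [Fintype q] [Fintype r] [DecidableEq q]
    (N : Matrix (q ⊕ r) (q ⊕ r) ℝ) : Set (Matrix r q ℝ) :=
  {Z | ((fromRows (1 : Matrix q q ℝ) Z)ᵀ * N * fromRows (1 : Matrix q q ℝ) Z).PosDef}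

/-- `Π_{q,r}`: symmetric matrices `N` with `N₂₂ ⪯ 0`, `ker N₂₂ ⊆ ker N₁₂` and
`N₁₁ - N₁₂ N₂₂† N₁₂ᵀ ⪰ 0`. -/
def PiSet (q r : Type*) [Fintype q] [Fintype r] : Set (Matrix (q ⊕ r) (q ⊕ r) ℝ) :=
  {N | N.IsSymm ∧ (-(N.toBlocks₂₂)).PosSemidef ∧
      (∀ x : r → ℝ, N.toBlocks₂₂ *ᵥ x = 0 → N.toBlocks₁₂ *ᵥ x = 0) ∧
      (N.toBlocks₁₁ - N.toBlocks₁₂ * pinv N.toBlocks₂₂ * (N.toBlocks₁₂)ᵀ).PosSemidef}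

/-- Row index type of the stacked data matrix `[X₊ᵀ, -Xᵀ, -Uᵀ]ᵀ` (`2n+m` rows). -/
abbrev SRows (n m : ℕ) := Fin n ⊕ (Fin n ⊕ Fin m)

/-- `[I_n A B]`. -/
def sysRow {n m : ℕ} (A : Matrix (Fin n) (Fin n) ℝ) (B : Matrix (Fin n) (Fin m) ℝ) :
    Matrix (Fin n) (SRows n m) ℝ :=
  fromCols (1 : Matrix (Fin n) (Fin n) ℝ) (fromCols A B)

/-- `𝐗 = [X₊ᵀ, -Xᵀ, -Uᵀ]ᵀ`. -/
def bigX {n m T : ℕ} (Xp X : Matrix (Fin n) (Fin T) ℝ) (U : Matrix (Fin m) (Fin T) ℝ) :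
    Matrix (SRows n m) (Fin T) ℝ :=
  fromRows Xp (fromRows (-X) (-U))

/-- The data-perturbation set `𝒟 = { EΔ̂ : Δ̂ᵀ ∈ Z(Φ̂) }`. -/
def Dset {n m T nh : ℕ} (E : Matrix (SRows n m) (Fin nh) ℝ)
    (Φ : Matrix (Fin nh ⊕ Fin T) (Fin nh ⊕ Fin T) ℝ) :
    Set (Matrix (SRows n m) (Fin T) ℝ) :=
  {Δ | ∃ Δh : Matrix (Fin nh) (Fin T) ℝ, Δhᵀ ∈ ZSet Φ ∧ Δ = E * Δh}

/-- `Σ`: systems consistent with the data. -/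
def SigmaSet {n m T nh : ℕ} (Xp X : Matrix (Fin n) (Fin T) ℝ) (U : Matrix (Fin m) (Fin T) ℝ)
    (E : Matrix (SRows n m) (Fin nh) ℝ)
    (Φ : Matrix (Fin nh ⊕ Fin T) (Fin nh ⊕ Fin T) ℝ) :
    Set (Matrix (Fin n) (Fin n) ℝ × Matrix (Fin n) (Fin m) ℝ) :=
  {AB | ∃ Δ' ∈ Dset E Φ, sysRow AB.1 AB.2 * bigX Xp X U = sysRow AB.1 AB.2 * Δ'}

/-- `N = [E 𝐗] Φ̂ [E 𝐗]ᵀ`. -/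
def Nmat {n m T nh : ℕ} (Xp X : Matrix (Fin n) (Fin T) ℝ) (U : Matrix (Fin m) (Fin T) ℝ)
    (E : Matrix (SRows n m) (Fin nh) ℝ)
    (Φ : Matrix (Fin nh ⊕ Fin T) (Fin nh ⊕ Fin T) ℝ) :
    Matrix (SRows n m) (SRows n m) ℝ :=
  fromCols E (bigX Xp X U) * Φ * (fromCols E (bigX Xp X U))ᵀ

/-- `[I_n; 0]` used in the image condition `im E ⊇ im [I_n; 0]`. -/
def iota0 (n m : ℕ) : Matrix (SRows n m) (Fin n) ℝ :=
  fromRows (1 : Matrix (Fin n) (Fin n) ℝ) (0 : Matrix (Fin n ⊕ Fin m) (Fin n) ℝ)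

/-- `Δ̂_R(M₁)` from the explicit parametrization of `Z(Φ̂)`. -/
def ΔhatR {nh T : ℕ} (Φ : Matrix (Fin nh ⊕ Fin T) (Fin nh ⊕ Fin T) ℝ)
    (M1 : Matrix (Fin nh) (Fin T) ℝ) : Matrix (Fin nh) (Fin T) ℝ :=
  -(Φ.toBlocks₁₂ * pinv Φ.toBlocks₂₂) +
    msqrt (Φ.toBlocks₁₁ - Φ.toBlocks₁₂ * pinv Φ.toBlocks₂₂ * (Φ.toBlocks₁₂)ᵀ) * M1 *
      msqrt (pinv (-(Φ.toBlocks₂₂)))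

/-- `Δ̂_N(M₂) = M₂ (I - Φ̂₂₂ Φ̂₂₂†)`. -/
def ΔhatN {nh T : ℕ} (Φ : Matrix (Fin nh ⊕ Fin T) (Fin nh ⊕ Fin T) ℝ)
    (M2 : Matrix (Fin nh) (Fin T) ℝ) : Matrix (Fin nh) (Fin T) ℝ :=
  M2 * ((1 : Matrix (Fin T) (Fin T) ℝ) - Φ.toBlocks₂₂ * pinv Φ.toBlocks₂₂)

/-- `Σ_R`. -/
def SigmaR {n m T nh : ℕ} (Xp X : Matrix (Fin n) (Fin T) ℝ) (U : Matrix (Fin m) (Fin T) ℝ)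
    (E : Matrix (SRows n m) (Fin nh) ℝ)
    (Φ : Matrix (Fin nh ⊕ Fin T) (Fin nh ⊕ Fin T) ℝ) :
    Set (Matrix (Fin n) (Fin n) ℝ × Matrix (Fin n) (Fin m) ℝ) :=
  {AB | ∃ M1 : Matrix (Fin nh) (Fin T) ℝ,
      ((1 : Matrix (Fin nh) (Fin nh) ℝ) - M1 * M1ᵀ).PosSemidef ∧
      sysRow AB.1 AB.2 * (bigX Xp X U - E * ΔhatR Φ M1) * Φ.toBlocks₂₂ = 0}

/-- `Σ_N`. -/
def SigmaN {n m T nh : ℕ} (Xp X : Matrix (Fin n) (Fin T) ℝ) (U : Matrix (Fin m) (Fin T) ℝ)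
    (E : Matrix (SRows n m) (Fin nh) ℝ)
    (Φ : Matrix (Fin nh ⊕ Fin T) (Fin nh ⊕ Fin T) ℝ) :
    Set (Matrix (Fin n) (Fin n) ℝ × Matrix (Fin n) (Fin m) ℝ) :=
  {AB | ∃ M2 : Matrix (Fin nh) (Fin T) ℝ,
      sysRow AB.1 AB.2 * (bigX Xp X U - E * ΔhatN Φ M2) *
        ((1 : Matrix (Fin T) (Fin T) ℝ) - Φ.toBlocks₂₂ * pinv Φ.toBlocks₂₂) = 0}



lemma rct {m n : Type*} (A : Matrix m n ℝ) : Aᴴ = Aᵀ := by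
  ext i j; simp [conjTranspose_apply]

lemma isSymm_of_hermitian {k : Type*} {A : Matrix k k ℝ} (h : A.IsHermitian) : A.IsSymm := by
  rwa [Matrix.IsHermitian, rct] at h

lemma hermitian_of_isSymm {k : Type*} {A : Matrix k k ℝ} (h : A.IsSymm) : A.IsHermitian := by
  rwa [Matrix.IsHermitian, rct]

lemma exists_penrose {k : Type*} [Fintype k] [DecidableEq k] {A : Matrix k k ℝ}
    (hA : A.IsSymm) :
    ∃ B : Matrix k k ℝ,
      A * B * A = A ∧ B * A * B = B ∧ (A * B)ᵀ = A * B ∧ (B * A)ᵀ = B * A := by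
  have hH : A.IsHermitian := hermitian_of_isSymm hA
  set U : Matrix k k ℝ := (hH.eigenvectorUnitary : Matrix k k ℝ)
  have hU : (star U) * U = 1 ∧ U * star U = 1 := (Unitary.mem_iff).mp hH.eigenvectorUnitary.2
  set d : k → ℝ := hH.eigenvalues
  have hspec : A = U * diagonal d * star U := by
    have := hH.spectral_theorem
    simpa using this
  have key : ∀ X Y : k → ℝ,
      (U * diagonal X * star U) * (U * diagonal Y * star U) = U * diagonal (X * Y) * star U := by
    intro X Y
    have h1 : ∀ Z : Matrix k k ℝ, star U * (U * Z) = Z := fun Z => by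
      rw [← Matrix.mul_assoc, hU.1, Matrix.one_mul]
    simp only [Matrix.mul_assoc, h1]
    rw [← Matrix.mul_assoc (diagonal X) (diagonal Y) (star U), diagonal_mul_diagonal]
    rfl
  have hsym : ∀ X : k → ℝ, (U * diagonal X * star U)ᵀ = U * diagonal X * star U := by
    intro X
    calc (U * diagonal X * star U)ᵀ = (U * diagonal X * star U)ᴴ := (rct _).symm
    _ = U * diagonal X * star U := by
        simp [conjTranspose_mul, diagonal_conjTranspose, star_eq_conjTranspose,
          Matrix.mul_assoc, Pi.star_def]
  set e : k → ℝ := fun i => (d i)⁻¹ with he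
  have hde : d * e * d = d := by
    funext i
    by_cases h : d i = 0  <;> simp [he, Pi.mul_apply, h]
  have hed : e * d * e = e := by
    funext i
    by_cases h : d i = 0 <;> simp [he, Pi.mul_apply, h]
  refine ⟨U * diagonal e * star U, ?_, ?_, ?_, ?_⟩
  · rw [hspec, key, key, hde]
  · rw [hspec, key, key, hed]
  · rw [hspec, key]; exact hsym _
  · rw [hspec, key]; exact hsym _

lemma penrose_unique {k : Type*} [Fintype k] {A B C : Matrix k k ℝ}
    (hB : A * B * A = A ∧ B * A * B = B ∧ (A * B)ᵀ = A * B ∧ (B * A)ᵀ = B * A)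
    (hC : A * C * A = A ∧ C * A * C = C ∧ (A * C)ᵀ = A * C ∧ (C * A)ᵀ = C * A) :
    B = C := by
  obtain ⟨hB1, hB2, hB3, hB4⟩ := hB
  obtain ⟨hC1, hC2, hC3, hC4⟩ := hC
  have hAB : A * B = A * C := by
    calc A * B = (A * B)ᵀ := hB3.symm
    _ = ((A * C * A) * B)ᵀ := by rw [hC1]
    _ = (A * B)ᵀ * (A * C)ᵀ := by
        simp only [Matrix.transpose_mul, Matrix.mul_assoc]
    _ = (A * B) * (A * C) := by rw [hB3, hC3]
    _ = (A * B * A) * C := by simp only [Matrix.mul_assoc]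
    _ = A * C := by rw [hB1]
  have hBA : B * A = C * A := by
    calc B * A = (B * A)ᵀ := hB4.symm
    _ = (B * (A * C * A))ᵀ := by rw [hC1]
    _ = (C * A)ᵀ * (B * A)ᵀ := by
        simp only [Matrix.transpose_mul, Matrix.mul_assoc]
    _ = (C * A) * (B * A) := by rw [hB4, hC4]
    _ = C * (A * B * A) := by simp only [Matrix.mul_assoc]
    _ = C * A := by rw [hB1]
  calc B = B * A * B := hB2.symm
  _ = C * A * B := by rw [hBA]
  _ = C * (A * C) := by rw [Matrix.mul_assoc, hAB]
  _ = C := by rw [← Matrix.mul_assoc, hC2]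


section pinvlem
variable {k : Type*} [Fintype k] {A : Matrix k k ℝ}

lemma pinv_spec (hA : A.IsSymm) :
    A * pinv A * A = A ∧ pinv A * A * pinv A = pinv A ∧
      (A * pinv A)ᵀ = A * pinv A ∧ (pinv A * A)ᵀ = pinv A * A := by
  classical
  have h := exists_penrose hA
  rw [pinv, dif_pos h]
  exact h.choose_spec

lemma pinv_symm (hA : A.IsSymm) : (pinv A)ᵀ = pinv A := by
  obtain ⟨h1, h2, h3, h4⟩ := pinv_spec hA
  have hAe : Aᵀ = A := hA.eq
  refine penrose_unique (A := A) (B := (pinv A)ᵀ) ?_ ⟨h1, h2, h3, h4⟩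
  refine ⟨?_, ?_, ?_, ?_⟩
  · have := congrArg Matrix.transpose h1
    simpa [Matrix.transpose_mul, hAe, Matrix.mul_assoc] using this
  · have := congrArg Matrix.transpose h2
    simpa [Matrix.transpose_mul, hAe, Matrix.mul_assoc] using this
  · -- (A * (pinv A)ᵀ)ᵀ = A * (pinv A)ᵀ
    have e1 : A * (pinv A)ᵀ = pinv A * A := by
      calc A * (pinv A)ᵀ = (pinv A * Aᵀ)ᵀ := by simp [Matrix.transpose_mul]
      _ = (pinv A * A)ᵀ := by rw [hAe]
      _ = pinv A * A := h4
    rw [e1, h4]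
  · have e1 : (pinv A)ᵀ * A = A * pinv A := by
      calc (pinv A)ᵀ * A = (Aᵀ * pinv A)ᵀ := by simp [Matrix.transpose_mul]
      _ = (A * pinv A)ᵀ := by rw [hAe]
      _ = A * pinv A := h3
    rw [e1, h3]

lemma pinv_posSemidef (hA : A.PosSemidef) : (pinv A).PosSemidef := by
  have hs : A.IsSymm := by have := hA.1; rwa [Matrix.IsHermitian, rct] at this
  obtain ⟨h1, h2, h3, h4⟩ := pinv_spec hs
  have : ((pinv A)ᴴ * A * pinv A).PosSemidef := hA.conjTranspose_mul_mul_same (pinv A)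
  rwa [rct, pinv_symm hs, h2] at this

end pinvlem

/-- symmetric idempotent matrices are PSD -/
lemma psd_of_idem {k : Type*} [Fintype k] {W : Matrix k k ℝ}
    (hs : Wᵀ = W) (hi : W * W = W) : W.PosSemidef := by
  have : (Wᴴ * W).PosSemidef := posSemidef_conjTranspose_mul_self W
  rwa [rct, hs, hi] at this

lemma psd_one_sub_idem {k : Type*} [Fintype k] [DecidableEq k] {W : Matrix k k ℝ}
    (hs : Wᵀ = W) (hi : W * W = W) : ((1 : Matrix k k ℝ) - W).PosSemidef := by
  refine psd_of_idem ?_ ?_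
  · rw [Matrix.transpose_sub, Matrix.transpose_one, hs]
  · simp only [Matrix.mul_sub, Matrix.sub_mul, Matrix.mul_one, Matrix.one_mul, hi]
    abel

lemma eq_zero_of_neg_psd {a b : Type*} [Fintype a] [Fintype b] [DecidableEq a] [DecidableEq b]
    {C : Matrix a b ℝ} (h : (-(C * Cᵀ)).PosSemidef) : C = 0 := by
  have hz : ∀ x : a → ℝ, Cᵀ *ᵥ x = 0 := by
    intro x
    have h1 : 0 ≤ x ⬝ᵥ ((-(C * Cᵀ)) *ᵥ x) := by simpa using h.dotProduct_mulVec_nonneg x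
    have h2 : x ⬝ᵥ ((C * Cᵀ) *ᵥ x) = (Cᵀ *ᵥ x) ⬝ᵥ (Cᵀ *ᵥ x) := by
      rw [← Matrix.mulVec_mulVec, Matrix.dotProduct_mulVec, ← Matrix.mulVec_transpose]
    have h3 : (Cᵀ *ᵥ x) ⬝ᵥ (Cᵀ *ᵥ x) ≤ 0 := by
      have : x ⬝ᵥ ((-(C * Cᵀ)) *ᵥ x) = -(x ⬝ᵥ ((C * Cᵀ) *ᵥ x)) := by
        simp [Matrix.neg_mulVec]
      rw [this] at h1
      linarith [h2 ▸ h1]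
    have h4 : 0 ≤ (Cᵀ *ᵥ x) ⬝ᵥ (Cᵀ *ᵥ x) := by
      have := dotProduct_self_star_nonneg (Cᵀ *ᵥ x)
      simpa using this
    exact dotProduct_self_eq_zero.mp (le_antisymm h3 h4)
  ext i j
  have := congrFun (hz (Pi.single i 1)) j
  simpa [Matrix.mulVec_single] using this


lemma matrix_eq_zero_of_mulVec {a b : Type*} [Fintype a] [Fintype b] [DecidableEq b]
    {M : Matrix a b ℝ} (h : ∀ x : b → ℝ, M *ᵥ x = 0) : M = 0 := by
  ext i j
  have := congrFun (h (Pi.single j 1)) i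
  simpa [Matrix.mulVec_single] using this

lemma douglas {a p t : Type*} [Fintype a] [Fintype p] [Fintype t]
    [DecidableEq a] [DecidableEq p] [DecidableEq t]
    (A : Matrix a p ℝ) (L : Matrix a t ℝ) (h : (A * Aᵀ - L * Lᵀ).PosSemidef) :
    ∃ M : Matrix p t ℝ, ((1 : Matrix p p ℝ) - M * Mᵀ).PosSemidef ∧ A * M = L := by
  have hPmsym : (Aᵀ * A).IsSymm := by
    rw [Matrix.IsSymm, Matrix.transpose_mul, Matrix.transpose_transpose]
  set B' : Matrix p p ℝ := pinv (Aᵀ * A) with hB'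
  obtain ⟨hP1, hP2, hP3, hP4⟩ := pinv_spec hPmsym
  have hBsym : B'ᵀ = B' := pinv_symm hPmsym
  -- commutation (Aᵀ*A) * B' = B' * (Aᵀ*A)
  have c1 : Aᵀ * (A * B') = B' * (Aᵀ * A) := by
    have : (Aᵀ * A * B')ᵀ = Aᵀ * A * B' := hP3
    rw [Matrix.transpose_mul, Matrix.transpose_mul, Matrix.transpose_transpose, hBsym] at this
    simpa [Matrix.mul_assoc] using this.symm
  -- right-assoc forms of Penrose identities
  have r1' : Aᵀ * (A * (B' * (Aᵀ * A))) = Aᵀ * A := by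
    simpa only [Matrix.mul_assoc] using hP1
  have r1 : ∀ {u : Type} [Fintype u], ∀ X : Matrix p u ℝ,
      Aᵀ * (A * (B' * (Aᵀ * (A * X)))) = Aᵀ * (A * X) := by
    intro u _ X
    simpa only [Matrix.mul_assoc] using congrArg (· * X) hP1
  have r2' : B' * (Aᵀ * (A * B')) = B' := by
    simpa only [Matrix.mul_assoc] using hP2
  have r2 : ∀ {u : Type} [Fintype u], ∀ X : Matrix p u ℝ,
      B' * (Aᵀ * (A * (B' * X))) = B' * X := by
    intro u _ X
    simpa only [Matrix.mul_assoc] using congrArg (· * X) hP2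
  -- star identity : Aᵀ * A * B' * Aᵀ = Aᵀ
  have hstar : Aᵀ * (A * (B' * Aᵀ)) = Aᵀ := by
    set Y : Matrix p a ℝ := Aᵀ - Aᵀ * (A * (B' * Aᵀ)) with hY
    have hYz : Y * Yᵀ = 0 := by
      rw [hY]
      simp only [Matrix.transpose_sub, Matrix.transpose_mul, Matrix.transpose_transpose,
        hBsym, Matrix.sub_mul, Matrix.mul_sub, Matrix.mul_assoc, r1, r1', c1]
      abel
    have : Y * Yᴴ = 0 := by rwa [rct]
    have hY0 : Y = 0 := Matrix.self_mul_conjTranspose_eq_zero.mp this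
    exact (sub_eq_zero.mp (hY ▸ hY0)).symm
  have hstarX : ∀ {u : Type} [Fintype u], ∀ X : Matrix a u ℝ,
      Aᵀ * (A * (B' * (Aᵀ * X))) = Aᵀ * X := by
    intro u _ X
    simpa only [Matrix.mul_assoc] using congrArg (· * X) hstar
  -- kernel inclusion
  have hcol : ∀ x : a → ℝ, Aᵀ *ᵥ x = 0 → Lᵀ *ᵥ x = 0 := by
    intro x hx
    have h1 : 0 ≤ x ⬝ᵥ ((A * Aᵀ - L * Lᵀ) *ᵥ x) := by simpa using h.dotProduct_mulVec_nonneg x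
    have e1 : x ⬝ᵥ ((A * Aᵀ) *ᵥ x) = (Aᵀ *ᵥ x) ⬝ᵥ (Aᵀ *ᵥ x) := by
      rw [← Matrix.mulVec_mulVec, Matrix.dotProduct_mulVec, ← Matrix.mulVec_transpose]
    have e2 : x ⬝ᵥ ((L * Lᵀ) *ᵥ x) = (Lᵀ *ᵥ x) ⬝ᵥ (Lᵀ *ᵥ x) := by
      rw [← Matrix.mulVec_mulVec, Matrix.dotProduct_mulVec, ← Matrix.mulVec_transpose]
    rw [Matrix.sub_mulVec, dotProduct_sub, e1, e2, hx] at h1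
    simp only [dotProduct_zero, zero_sub] at h1
    have h4 : 0 ≤ (Lᵀ *ᵥ x) ⬝ᵥ (Lᵀ *ᵥ x) := by
      simpa using dotProduct_self_star_nonneg (Lᵀ *ᵥ x)
    exact dotProduct_self_eq_zero.mp (le_antisymm (by linarith) h4)
  -- projection identity : A * B' * Aᵀ * L = L
  have hAtP : Aᵀ * ((1 : Matrix a a ℝ) - A * (B' * Aᵀ)) = 0 := by
    rw [Matrix.mul_sub, Matrix.mul_one]
    rw [show Aᵀ * (A * (B' * Aᵀ)) = Aᵀ from hstar, sub_self]
  have hLtP : Lᵀ * ((1 : Matrix a a ℝ) - A * (B' * Aᵀ)) = 0 := by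
    apply matrix_eq_zero_of_mulVec
    intro x
    rw [← Matrix.mulVec_mulVec]
    apply hcol
    rw [Matrix.mulVec_mulVec, hAtP, Matrix.zero_mulVec]
  have hproj : A * (B' * (Aᵀ * L)) = L := by
    have h5 : Lᵀ - Lᵀ * (A * (B' * Aᵀ)) = 0 := by
      rw [← hLtP, Matrix.mul_sub, Matrix.mul_one]
    have h6 : Lᵀ * (A * (B' * Aᵀ)) = Lᵀ := by
      have := sub_eq_zero.mp h5
      exact this.symm
    have := congrArg Matrix.transpose h6
    simpa only [Matrix.transpose_mul, Matrix.transpose_transpose, hBsym,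
      Matrix.mul_assoc] using this
  refine ⟨B' * (Aᵀ * L), ?_, by simpa only [Matrix.mul_assoc] using hproj⟩
  -- contraction
  set M : Matrix p t ℝ := B' * (Aᵀ * L) with hM
  have hJsym : (B' * (Aᵀ * A))ᵀ = B' * (Aᵀ * A) := by
    simpa only [Matrix.mul_assoc] using hP4
  have hJidem : (B' * (Aᵀ * A)) * (B' * (Aᵀ * A)) = B' * (Aᵀ * A) := by
    simpa only [Matrix.mul_assoc] using congrArg (· * (Aᵀ * A)) hP2
  have hconj : ((B' * Aᵀ) * (A * Aᵀ - L * Lᵀ) * (B' * Aᵀ)ᵀ).PosSemidef := by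
    have := h.mul_mul_conjTranspose_same (B' * Aᵀ)
    rwa [rct] at this
  have heq : (B' * Aᵀ) * (A * Aᵀ - L * Lᵀ) * (B' * Aᵀ)ᵀ = B' * (Aᵀ * A) - M * Mᵀ := by
    simp only [Matrix.transpose_mul, Matrix.transpose_transpose, hBsym, hM,
      Matrix.mul_sub, Matrix.sub_mul, Matrix.mul_assoc, c1, r1, r1', r2, r2']
  rw [heq] at hconj
  have hsum := (psd_one_sub_idem hJsym hJidem).add hconj
  rwa [sub_add_sub_cancel] at hsum


section msqrtlem
variable {k : Type*} [Fintype k] [DecidableEq k] {A : Matrix k k ℝ}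

lemma msqrt_posSemidef (h : A.PosSemidef) : (msqrt A).PosSemidef := by
  rw [msqrt, dif_pos h]
  have hd : (diagonal (fun i => Real.sqrt (h.1.eigenvalues i))).PosSemidef :=
    posSemidef_diagonal_iff.mpr (fun i => Real.sqrt_nonneg _)
  have := hd.mul_mul_conjTranspose_same (h.1.eigenvectorUnitary : Matrix k k ℝ)
  exact this

lemma msqrt_mul_self (h : A.PosSemidef) : msqrt A * msqrt A = A := by
  rw [msqrt, dif_pos h]
  set U : Matrix k k ℝ := (h.1.eigenvectorUnitary : Matrix k k ℝ)
  have hU : star U * U = 1 := (Unitary.mem_iff.mp h.1.eigenvectorUnitary.2).1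
  have hs : A = U * diagonal (h.1.eigenvalues) * star U := by
    have := h.1.spectral_theorem
    simpa using this
  have hsq : ∀ i, Real.sqrt (h.1.eigenvalues i) * Real.sqrt (h.1.eigenvalues i)
      = h.1.eigenvalues i := fun i => Real.mul_self_sqrt (h.eigenvalues_nonneg i)
  conv_rhs => rw [hs]
  simp only [Matrix.mul_assoc]
  rw [← Matrix.mul_assoc (star U) U, hU, Matrix.one_mul, ← Matrix.mul_assoc (diagonal _),
    diagonal_mul_diagonal]
  simp only [hsq]

lemma msqrt_symm (h : A.PosSemidef) : (msqrt A)ᵀ = msqrt A := by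
  have := (msqrt_posSemidef h).1
  rwa [Matrix.IsHermitian, rct] at this

end msqrtlem

/-- The central QMI lemma. -/
lemma qmi {nn p t : Type} [Fintype nn] [Fintype p] [Fintype t]
    [DecidableEq nn] [DecidableEq p] [DecidableEq t]
    (A11 : Matrix p p ℝ) (F : Matrix p t ℝ) (P : Matrix t t ℝ)
    (hPsym : Pᵀ = P) (hnegP : (-P).PosSemidef)
    (hker : ∀ x : t → ℝ, P *ᵥ x = 0 → F *ᵥ x = 0)
    (hS : (A11 - F * pinv P * Fᵀ).PosSemidef)
    (G : Matrix nn p ℝ) (H : Matrix nn t ℝ) :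
    (∃ M₁ : Matrix p t ℝ, ((1 : Matrix p p ℝ) - M₁ * M₁ᵀ).PosSemidef ∧
        (H - G * (-(F * pinv P) +
          msqrt (A11 - F * pinv P * Fᵀ) * M₁ * msqrt (pinv (-P)))) * P = 0) ↔
      ((G * A11 + H * Fᵀ) * Gᵀ + (G * F + H * P) * Hᵀ).PosSemidef := by
  have hPs : P.IsSymm := hPsym
  have hnPs : (-P).IsSymm := by rw [Matrix.IsSymm, Matrix.transpose_neg, hPsym]
  set B : Matrix t t ℝ := pinv P with hBdef
  set B2 : Matrix t t ℝ := pinv (-P) with hB2def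
  obtain ⟨hb1, hb2, hb3, hb4⟩ := pinv_spec hPs
  have hBsym : Bᵀ = B := pinv_symm hPs
  obtain ⟨hc1, hc2, hc3, hc4⟩ := pinv_spec hnPs
  have hB2sym : B2ᵀ = B2 := pinv_symm hnPs
  have hB2psd : B2.PosSemidef := pinv_posSemidef hnegP
  set S : Matrix p p ℝ := A11 - F * B * Fᵀ with hSdef
  set R : Matrix p p ℝ := msqrt S with hRdef
  set Q : Matrix t t ℝ := msqrt B2 with hQdef
  have hRsym : Rᵀ = R := msqrt_symm hS
  have hQsym : Qᵀ = Q := msqrt_symm hB2psd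
  have rs' : R * R = S := msqrt_mul_self hS
  have rs : ∀ {u : Type} [Fintype u], ∀ X : Matrix p u ℝ, R * (R * X) = S * X := by
    intro u _ X; simpa only [Matrix.mul_assoc] using congrArg (· * X) rs'
  have q1' : Q * Q = B2 := msqrt_mul_self hB2psd
  have q1 : ∀ {u : Type} [Fintype u], ∀ X : Matrix t u ℝ, Q * (Q * X) = B2 * X := by
    intro u _ X; simpa only [Matrix.mul_assoc] using congrArg (· * X) q1'
  -- kernel in matrix form
  have f1' : F * (B * P) = F := by
    have h0 : F * ((1 : Matrix t t ℝ) - B * P) = 0 := by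
      apply matrix_eq_zero_of_mulVec
      intro x
      rw [← Matrix.mulVec_mulVec]
      apply hker
      rw [Matrix.mulVec_mulVec, Matrix.mul_sub, Matrix.mul_one, ← Matrix.mul_assoc, hb1,
        sub_self, Matrix.zero_mulVec]
    rw [Matrix.mul_sub, Matrix.mul_one, sub_eq_zero] at h0
    exact h0.symm
  have f1 : ∀ {u : Type} [Fintype u], ∀ X : Matrix t u ℝ, F * (B * (P * X)) = F * X := by
    intro u _ X; simpa only [Matrix.mul_assoc] using congrArg (· * X) f1'
  have f2' : P * (B * Fᵀ) = Fᵀ := by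
    have := congrArg Matrix.transpose f1'
    simpa only [Matrix.transpose_mul, Matrix.transpose_transpose, hBsym, hPsym,
      Matrix.mul_assoc] using this
  have f2 : ∀ {u : Type} [Fintype u], ∀ X : Matrix p u ℝ, P * (B * (Fᵀ * X)) = Fᵀ * X := by
    intro u _ X; simpa only [Matrix.mul_assoc] using congrArg (· * X) f2'
  have f3' : P * (B * P) = P := by simpa only [Matrix.mul_assoc] using hb1
  have f3 : ∀ {u : Type} [Fintype u], ∀ X : Matrix t u ℝ, P * (B * (P * X)) = P * X := by
    intro u _ X; simpa only [Matrix.mul_assoc] using congrArg (· * X) hb1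
  have f4' : P * (B2 * P) = -P := by
    have := hc1
    simp only [Matrix.neg_mul, Matrix.mul_neg, neg_neg] at this
    simpa only [Matrix.mul_assoc] using this
  have f4 : ∀ {u : Type} [Fintype u], ∀ X : Matrix t u ℝ, P * (B2 * (P * X)) = -(P * X) := by
    intro u _ X
    have := congrArg (· * X) f4'
    simpa only [Matrix.mul_assoc, Matrix.neg_mul] using this
  set K : Matrix nn t ℝ := H + G * (F * B) with hKdef
  -- the fundamental identity
  have idA : (G * A11 + H * Fᵀ) * Gᵀ + (G * F + H * P) * Hᵀ
      = G * (S * Gᵀ) + K * (P * Kᵀ) := by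
    simp only [hKdef, hSdef, Matrix.transpose_add, Matrix.transpose_mul,
      Matrix.transpose_transpose, hBsym, hPsym, Matrix.add_mul, Matrix.mul_add,
      Matrix.sub_mul, Matrix.mul_sub, Matrix.mul_assoc, f1, f1', f2, f2', f3, f3']
    abel
  -- condition reformulation
  have hcond : ∀ M₁ : Matrix p t ℝ,
      (H - G * (-(F * B) + R * M₁ * Q)) * P = 0 ↔ K * P = G * (R * (M₁ * (Q * P))) := by
    intro M₁
    have e : (H - G * (-(F * B) + R * M₁ * Q)) * P
        = K * P - G * (R * (M₁ * (Q * P))) := by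
      simp only [hKdef, Matrix.mul_add, Matrix.add_mul, Matrix.sub_mul, Matrix.mul_sub,
        Matrix.mul_neg, Matrix.neg_mul, Matrix.mul_assoc, f1, f1']
      abel
    rw [e, sub_eq_zero]
  constructor
  · rintro ⟨M₁, hM₁, hz⟩
    have hKP : K * P = G * (R * (M₁ * (Q * P))) := (hcond M₁).mp hz
    have e2 : K * (P * Kᵀ) = (K * P) * (B * ((K * P)ᵀ)) := by
      simp only [Matrix.transpose_mul, hPsym, Matrix.mul_assoc, f3]
    rw [hKP] at e2
    have e3 : K * (P * Kᵀ)
        = G * (R * (M₁ * (Q * (P * (Q * (M₁ᵀ * (Rᵀ * Gᵀ))))))) := by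
      rw [e2]
      simp only [Matrix.transpose_mul, Matrix.transpose_transpose, hPsym, hQsym,
        Matrix.mul_assoc, f3]
    set W0 : Matrix t t ℝ := -(Q * (P * Q)) with hW0
    have hW0sym : W0ᵀ = W0 := by
      rw [hW0]
      simp only [Matrix.transpose_neg, Matrix.transpose_mul, hPsym, hQsym, Matrix.mul_assoc]
    have hW0idem : W0 * W0 = W0 := by
      rw [hW0]
      simp only [Matrix.neg_mul, Matrix.mul_neg, neg_neg, Matrix.mul_assoc, q1, f4,
        Matrix.mul_neg, neg_neg]
    set X : Matrix p p ℝ := ((1 : Matrix p p ℝ) - M₁ * M₁ᵀ) + M₁ * ((1 - W0) * M₁ᵀ) with hX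
    have hXpsd : X.PosSemidef := by
      refine hM₁.add ?_
      have h1 : ((1 : Matrix t t ℝ) - W0).PosSemidef := psd_one_sub_idem hW0sym hW0idem
      have := h1.mul_mul_conjTranspose_same M₁
      rw [rct] at this
      simpa only [Matrix.mul_assoc] using this
    have efin : (G * A11 + H * Fᵀ) * Gᵀ + (G * F + H * P) * Hᵀ
        = (G * R) * X * ((G * R))ᵀ := by
      rw [idA, e3, hX, hW0]
      simp only [Matrix.transpose_mul, hRsym, Matrix.mul_add, Matrix.add_mul,
        Matrix.mul_sub, Matrix.sub_mul, Matrix.mul_one, Matrix.one_mul,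
        Matrix.mul_neg, Matrix.neg_mul, Matrix.mul_assoc, rs]
      abel
    rw [efin]
    have := hXpsd.mul_mul_conjTranspose_same (G * R)
    rwa [rct] at this
  · intro hpsd
    set A' : Matrix nn p ℝ := G * R with hA'
    set L : Matrix nn t ℝ := K * (P * Q) with hL
    have e3 : A' * A'ᵀ - L * Lᵀ
        = (G * A11 + H * Fᵀ) * Gᵀ + (G * F + H * P) * Hᵀ := by
      rw [idA, hA', hL]
      simp only [Matrix.transpose_mul, hRsym, hPsym, hQsym, Matrix.mul_assoc, rs, q1, f4,
        Matrix.mul_neg, sub_neg_eq_add]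
    rw [← e3] at hpsd
    obtain ⟨M, hMc, hAM⟩ := douglas A' L hpsd
    refine ⟨-M, ?_, ?_⟩
    · simpa only [Matrix.transpose_neg, Matrix.neg_mul, Matrix.mul_neg, neg_neg] using hMc
    · rw [hcond (-M)]
      have : G * (R * ((-M) * (Q * P))) = -((A' * M) * (Q * P)) := by
        simp only [hA', Matrix.mul_assoc, Matrix.neg_mul, Matrix.mul_neg]
      rw [this, hAM, hL]
      simp only [Matrix.mul_assoc, q1, f4, f4', Matrix.mul_neg, neg_neg]


lemma toBlocks22_symm {p t : Type*} {Φ : Matrix (p ⊕ t) (p ⊕ t) ℝ} (h : Φ.IsSymm) :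
    (Φ.toBlocks₂₂)ᵀ = Φ.toBlocks₂₂ := by
  ext i j; exact h.apply _ _

lemma toBlocks21_symm {p t : Type*} {Φ : Matrix (p ⊕ t) (p ⊕ t) ℝ} (h : Φ.IsSymm) :
    Φ.toBlocks₂₁ = (Φ.toBlocks₁₂)ᵀ := by
  ext i j; exact h.apply _ _

theorem stmt1 {n m T nh : ℕ} (hn : 0 < n) (hm : 0 < m) (hT : 0 < T) (hnh : 0 < nh)
    (Astar : Matrix (Fin n) (Fin n) ℝ) (Bstar : Matrix (Fin n) (Fin m) ℝ)
    (Xps Xs Xp X ΔXp ΔX : Matrix (Fin n) (Fin T) ℝ) (Us U ΔU : Matrix (Fin m) (Fin T) ℝ)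
    (E : Matrix (SRows n m) (Fin nh) ℝ)
    (Φ : Matrix (Fin nh ⊕ Fin T) (Fin nh ⊕ Fin T) ℝ)
    (hΦ : Φ ∈ PiSet (Fin nh) (Fin T))
    (hclean : Xps = Astar * Xs + Bstar * Us)
    (hXp : Xp = Xps + ΔXp) (hX : X = Xs + ΔX) (hU : U = Us + ΔU)
    (hΔ : bigX ΔXp ΔX ΔU ∈ Dset E Φ) :
    SigmaR Xp X U E Φ =
      {AB : Matrix (Fin n) (Fin n) ℝ × Matrix (Fin n) (Fin m) ℝ |
        (fromCols AB.1 AB.2)ᵀ ∈ ZSet (Nmat Xp X U E Φ)} := by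
  classical
  obtain ⟨hsym, hneg, hker, hS⟩ := hΦ
  have hPsym : (Φ.toBlocks₂₂)ᵀ = Φ.toBlocks₂₂ := toBlocks22_symm hsym
  have h21 : Φ.toBlocks₂₁ = (Φ.toBlocks₁₂)ᵀ := toBlocks21_symm hsym
  have hnegP : (-(Φ.toBlocks₂₂)).PosSemidef := hneg
  ext AB
  obtain ⟨Am, Bm⟩ := AB
  set G : Matrix (Fin n) (Fin nh) ℝ := sysRow Am Bm * E with hG
  set H : Matrix (Fin n) (Fin T) ℝ := sysRow Am Bm * bigX Xp X U with hH
  have h1 : fromRows (1 : Matrix (Fin n) (Fin n) ℝ) ((fromCols Am Bm)ᵀ)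
      = (sysRow Am Bm)ᵀ := by
    simp [sysRow, transpose_fromCols, transpose_one]
  have hV : sysRow Am Bm * fromCols E (bigX Xp X U) = fromCols G H := by
    rw [mul_fromCols, hG, hH]
  have e0 : sysRow Am Bm * Nmat Xp X U E Φ * (sysRow Am Bm)ᵀ
      = (sysRow Am Bm * fromCols E (bigX Xp X U)) * Φ *
        (sysRow Am Bm * fromCols E (bigX Xp X U))ᵀ := by
    rw [Nmat]
    simp only [Matrix.transpose_mul, Matrix.mul_assoc]
  have e1 : fromCols G H * Φ * (fromCols G H)ᵀ
      = (G * Φ.toBlocks₁₁ + H * (Φ.toBlocks₁₂)ᵀ) * Gᵀ +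
        (G * Φ.toBlocks₁₂ + H * Φ.toBlocks₂₂) * Hᵀ := by
    conv_lhs => rw [← fromBlocks_toBlocks Φ]
    rw [fromCols_mul_fromBlocks, transpose_fromCols, fromCols_mul_fromRows, h21]
  have hmat : (fromRows (1 : Matrix (Fin n) (Fin n) ℝ) ((fromCols Am Bm)ᵀ))ᵀ *
      Nmat Xp X U E Φ * fromRows (1 : Matrix (Fin n) (Fin n) ℝ) ((fromCols Am Bm)ᵀ)
      = (G * Φ.toBlocks₁₁ + H * (Φ.toBlocks₁₂)ᵀ) * Gᵀ +
        (G * Φ.toBlocks₁₂ + H * Φ.toBlocks₂₂) * Hᵀ := by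
    rw [h1, transpose_transpose, e0, hV, e1]
  have hcondeq : ∀ M1 : Matrix (Fin nh) (Fin T) ℝ,
      sysRow Am Bm * (bigX Xp X U - E * ΔhatR Φ M1) * Φ.toBlocks₂₂
        = (H - G * ΔhatR Φ M1) * Φ.toBlocks₂₂ := by
    intro M1
    rw [Matrix.mul_sub, ← Matrix.mul_assoc, ← hG, ← hH]
  simp only [SigmaR, ZSet, Set.mem_setOf_eq, hmat, hcondeq]
  simp only [ΔhatR]
  exact qmi Φ.toBlocks₁₁ Φ.toBlocks₁₂ Φ.toBlocks₂₂ hPsym hnegP hker hS G H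

end
end

section
/- Let M, N ∈ S^{q+r}. Assume that Z_{q,r}(N) ⊆ Z_{q,r}(M), that Z_{q,r}(N) is nonempty, that M has at least one negative eigenvalue, and that M ∈ Π_{q,r}. Then N ∈ Π_{q,r}. -/
open Matrix

noncomputable section

section MP

variable {k : Type*} [Fintype k] [DecidableEq k]

lemma isMP_unique {A B C : Matrix k k ℝ}
    (hB1 : A * B * A = A) (hB2 : B * A * B = B) (hB3 : (A * B)ᵀ = A * B) (hB4 : (B * A)ᵀ = B * A)
    (hC1 : A * C * A = A) (hC2 : C * A * C = C) (hC3 : (A * C)ᵀ = A * C) (hC4 : (C * A)ᵀ = C * A) :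
    B = C := by
  have hAB : A * B = A * C := by
    calc A * B = (A * B)ᵀ := hB3.symm
      _ = ((A * C * A) * B)ᵀ := by rw [hC1]
      _ = ((A * C) * (A * B))ᵀ := by simp only [Matrix.mul_assoc]
      _ = (A * B)ᵀ * (A * C)ᵀ := by rw [Matrix.transpose_mul]
      _ = (A * B) * (A * C) := by rw [hB3, hC3]
      _ = (A * B * A) * C := by simp only [Matrix.mul_assoc]
      _ = A * C := by rw [hB1]
  have hBA : B * A = C * A := by
    calc B * A = (B * A)ᵀ := hB4.symm
      _ = (B * (A * C * A))ᵀ := by rw [hC1]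
      _ = ((B * A) * (C * A))ᵀ := by simp only [Matrix.mul_assoc]
      _ = (C * A)ᵀ * (B * A)ᵀ := by rw [Matrix.transpose_mul]
      _ = (C * A) * (B * A) := by rw [hB4, hC4]
      _ = C * (A * B * A) := by simp only [Matrix.mul_assoc]
      _ = C * A := by rw [hB1]
  calc B = B * A * B := hB2.symm
    _ = (C * A) * B := by rw [hBA]
    _ = C * (A * B) := by simp only [Matrix.mul_assoc]
    _ = C * (A * C) := by rw [hAB]
    _ = C * A * C := by simp only [Matrix.mul_assoc]
    _ = C := hC2

lemma exists_isMP {A : Matrix k k ℝ} (hA : A.IsSymm) :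
    ∃ B : Matrix k k ℝ,
      A * B * A = A ∧ B * A * B = B ∧ (A * B)ᵀ = A * B ∧ (B * A)ᵀ = B * A := by
  have hH : A.IsHermitian := by
    rw [Matrix.IsHermitian, Matrix.conjTranspose_eq_transpose_of_trivial]; exact hA
  set U : Matrix k k ℝ := (Matrix.IsHermitian.eigenvectorUnitary hH : Matrix k k ℝ) with hUdef
  have h1 : star U * U = 1 :=
    Matrix.mem_unitaryGroup_iff'.mp (Matrix.IsHermitian.eigenvectorUnitary hH).2
  have hsU : star U = Uᵀ := by
    rw [Matrix.star_eq_conjTranspose, Matrix.conjTranspose_eq_transpose_of_trivial]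
  set e : k → ℝ := fun i => hH.eigenvalues i with hedef
  have hspec : A = U * Matrix.diagonal e * star U := by
    have := hH.spectral_theorem
    simpa using this
  have key : ∀ d₁ d₂ : k → ℝ,
      (U * Matrix.diagonal d₁ * star U) * (U * Matrix.diagonal d₂ * star U)
        = U * Matrix.diagonal (fun i => d₁ i * d₂ i) * star U := by
    intro d₁ d₂
    calc (U * Matrix.diagonal d₁ * star U) * (U * Matrix.diagonal d₂ * star U)
        = U * (Matrix.diagonal d₁ * ((star U * U) * (Matrix.diagonal d₂ * star U))) := by
          simp only [Matrix.mul_assoc]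
      _ = U * (Matrix.diagonal d₁ * Matrix.diagonal d₂ * star U) := by
          rw [h1, Matrix.one_mul, Matrix.mul_assoc]
      _ = U * Matrix.diagonal (fun i => d₁ i * d₂ i) * star U := by
          rw [Matrix.diagonal_mul_diagonal, Matrix.mul_assoc]
  have hsym : ∀ d : k → ℝ,
      (U * Matrix.diagonal d * star U)ᵀ = U * Matrix.diagonal d * star U := by
    intro d
    rw [hsU, Matrix.transpose_mul, Matrix.transpose_mul, Matrix.transpose_transpose,
      Matrix.diagonal_transpose, Matrix.mul_assoc]
  refine ⟨U * Matrix.diagonal (fun i => (e i)⁻¹) * star U, ?_, ?_, ?_, ?_⟩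
  · rw [hspec, key, key]
    congr 2
    funext i
    by_cases h : e i = 0 <;> field_simp [h]
  · rw [hspec, key, key]
    congr 2
    funext i
    by_cases h : e i = 0 <;> field_simp [h]
  · rw [hspec, key, hsym]
  · rw [hspec, key, hsym]

lemma pinv_isMP {A : Matrix k k ℝ} (hA : A.IsSymm) :
    A * pinv A * A = A ∧ pinv A * A * pinv A = pinv A ∧
      (A * pinv A)ᵀ = A * pinv A ∧ (pinv A * A)ᵀ = pinv A * A := by
  have h := exists_isMP hA
  rw [pinv, dif_pos h]
  exact h.choose_spec

lemma pinv_transpose {A : Matrix k k ℝ} (hA : A.IsSymm) : (pinv A)ᵀ = pinv A := by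
  obtain ⟨h1, h2, h3, h4⟩ := pinv_isMP hA
  have hAt : Aᵀ = A := hA
  have hABt : A * (pinv A)ᵀ = pinv A * A := by
    calc A * (pinv A)ᵀ = Aᵀ * (pinv A)ᵀ := by rw [hAt]
      _ = (pinv A * A)ᵀ := (Matrix.transpose_mul (pinv A) A).symm
      _ = pinv A * A := h4
  have hBtA : (pinv A)ᵀ * A = A * pinv A := by
    calc (pinv A)ᵀ * A = (pinv A)ᵀ * Aᵀ := by rw [hAt]
      _ = (A * pinv A)ᵀ := (Matrix.transpose_mul A (pinv A)).symm
      _ = A * pinv A := h3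
  refine isMP_unique ?_ ?_ ?_ ?_ h1 h2 h3 h4
  · have ht : (A * (pinv A)ᵀ * A)ᵀ = A := by
      simp only [Matrix.transpose_mul, Matrix.transpose_transpose]
      rw [hAt, ← Matrix.mul_assoc, h1]
    calc A * (pinv A)ᵀ * A = ((A * (pinv A)ᵀ * A)ᵀ)ᵀ := (Matrix.transpose_transpose _).symm
      _ = Aᵀ := by rw [ht]
      _ = A := hAt
  · have ht : ((pinv A)ᵀ * A * (pinv A)ᵀ)ᵀ = pinv A := by
      simp only [Matrix.transpose_mul, Matrix.transpose_transpose]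
      rw [hAt, ← Matrix.mul_assoc, h2]
    calc (pinv A)ᵀ * A * (pinv A)ᵀ = (((pinv A)ᵀ * A * (pinv A)ᵀ)ᵀ)ᵀ :=
        (Matrix.transpose_transpose _).symm
      _ = (pinv A)ᵀ := by rw [ht]
  · rw [hABt, h4]
  · rw [hBtA, h3]

lemma pinv_comm {A : Matrix k k ℝ} (hA : A.IsSymm) : pinv A * A = A * pinv A := by
  obtain ⟨h1, h2, h3, h4⟩ := pinv_isMP hA
  have hAt : Aᵀ = A := hA
  calc pinv A * A = (pinv A * A)ᵀ := h4.symm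
    _ = Aᵀ * (pinv A)ᵀ := Matrix.transpose_mul _ _
    _ = A * pinv A := by rw [hAt, pinv_transpose hA]

lemma mul_pinv_mul_cancel {m : Type*} [Fintype m] {A : Matrix k k ℝ} (hA : A.IsSymm)
    {C : Matrix m k ℝ} (hker : ∀ x : k → ℝ, A *ᵥ x = 0 → C *ᵥ x = 0) :
    C * pinv A * A = C := by
  obtain ⟨h1, h2, h3, h4⟩ := pinv_isMP hA
  have hX : A * (1 - pinv A * A) = 0 := by
    rw [Matrix.mul_sub, Matrix.mul_one, ← Matrix.mul_assoc, h1, sub_self]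
  have hC : C * (1 - pinv A * A) = 0 := by
    ext i j
    have hcol : A *ᵥ (fun t => (1 - pinv A * A) t j) = 0 := by
      funext s
      have := congrFun (congrFun hX s) j
      simpa [Matrix.mul_apply, Matrix.mulVec, dotProduct] using this
    have := congrFun (hker _ hcol) i
    simpa [Matrix.mul_apply, Matrix.mulVec, dotProduct] using this
  have hC' : C - C * pinv A * A = 0 := by
    have he : C * (1 - pinv A * A) = C - C * pinv A * A := by
      rw [Matrix.mul_sub, Matrix.mul_one, Matrix.mul_assoc]
    rw [← he]; exact hC
  exact (sub_eq_zero.mp hC').symm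

lemma pinv_mul_cancel_right {m : Type*} [Fintype m] {A : Matrix k k ℝ} (hA : A.IsSymm)
    {C : Matrix m k ℝ} (hker : ∀ x : k → ℝ, A *ᵥ x = 0 → C *ᵥ x = 0) :
    A * (pinv A * Cᵀ) = Cᵀ := by
  have h := congrArg Matrix.transpose (mul_pinv_mul_cancel hA hker)
  have hAt : Aᵀ = A := hA
  simp only [Matrix.transpose_mul] at h
  rw [hAt, pinv_transpose hA] at h
  exact h

end MP

section Blocks

variable {q r : Type*} [Fintype q] [Fintype r] [DecidableEq q] [DecidableEq r]

lemma F_expand (N : Matrix (q ⊕ r) (q ⊕ r) ℝ) (Z : Matrix r q ℝ) :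
    (fromRows (1 : Matrix q q ℝ) Z)ᵀ * N * fromRows (1 : Matrix q q ℝ) Z
      = N.toBlocks₁₁ + N.toBlocks₁₂ * Z + Zᵀ * (N.toBlocks₂₁) + Zᵀ * (N.toBlocks₂₂ * Z) := by
  conv_lhs => rw [← Matrix.fromBlocks_toBlocks N]
  rw [Matrix.mul_assoc, Matrix.transpose_fromRows, Matrix.fromBlocks_mul_fromRows,
    Matrix.fromCols_mul_fromRows]
  simp [Matrix.mul_add, Matrix.mul_assoc, add_assoc]

lemma toBlocks21_of_isSymm {N : Matrix (q ⊕ r) (q ⊕ r) ℝ} (hN : N.IsSymm) :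
    N.toBlocks₂₁ = (N.toBlocks₁₂)ᵀ := by
  ext i j
  have := congrFun (congrFun hN (Sum.inr i)) (Sum.inl j)
  simpa [Matrix.toBlocks₂₁, Matrix.toBlocks₁₂] using this.symm

lemma toBlocks22_of_isSymm {N : Matrix (q ⊕ r) (q ⊕ r) ℝ} (hN : N.IsSymm) :
    (N.toBlocks₂₂).IsSymm := by
  ext i j
  have := congrFun (congrFun hN (Sum.inr i)) (Sum.inr j)
  simpa [Matrix.toBlocks₂₂] using this

lemma key_id {N : Matrix (q ⊕ r) (q ⊕ r) ℝ} (hN : N.IsSymm)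
    (hker : ∀ x : r → ℝ, N.toBlocks₂₂ *ᵥ x = 0 → N.toBlocks₁₂ *ᵥ x = 0) (Z : Matrix r q ℝ) :
    (fromRows (1 : Matrix q q ℝ) Z)ᵀ * N * fromRows (1 : Matrix q q ℝ) Z
      = (N.toBlocks₁₁ - N.toBlocks₁₂ * pinv N.toBlocks₂₂ * (N.toBlocks₁₂)ᵀ)
        + (Z + pinv N.toBlocks₂₂ * (N.toBlocks₁₂)ᵀ)ᵀ * N.toBlocks₂₂
          * (Z + pinv N.toBlocks₂₂ * (N.toBlocks₁₂)ᵀ) := by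
  set A := N.toBlocks₂₂ with hAdef
  set B := N.toBlocks₁₂ with hBdef
  have hA : A.IsSymm := toBlocks22_of_isSymm hN
  have h21 : N.toBlocks₂₁ = Bᵀ := toBlocks21_of_isSymm hN
  have hAPB : A * (pinv A * Bᵀ) = Bᵀ := pinv_mul_cancel_right hA hker
  have hBPA : B * pinv A * A = B := mul_pinv_mul_cancel hA hker
  have hPt : (pinv A)ᵀ = pinv A := pinv_transpose hA
  have e1 : B * (pinv A * (A * Z)) = B * Z := by
    rw [← Matrix.mul_assoc, ← Matrix.mul_assoc, hBPA]
  rw [F_expand, h21]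
  simp only [Matrix.transpose_add, Matrix.transpose_mul, hPt, Matrix.transpose_transpose]
  simp only [Matrix.add_mul, Matrix.mul_add, Matrix.mul_assoc, hAPB, e1]
  abel

end Blocks

section Scalar

variable {q r : Type*} [Fintype q] [Fintype r]

lemma vecMulVec_mulVec' (x : r → ℝ) (a v : q → ℝ) :
    Matrix.vecMulVec x a *ᵥ v = (a ⬝ᵥ v) • x := by
  funext i
  simp only [Matrix.mulVec, Matrix.vecMulVec_apply, dotProduct, Pi.smul_apply,
    smul_eq_mul, Finset.sum_mul]
  exact Finset.sum_congr rfl fun j _ => by ring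

lemma dot_transpose (Z : Matrix r q ℝ) (v : q → ℝ) (u : r → ℝ) :
    v ⬝ᵥ (Zᵀ *ᵥ u) = (Z *ᵥ v) ⬝ᵥ u := by
  rw [Matrix.dotProduct_mulVec, Matrix.vecMul_transpose]

lemma dot_expand (E : Matrix r r ℝ) (w x : r → ℝ) (s : ℝ) :
    (w + s • x) ⬝ᵥ (E *ᵥ (w + s • x))
      = w ⬝ᵥ (E *ᵥ w) + s * (w ⬝ᵥ (E *ᵥ x) + x ⬝ᵥ (E *ᵥ w)) + s ^ 2 * (x ⬝ᵥ (E *ᵥ x)) := by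
  simp only [Matrix.mulVec_add, Matrix.mulVec_smul, dotProduct_add, add_dotProduct,
    smul_dotProduct, dotProduct_smul, smul_eq_mul]
  ring

lemma quad_bounded {a b c K : ℝ} (ha : 0 ≤ a)
    (h : ∀ s : ℝ, 0 ≤ s → a * s ^ 2 + b * s + c ≤ K) : a = 0 := by
  by_contra hne
  have hapos : 0 < a := lt_of_le_of_ne ha (Ne.symm hne)
  set T : ℝ := max 1 ((|b| + |c| + |K| + 1) / a) with hT
  have hT1 : 1 ≤ T := le_max_left _ _
  have hT0 : 0 ≤ T := by linarith
  have haT : |b| + |c| + |K| + 1 ≤ a * T := by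
    have h2 : (|b| + |c| + |K| + 1) / a ≤ T := le_max_right _ _
    calc |b| + |c| + |K| + 1 = a * ((|b| + |c| + |K| + 1) / a) := by field_simp
      _ ≤ a * T := by nlinarith
  have hb := h T hT0
  nlinarith [le_abs_self K, neg_abs_le b, neg_abs_le c,
    mul_le_mul_of_nonneg_right haT hT0, abs_nonneg b, abs_nonneg c, abs_nonneg K]

end Scalar

section ZMem

variable {q r : Type*} [Fintype q] [Fintype r] [DecidableEq q] [DecidableEq r]

lemma dot_transpose' {m n : Type*} [Fintype m] [Fintype n] (Z : Matrix m n ℝ) (v : n → ℝ)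
    (u : m → ℝ) : v ⬝ᵥ (Zᵀ *ᵥ u) = (Z *ᵥ v) ⬝ᵥ u := by
  rw [Matrix.dotProduct_mulVec, Matrix.vecMul_transpose]

lemma quad_eq {N : Matrix (q ⊕ r) (q ⊕ r) ℝ} (hN : N.IsSymm) (Z : Matrix r q ℝ) (v : q → ℝ) :
    v ⬝ᵥ (((fromRows (1 : Matrix q q ℝ) Z)ᵀ * N * fromRows (1 : Matrix q q ℝ) Z) *ᵥ v)
      = v ⬝ᵥ (N.toBlocks₁₁ *ᵥ v) + v ⬝ᵥ (N.toBlocks₁₂ *ᵥ (Z *ᵥ v))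
        + (Z *ᵥ v) ⬝ᵥ ((N.toBlocks₁₂)ᵀ *ᵥ v) + (Z *ᵥ v) ⬝ᵥ (N.toBlocks₂₂ *ᵥ (Z *ᵥ v)) := by
  rw [F_expand, toBlocks21_of_isSymm hN]
  simp only [Matrix.add_mulVec, dotProduct_add, ← Matrix.mulVec_mulVec]
  simp only [dot_transpose']

lemma F_isHermitian {N : Matrix (q ⊕ r) (q ⊕ r) ℝ} (hN : N.IsSymm) (Z : Matrix r q ℝ) :
    ((fromRows (1 : Matrix q q ℝ) Z)ᵀ * N * fromRows (1 : Matrix q q ℝ) Z).IsHermitian := by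
  have hNt : Nᵀ = N := hN
  rw [Matrix.IsHermitian, Matrix.conjTranspose_eq_transpose_of_trivial]
  simp only [Matrix.transpose_mul, Matrix.transpose_transpose, Matrix.mul_assoc, hNt]

lemma mem_ZSet_iff {N : Matrix (q ⊕ r) (q ⊕ r) ℝ} (hN : N.IsSymm) (Z : Matrix r q ℝ) :
    Z ∈ ZSet N ↔ ∀ v : q → ℝ,
      0 ≤ v ⬝ᵥ (N.toBlocks₁₁ *ᵥ v) + v ⬝ᵥ (N.toBlocks₁₂ *ᵥ (Z *ᵥ v))
        + (Z *ᵥ v) ⬝ᵥ ((N.toBlocks₁₂)ᵀ *ᵥ v) + (Z *ᵥ v) ⬝ᵥ (N.toBlocks₂₂ *ᵥ (Z *ᵥ v)) := by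
  constructor
  · intro hZ v
    have hZ' : ((fromRows (1 : Matrix q q ℝ) Z)ᵀ * N
        * fromRows (1 : Matrix q q ℝ) Z).PosSemidef := hZ
    have h0 := hZ'.dotProduct_mulVec_nonneg v
    rw [star_trivial, quad_eq hN] at h0
    exact h0
  · intro h
    refine PosSemidef.of_dotProduct_mulVec_nonneg (F_isHermitian hN Z) fun v => ?_
    rw [star_trivial, quad_eq hN]
    exact h v

lemma qform_ray {N11 : Matrix q q ℝ} {B : Matrix q r ℝ} {A : Matrix r r ℝ} (hAt : Aᵀ = A)
    (v : q → ℝ) (w : r → ℝ) (s : ℝ) (x : r → ℝ) :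
    v ⬝ᵥ (N11 *ᵥ v) + v ⬝ᵥ (B *ᵥ (w + s • x)) + (w + s • x) ⬝ᵥ (Bᵀ *ᵥ v)
        + (w + s • x) ⬝ᵥ (A *ᵥ (w + s • x))
      = (v ⬝ᵥ (N11 *ᵥ v) + v ⬝ᵥ (B *ᵥ w) + w ⬝ᵥ (Bᵀ *ᵥ v) + w ⬝ᵥ (A *ᵥ w))
        + 2 * s * (v ⬝ᵥ (B *ᵥ x) + w ⬝ᵥ (A *ᵥ x)) + s ^ 2 * (x ⬝ᵥ (A *ᵥ x)) := by
  have h1 : x ⬝ᵥ (Bᵀ *ᵥ v) = v ⬝ᵥ (B *ᵥ x) := by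
    rw [dot_transpose' B x v, dotProduct_comm]
  have h2 : x ⬝ᵥ (A *ᵥ w) = w ⬝ᵥ (A *ᵥ x) := by
    calc x ⬝ᵥ (A *ᵥ w) = x ⬝ᵥ (Aᵀ *ᵥ w) := by rw [hAt]
      _ = (A *ᵥ x) ⬝ᵥ w := dot_transpose' A x w
      _ = w ⬝ᵥ (A *ᵥ x) := dotProduct_comm _ _
  simp only [Matrix.mulVec_add, Matrix.mulVec_smul, dotProduct_add,
    add_dotProduct, smul_dotProduct, dotProduct_smul, smul_eq_mul]
  rw [h1, h2]
  ring

lemma ray_mulVec (Z₀ : Matrix r q ℝ) (x : r → ℝ) (a : q → ℝ) (t : ℝ) (v : q → ℝ) :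
    (Z₀ + t • Matrix.vecMulVec x a) *ᵥ v = Z₀ *ᵥ v + (t * (a ⬝ᵥ v)) • x := by
  rw [Matrix.add_mulVec, Matrix.smul_mulVec, vecMulVec_mulVec', smul_smul]

lemma ray_mem {N : Matrix (q ⊕ r) (q ⊕ r) ℝ} (hNs : N.IsSymm) {Z₀ : Matrix r q ℝ}
    (hZ₀ : Z₀ ∈ ZSet N) (x : r → ℝ) (a : q → ℝ) (t : ℝ)
    (hpos : ∀ v : q → ℝ,
      0 ≤ 2 * (t * (a ⬝ᵥ v)) * (v ⬝ᵥ (N.toBlocks₁₂ *ᵥ x) + (Z₀ *ᵥ v) ⬝ᵥ (N.toBlocks₂₂ *ᵥ x))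
        + (t * (a ⬝ᵥ v)) ^ 2 * (x ⬝ᵥ (N.toBlocks₂₂ *ᵥ x))) :
    Z₀ + t • Matrix.vecMulVec x a ∈ ZSet N := by
  rw [mem_ZSet_iff hNs]
  intro v
  have h0 := (mem_ZSet_iff hNs Z₀).mp hZ₀ v
  have hAt : (N.toBlocks₂₂)ᵀ = N.toBlocks₂₂ := toBlocks22_of_isSymm hNs
  rw [ray_mulVec, qform_ray hAt]
  have := hpos v
  linarith

end ZMem

section Bound

variable {q r : Type*} [Fintype q] [Fintype r] [DecidableEq q] [DecidableEq r]

lemma ZSet_bound {M : Matrix (q ⊕ r) (q ⊕ r) ℝ} (hMs : M.IsSymm)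
    (hMker : ∀ x : r → ℝ, M.toBlocks₂₂ *ᵥ x = 0 → M.toBlocks₁₂ *ᵥ x = 0)
    {Z : Matrix r q ℝ} (hZ : Z ∈ ZSet M) (v : q → ℝ) :
    (Z *ᵥ v + (pinv M.toBlocks₂₂ * (M.toBlocks₁₂)ᵀ) *ᵥ v) ⬝ᵥ
        ((-(M.toBlocks₂₂)) *ᵥ (Z *ᵥ v + (pinv M.toBlocks₂₂ * (M.toBlocks₁₂)ᵀ) *ᵥ v))
      ≤ v ⬝ᵥ ((M.toBlocks₁₁ - M.toBlocks₁₂ * pinv M.toBlocks₂₂ * (M.toBlocks₁₂)ᵀ) *ᵥ v) := by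
  have hZ' : ((fromRows (1 : Matrix q q ℝ) Z)ᵀ * M
      * fromRows (1 : Matrix q q ℝ) Z).PosSemidef := hZ
  have h0 := hZ'.dotProduct_mulVec_nonneg v
  rw [star_trivial, key_id hMs hMker Z] at h0
  set S := M.toBlocks₁₁ - M.toBlocks₁₂ * pinv M.toBlocks₂₂ * (M.toBlocks₁₂)ᵀ with hS
  set Wm := Z + pinv M.toBlocks₂₂ * (M.toBlocks₁₂)ᵀ with hW
  have hexp : v ⬝ᵥ ((S + Wmᵀ * M.toBlocks₂₂ * Wm) *ᵥ v)
      = v ⬝ᵥ (S *ᵥ v) + (Wm *ᵥ v) ⬝ᵥ (M.toBlocks₂₂ *ᵥ (Wm *ᵥ v)) := by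
    simp only [Matrix.add_mulVec, dotProduct_add, ← Matrix.mulVec_mulVec]
    rw [dot_transpose']
  rw [hexp] at h0
  have hWv : Wm *ᵥ v = Z *ᵥ v + (pinv M.toBlocks₂₂ * (M.toBlocks₁₂)ᵀ) *ᵥ v :=
    Matrix.add_mulVec _ _ _
  rw [hWv] at h0
  have hnegv : (Z *ᵥ v + (pinv M.toBlocks₂₂ * (M.toBlocks₁₂)ᵀ) *ᵥ v) ⬝ᵥ
      ((-(M.toBlocks₂₂)) *ᵥ (Z *ᵥ v + (pinv M.toBlocks₂₂ * (M.toBlocks₁₂)ᵀ) *ᵥ v))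
      = -((Z *ᵥ v + (pinv M.toBlocks₂₂ * (M.toBlocks₁₂)ᵀ) *ᵥ v) ⬝ᵥ
          ((M.toBlocks₂₂) *ᵥ (Z *ᵥ v + (pinv M.toBlocks₂₂ * (M.toBlocks₁₂)ᵀ) *ᵥ v))) := by
    rw [Matrix.neg_mulVec, dotProduct_neg]
  rw [hnegv]
  linarith

lemma ray_bound_null {M : Matrix (q ⊕ r) (q ⊕ r) ℝ} (hMs : M.IsSymm)
    (hMEpsd : (-(M.toBlocks₂₂)).PosSemidef)
    (hMker : ∀ x : r → ℝ, M.toBlocks₂₂ *ᵥ x = 0 → M.toBlocks₁₂ *ᵥ x = 0)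
    (Z₀ : Matrix r q ℝ) (x : r → ℝ) (a : q → ℝ) (ha : a ⬝ᵥ a ≠ 0)
    (hmem : ∀ t : ℝ, 0 ≤ t → Z₀ + t • Matrix.vecMulVec x a ∈ ZSet M) :
    M.toBlocks₂₂ *ᵥ x = 0 := by
  set F := -(M.toBlocks₂₂) with hF
  set w₀ := Z₀ *ᵥ a + (pinv M.toBlocks₂₂ * (M.toBlocks₁₂)ᵀ) *ᵥ a with hw₀
  set K := a ⬝ᵥ ((M.toBlocks₁₁ - M.toBlocks₁₂ * pinv M.toBlocks₂₂ * (M.toBlocks₁₂)ᵀ) *ᵥ a)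
    with hK
  set γ := a ⬝ᵥ a with hγ
  have hγpos : 0 < γ := by
    rcases lt_or_eq_of_le (Finset.sum_nonneg fun i _ => mul_self_nonneg (a i) :
      (0:ℝ) ≤ a ⬝ᵥ a) with h | h
    · exact h
    · exact absurd h.symm ha
  have hb : ∀ t : ℝ, 0 ≤ t →
      (x ⬝ᵥ (F *ᵥ x) * γ ^ 2) * t ^ 2
        + ((w₀ ⬝ᵥ (F *ᵥ x) + x ⬝ᵥ (F *ᵥ w₀)) * γ) * t + w₀ ⬝ᵥ (F *ᵥ w₀) ≤ K := by
    intro t ht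
    have hZb := ZSet_bound hMs hMker (hmem t ht) a
    have hv : (Z₀ + t • Matrix.vecMulVec x a) *ᵥ a
        + (pinv M.toBlocks₂₂ * (M.toBlocks₁₂)ᵀ) *ᵥ a = w₀ + (t * γ) • x := by
      rw [ray_mulVec, hw₀, hγ, add_right_comm]
    rw [hv, dot_expand] at hZb
    calc (x ⬝ᵥ (F *ᵥ x) * γ ^ 2) * t ^ 2
          + ((w₀ ⬝ᵥ (F *ᵥ x) + x ⬝ᵥ (F *ᵥ w₀)) * γ) * t + w₀ ⬝ᵥ (F *ᵥ w₀)
        = w₀ ⬝ᵥ (F *ᵥ w₀) + (t * γ) * (w₀ ⬝ᵥ (F *ᵥ x) + x ⬝ᵥ (F *ᵥ w₀))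
          + (t * γ) ^ 2 * (x ⬝ᵥ (F *ᵥ x)) := by ring
      _ ≤ K := hZb
  have hxF : 0 ≤ x ⬝ᵥ (F *ᵥ x) := by
    have := hMEpsd.dotProduct_mulVec_nonneg x
    rwa [star_trivial] at this
  have h0 : x ⬝ᵥ (F *ᵥ x) * γ ^ 2 = 0 :=
    quad_bounded (mul_nonneg hxF (sq_nonneg γ)) hb
  have hxF0 : x ⬝ᵥ (F *ᵥ x) = 0 := by
    have hγ2 : γ ^ 2 ≠ 0 := pow_ne_zero _ (ne_of_gt hγpos)
    exact (mul_eq_zero.mp h0).resolve_right hγ2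
  have hF0 : F *ᵥ x = 0 := by
    have := (hMEpsd.dotProduct_mulVec_zero_iff x).mp (by rwa [star_trivial])
    exact this
  have : -(M.toBlocks₂₂ *ᵥ x) = 0 := by rw [← Matrix.neg_mulVec]; exact hF0
  simpa [neg_eq_zero] using this


lemma ray2_bound {M : Matrix (q ⊕ r) (q ⊕ r) ℝ} (hMs : M.IsSymm)
    (hMEpsd : (-(M.toBlocks₂₂)).PosSemidef)
    (hMker : ∀ x : r → ℝ, M.toBlocks₂₂ *ᵥ x = 0 → M.toBlocks₁₂ *ᵥ x = 0)
    (Z₀ : Matrix r q ℝ) (x y : r → ℝ) (b : q → ℝ) (hb : b ⬝ᵥ b ≠ 0)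
    (hEx : M.toBlocks₂₂ *ᵥ x = 0) (u : ℝ → q → ℝ)
    (hmem : ∀ s : ℝ, 0 ≤ s →
      Z₀ + Matrix.vecMulVec x (u s) + Matrix.vecMulVec y (s • b) ∈ ZSet M) :
    y ⬝ᵥ ((-(M.toBlocks₂₂)) *ᵥ y) = 0 := by
  set F := -(M.toBlocks₂₂) with hF
  have hFt : Fᵀ = F := by
    rw [hF, Matrix.transpose_neg, toBlocks22_of_isSymm hMs]
  have hFx : F *ᵥ x = 0 := by
    rw [hF, Matrix.neg_mulVec, hEx, neg_zero]
  have hstrip : ∀ (w' : r → ℝ) (α : ℝ), (w' + α • x) ⬝ᵥ (F *ᵥ (w' + α • x))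
      = w' ⬝ᵥ (F *ᵥ w') := by
    intro w' α
    have hxw : x ⬝ᵥ (F *ᵥ w') = 0 := by
      have h1 : x ⬝ᵥ (F *ᵥ w') = (F *ᵥ x) ⬝ᵥ w' := by
        conv_lhs => rw [← hFt]
        exact dot_transpose' F x w'
      rw [h1, hFx, zero_dotProduct]
    rw [dot_expand, hFx, hxw]
    simp
  set w₀ := Z₀ *ᵥ b + (pinv M.toBlocks₂₂ * (M.toBlocks₁₂)ᵀ) *ᵥ b with hw₀
  set K := b ⬝ᵥ ((M.toBlocks₁₁ - M.toBlocks₁₂ * pinv M.toBlocks₂₂ * (M.toBlocks₁₂)ᵀ) *ᵥ b)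
    with hK
  set γ := b ⬝ᵥ b with hγ
  have hquad : ∀ s : ℝ, 0 ≤ s →
      (y ⬝ᵥ (F *ᵥ y) * γ ^ 2) * s ^ 2
        + ((w₀ ⬝ᵥ (F *ᵥ y) + y ⬝ᵥ (F *ᵥ w₀)) * γ) * s + w₀ ⬝ᵥ (F *ᵥ w₀) ≤ K := by
    intro s hs
    have hZb := ZSet_bound hMs hMker (hmem s hs) b
    have hv : (Z₀ + Matrix.vecMulVec x (u s) + Matrix.vecMulVec y (s • b)) *ᵥ b
        + (pinv M.toBlocks₂₂ * (M.toBlocks₁₂)ᵀ) *ᵥ b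
        = (w₀ + (s * γ) • y) + ((u s) ⬝ᵥ b) • x := by
      rw [Matrix.add_mulVec, Matrix.add_mulVec, vecMulVec_mulVec', vecMulVec_mulVec']
      rw [smul_dotProduct, smul_eq_mul, hw₀, hγ]
      module
    rw [hv, hstrip, dot_expand] at hZb
    calc (y ⬝ᵥ (F *ᵥ y) * γ ^ 2) * s ^ 2
          + ((w₀ ⬝ᵥ (F *ᵥ y) + y ⬝ᵥ (F *ᵥ w₀)) * γ) * s + w₀ ⬝ᵥ (F *ᵥ w₀)
        = w₀ ⬝ᵥ (F *ᵥ w₀) + (s * γ) * (w₀ ⬝ᵥ (F *ᵥ y) + y ⬝ᵥ (F *ᵥ w₀))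
          + (s * γ) ^ 2 * (y ⬝ᵥ (F *ᵥ y)) := by ring
      _ ≤ K := hZb
  have hyF : 0 ≤ y ⬝ᵥ (F *ᵥ y) := by
    have := hMEpsd.dotProduct_mulVec_nonneg y
    rwa [star_trivial] at this
  have h0 : y ⬝ᵥ (F *ᵥ y) * γ ^ 2 = 0 :=
    quad_bounded (mul_nonneg hyF (sq_nonneg γ)) hquad
  exact (mul_eq_zero.mp h0).resolve_right (pow_ne_zero _ hb)

lemma dot_block (P : Matrix (q ⊕ r) (q ⊕ r) ℝ) (z : q ⊕ r → ℝ) :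
    z ⬝ᵥ (P *ᵥ z)
      = (z ∘ Sum.inl) ⬝ᵥ (P.toBlocks₁₁ *ᵥ (z ∘ Sum.inl))
        + (z ∘ Sum.inl) ⬝ᵥ (P.toBlocks₁₂ *ᵥ (z ∘ Sum.inr))
        + (z ∘ Sum.inr) ⬝ᵥ (P.toBlocks₂₁ *ᵥ (z ∘ Sum.inl))
        + (z ∘ Sum.inr) ⬝ᵥ (P.toBlocks₂₂ *ᵥ (z ∘ Sum.inr)) := by
  have hz : z = Sum.elim (z ∘ Sum.inl) (z ∘ Sum.inr) := by
    funext t; cases t <;> rfl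
  conv_lhs => rw [← Matrix.fromBlocks_toBlocks P, hz]
  rw [Matrix.fromBlocks_mulVec, sumElim_dotProduct_sumElim]
  rw [dotProduct_add, dotProduct_add]
  simp only [Sum.elim_comp_inl, Sum.elim_comp_inr]
  ring


lemma ray_mem2 {N : Matrix (q ⊕ r) (q ⊕ r) ℝ} (hNs : N.IsSymm) {Z₀ : Matrix r q ℝ}
    (hZ₀ : Z₀ ∈ ZSet N) (x y : r → ℝ) (u w : q → ℝ)
    (hAx : N.toBlocks₂₂ *ᵥ x = 0)
    (hpos : ∀ v : q → ℝ,
      0 ≤ 2 * (u ⬝ᵥ v) * (v ⬝ᵥ (N.toBlocks₁₂ *ᵥ x))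
        + (2 * (w ⬝ᵥ v) * (v ⬝ᵥ (N.toBlocks₁₂ *ᵥ y) + (Z₀ *ᵥ v) ⬝ᵥ (N.toBlocks₂₂ *ᵥ y))
            + (w ⬝ᵥ v) ^ 2 * (y ⬝ᵥ (N.toBlocks₂₂ *ᵥ y)))) :
    Z₀ + Matrix.vecMulVec x u + Matrix.vecMulVec y w ∈ ZSet N := by
  rw [mem_ZSet_iff hNs]
  intro v
  have h0 := (mem_ZSet_iff hNs Z₀).mp hZ₀ v
  have hAt : (N.toBlocks₂₂)ᵀ = N.toBlocks₂₂ := toBlocks22_of_isSymm hNs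
  have hv : (Z₀ + Matrix.vecMulVec x u + Matrix.vecMulVec y w) *ᵥ v
      = (Z₀ *ᵥ v + (w ⬝ᵥ v) • y) + (u ⬝ᵥ v) • x := by
    rw [Matrix.add_mulVec, Matrix.add_mulVec, vecMulVec_mulVec', vecMulVec_mulVec']
    module
  rw [hv, qform_ray hAt, qform_ray hAt, hAx]
  simp only [dotProduct_zero, add_zero, mul_zero]
  have := hpos v
  linarith

end Bound

theorem stmt3 {q r : ℕ} (hq : 0 < q) (hr : 0 < r)
    {M N : Matrix (Fin q ⊕ Fin r) (Fin q ⊕ Fin r) ℝ}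
    (hM : M.IsHermitian) (hNs : N.IsSymm)
    (hsub : ZSet N ⊆ ZSet M) (hne : (ZSet N).Nonempty)
    (hneg : ∃ i, hM.eigenvalues i < 0)
    (hMPi : M ∈ PiSet (Fin q) (Fin r)) :
    N ∈ PiSet (Fin q) (Fin r) := by
  obtain ⟨hMs, hMEpsd, hMker, hMS⟩ := hMPi
  obtain ⟨Z₀, hZ₀⟩ := hne
  have hAt : (N.toBlocks₂₂)ᵀ = N.toBlocks₂₂ := toBlocks22_of_isSymm hNs
  -- Step: a direction where -M₂₂ is positive definite, from the negative eigenvalue of M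
  have hy : ∃ y : Fin r → ℝ, 0 < y ⬝ᵥ ((-(M.toBlocks₂₂)) *ᵥ y) := by
    by_contra hcon
    push_neg at hcon
    have hE0 : ∀ y : Fin r → ℝ, M.toBlocks₂₂ *ᵥ y = 0 := by
      intro y
      have h1 : y ⬝ᵥ ((-(M.toBlocks₂₂)) *ᵥ y) = 0 :=
        le_antisymm (hcon y) (by have := hMEpsd.dotProduct_mulVec_nonneg y; rwa [star_trivial] at this)
      have h2 := (hMEpsd.dotProduct_mulVec_zero_iff y).mp (by rwa [star_trivial])
      have h3 : -(M.toBlocks₂₂ *ᵥ y) = 0 := by rw [← Matrix.neg_mulVec]; exact h2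
      simpa [neg_eq_zero] using h3
    have hE0' : M.toBlocks₂₂ = 0 := by
      ext i j
      have := congrFun (hE0 (Pi.single j 1)) i
      simpa [Matrix.mulVec_single] using this
    have hD0' : M.toBlocks₁₂ = 0 := by
      ext i j
      have := congrFun (hMker (Pi.single j 1) (hE0 _)) i
      simpa [Matrix.mulVec_single] using this
    have hM11 : (M.toBlocks₁₁).PosSemidef := by
      have : M.toBlocks₁₁ - M.toBlocks₁₂ * pinv M.toBlocks₂₂ * (M.toBlocks₁₂)ᵀ
          = M.toBlocks₁₁ := by
        rw [hD0', Matrix.zero_mul, Matrix.zero_mul, sub_zero]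
      rwa [this] at hMS
    have hMpsd : M.PosSemidef := by
      refine PosSemidef.of_dotProduct_mulVec_nonneg hM fun z => ?_
      rw [star_trivial, dot_block, toBlocks21_of_isSymm hMs, hD0', hE0']
      simp only [Matrix.transpose_zero, Matrix.zero_mulVec, dotProduct_zero, add_zero]
      have := hM11.dotProduct_mulVec_nonneg (z ∘ Sum.inl)
      rwa [star_trivial] at this
    obtain ⟨i, hi⟩ := hneg
    exact absurd hi (not_lt.mpr (hMpsd.eigenvalues_nonneg i))
  -- Core: any direction of positivity of N₂₂ is annihilated by M₂₂
  have hnull : ∀ x : Fin r → ℝ, 0 < x ⬝ᵥ (N.toBlocks₂₂ *ᵥ x) → M.toBlocks₂₂ *ᵥ x = 0 := by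
    intro x hx
    have hvb : ∀ v : Fin q → ℝ,
        v ⬝ᵥ (N.toBlocks₁₂ *ᵥ x) + (Z₀ *ᵥ v) ⬝ᵥ (N.toBlocks₂₂ *ᵥ x)
          = v ⬝ᵥ (N.toBlocks₁₂ *ᵥ x + Z₀ᵀ *ᵥ (N.toBlocks₂₂ *ᵥ x)) := by
      intro v
      rw [dotProduct_add, dot_transpose']
    by_cases hb : N.toBlocks₁₂ *ᵥ x + Z₀ᵀ *ᵥ (N.toBlocks₂₂ *ᵥ x) = 0
    · have haa : (fun _ : Fin q => (1:ℝ)) ⬝ᵥ (fun _ : Fin q => (1:ℝ)) ≠ 0 := by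
        have h1 : (fun _ : Fin q => (1:ℝ)) ⬝ᵥ (fun _ : Fin q => (1:ℝ)) = (q:ℝ) := by
          simp [dotProduct]
        rw [h1]
        exact (Nat.cast_pos.mpr hq).ne'
      apply ray_bound_null hMs hMEpsd hMker Z₀ x (fun _ => (1:ℝ)) haa
      intro t ht
      apply hsub
      apply ray_mem hNs hZ₀
      intro v
      rw [hvb v, hb]
      simp only [dotProduct_zero, mul_zero, zero_add]
      exact mul_nonneg (sq_nonneg _) hx.le
    · have hbb : (N.toBlocks₁₂ *ᵥ x + Z₀ᵀ *ᵥ (N.toBlocks₂₂ *ᵥ x)) ⬝ᵥ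
          (N.toBlocks₁₂ *ᵥ x + Z₀ᵀ *ᵥ (N.toBlocks₂₂ *ᵥ x)) ≠ 0 :=
        fun h => hb (dotProduct_self_eq_zero.mp h)
      apply ray_bound_null hMs hMEpsd hMker Z₀ x _ hbb
      intro t ht
      apply hsub
      apply ray_mem hNs hZ₀
      intro v
      rw [hvb v, dotProduct_comm v]
      nlinarith [mul_nonneg ht
        (sq_nonneg ((N.toBlocks₁₂ *ᵥ x + Z₀ᵀ *ᵥ (N.toBlocks₂₂ *ᵥ x)) ⬝ᵥ v)),
        mul_nonneg (sq_nonneg (t * ((N.toBlocks₁₂ *ᵥ x + Z₀ᵀ *ᵥ (N.toBlocks₂₂ *ᵥ x)) ⬝ᵥ v))) hx.le]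
  -- Claim 1 : N₂₂ ⪯ 0
  have hApsd : (-(N.toBlocks₂₂)).PosSemidef := by
    have hsymm : (-(N.toBlocks₂₂)).IsHermitian := by
      rw [Matrix.IsHermitian, Matrix.conjTranspose_eq_transpose_of_trivial,
        Matrix.transpose_neg, hAt]
    refine PosSemidef.of_dotProduct_mulVec_nonneg hsymm fun x => ?_
    rw [star_trivial]
    by_contra hcon
    push_neg at hcon
    have hx : 0 < x ⬝ᵥ (N.toBlocks₂₂ *ᵥ x) := by
      have hh : x ⬝ᵥ ((-(N.toBlocks₂₂)) *ᵥ x) = -(x ⬝ᵥ (N.toBlocks₂₂ *ᵥ x)) := by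
        rw [Matrix.neg_mulVec, dotProduct_neg]
      rw [hh] at hcon
      linarith
    obtain ⟨y, hy'⟩ := hy
    set c := x ⬝ᵥ (N.toBlocks₂₂ *ᵥ x) with hc
    set m := x ⬝ᵥ (N.toBlocks₂₂ *ᵥ y) + y ⬝ᵥ (N.toBlocks₂₂ *ᵥ x) with hm
    set lam := y ⬝ᵥ (N.toBlocks₂₂ *ᵥ y) with hlam
    set ε := min 1 (c / (2 * (|m| + |lam| + 1))) with hε
    have hεpos : 0 < ε := lt_min one_pos (by positivity)
    have hε1 : ε ≤ 1 := min_le_left _ _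
    have hεle : ε ≤ c / (2 * (|m| + |lam| + 1)) := min_le_right _ _
    have hdenpos : 0 < 2 * (|m| + |lam| + 1) := by positivity
    have h2 : ε * (2 * (|m| + |lam| + 1)) ≤ c := by
      rw [← le_div_iff₀ hdenpos]
      exact hεle
    have hx' : 0 < (x + ε • y) ⬝ᵥ (N.toBlocks₂₂ *ᵥ (x + ε • y)) := by
      rw [dot_expand]
      have e1 : ε * -|m| ≤ ε * m := mul_le_mul_of_nonneg_left (neg_abs_le m) hεpos.le
      have e2 : ε ^ 2 ≤ ε := by nlinarith
      have e3 : ε ^ 2 * -|lam| ≤ ε ^ 2 * lam :=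
        mul_le_mul_of_nonneg_left (neg_abs_le lam) (sq_nonneg ε)
      have e4 : ε ^ 2 * |lam| ≤ ε * |lam| := mul_le_mul_of_nonneg_right e2 (abs_nonneg lam)
      nlinarith [h2, hεpos, hx]
    have h1 := hnull x hx
    have h2' := hnull (x + ε • y) hx'
    have hEy : M.toBlocks₂₂ *ᵥ y = 0 := by
      have h3 : M.toBlocks₂₂ *ᵥ (x + ε • y) = ε • (M.toBlocks₂₂ *ᵥ y) := by
        rw [Matrix.mulVec_add, h1, Matrix.mulVec_smul, zero_add]
      rw [h3] at h2'
      rcases smul_eq_zero.mp h2' with h | h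
      · exact absurd h (ne_of_gt hεpos)
      · exact h
    rw [Matrix.neg_mulVec, hEy] at hy'
    simp at hy'
  -- Claim 2 : ker N₂₂ ⊆ ker N₁₂
  have hker : ∀ x : Fin r → ℝ, N.toBlocks₂₂ *ᵥ x = 0 → N.toBlocks₁₂ *ᵥ x = 0 := by
    intro x hAx
    by_contra hBx
    have hbb : (N.toBlocks₁₂ *ᵥ x) ⬝ᵥ (N.toBlocks₁₂ *ᵥ x) ≠ 0 :=
      fun h => hBx (dotProduct_self_eq_zero.mp h)
    have hxAx : x ⬝ᵥ (N.toBlocks₂₂ *ᵥ x) = 0 := by rw [hAx, dotProduct_zero]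
    have hEx : M.toBlocks₂₂ *ᵥ x = 0 := by
      apply ray_bound_null hMs hMEpsd hMker Z₀ x (N.toBlocks₁₂ *ᵥ x) hbb
      intro t ht
      apply hsub
      apply ray_mem hNs hZ₀
      intro v
      rw [hAx, dotProduct_zero, dotProduct_zero, add_zero,
        dotProduct_comm v]
      nlinarith [mul_nonneg ht (sq_nonneg ((N.toBlocks₁₂ *ᵥ x) ⬝ᵥ v))]
    obtain ⟨y, hy'⟩ := hy
    have hlamnp : y ⬝ᵥ (N.toBlocks₂₂ *ᵥ y) ≤ 0 := by
      have := hApsd.dotProduct_mulVec_nonneg y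
      rw [star_trivial, Matrix.neg_mulVec, dotProduct_neg] at this
      linarith
    have hmem2 : ∀ s : ℝ, 0 ≤ s →
        Z₀ + Matrix.vecMulVec x
            ((s ^ 2 * (-(y ⬝ᵥ (N.toBlocks₂₂ *ᵥ y))) / 2) • (N.toBlocks₁₂ *ᵥ x)
              - s • (N.toBlocks₁₂ *ᵥ y + Z₀ᵀ *ᵥ (N.toBlocks₂₂ *ᵥ y)))
          + Matrix.vecMulVec y (s • (N.toBlocks₁₂ *ᵥ x)) ∈ ZSet N := by
      intro s hs
      apply ray_mem2 hNs hZ₀ x y _ _ hAx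
      intro v
      have hvg : v ⬝ᵥ (N.toBlocks₁₂ *ᵥ y) + (Z₀ *ᵥ v) ⬝ᵥ (N.toBlocks₂₂ *ᵥ y)
          = v ⬝ᵥ (N.toBlocks₁₂ *ᵥ y + Z₀ᵀ *ᵥ (N.toBlocks₂₂ *ᵥ y)) := by
        rw [dotProduct_add, dot_transpose']
      rw [hvg]
      have hexp : ((s ^ 2 * (-(y ⬝ᵥ (N.toBlocks₂₂ *ᵥ y))) / 2) • (N.toBlocks₁₂ *ᵥ x)
            - s • (N.toBlocks₁₂ *ᵥ y + Z₀ᵀ *ᵥ (N.toBlocks₂₂ *ᵥ y))) ⬝ᵥ v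
          = (s ^ 2 * (-(y ⬝ᵥ (N.toBlocks₂₂ *ᵥ y))) / 2) * ((N.toBlocks₁₂ *ᵥ x) ⬝ᵥ v)
            - s * ((N.toBlocks₁₂ *ᵥ y + Z₀ᵀ *ᵥ (N.toBlocks₂₂ *ᵥ y)) ⬝ᵥ v) := by
        simp [sub_dotProduct, smul_dotProduct]
        ring
      have h1 : (s • (N.toBlocks₁₂ *ᵥ x)) ⬝ᵥ v = s * ((N.toBlocks₁₂ *ᵥ x) ⬝ᵥ v) := by
        simp [smul_dotProduct]
      rw [hexp, h1, dotProduct_comm v (N.toBlocks₁₂ *ᵥ x),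
        dotProduct_comm v (N.toBlocks₁₂ *ᵥ y + Z₀ᵀ *ᵥ (N.toBlocks₂₂ *ᵥ y))]
      have hz : 2 * ((s ^ 2 * (-(y ⬝ᵥ (N.toBlocks₂₂ *ᵥ y))) / 2) * ((N.toBlocks₁₂ *ᵥ x) ⬝ᵥ v)
            - s * ((N.toBlocks₁₂ *ᵥ y + Z₀ᵀ *ᵥ (N.toBlocks₂₂ *ᵥ y)) ⬝ᵥ v))
            * ((N.toBlocks₁₂ *ᵥ x) ⬝ᵥ v)
          + (2 * (s * ((N.toBlocks₁₂ *ᵥ x) ⬝ᵥ v))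
              * ((N.toBlocks₁₂ *ᵥ y + Z₀ᵀ *ᵥ (N.toBlocks₂₂ *ᵥ y)) ⬝ᵥ v)
            + (s * ((N.toBlocks₁₂ *ᵥ x) ⬝ᵥ v)) ^ 2 * (y ⬝ᵥ (N.toBlocks₂₂ *ᵥ y))) = 0 := by
        ring
      rw [hz]
    have hzero := ray2_bound hMs hMEpsd hMker Z₀ x y (N.toBlocks₁₂ *ᵥ x) hbb hEx _
      (fun s hs => hsub (hmem2 s hs))
    rw [hzero] at hy'
    exact lt_irrefl 0 hy'
  -- Claim 3 : Schur complement of N is PSD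
  have hSN : (N.toBlocks₁₁ - N.toBlocks₁₂ * pinv N.toBlocks₂₂ * (N.toBlocks₁₂)ᵀ).PosSemidef := by
    have hid := key_id hNs hker Z₀
    have hpsdF : ((fromRows (1 : Matrix (Fin q) (Fin q) ℝ) Z₀)ᵀ * N
        * fromRows (1 : Matrix (Fin q) (Fin q) ℝ) Z₀).PosSemidef := hZ₀
    have hconj : ((Z₀ + pinv N.toBlocks₂₂ * (N.toBlocks₁₂)ᵀ)ᵀ * (-(N.toBlocks₂₂))
        * (Z₀ + pinv N.toBlocks₂₂ * (N.toBlocks₁₂)ᵀ)).PosSemidef := by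
      have := hApsd.conjTranspose_mul_mul_same (Z₀ + pinv N.toBlocks₂₂ * (N.toBlocks₁₂)ᵀ)
      simpa [Matrix.conjTranspose_eq_transpose_of_trivial] using this
    have hsum := hpsdF.add hconj
    have heq : (fromRows (1 : Matrix (Fin q) (Fin q) ℝ) Z₀)ᵀ * N
          * fromRows (1 : Matrix (Fin q) (Fin q) ℝ) Z₀
        + (Z₀ + pinv N.toBlocks₂₂ * (N.toBlocks₁₂)ᵀ)ᵀ * (-(N.toBlocks₂₂))
          * (Z₀ + pinv N.toBlocks₂₂ * (N.toBlocks₁₂)ᵀ)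
        = N.toBlocks₁₁ - N.toBlocks₁₂ * pinv N.toBlocks₂₂ * (N.toBlocks₁₂)ᵀ := by
      rw [hid]
      have hneg' : (Z₀ + pinv N.toBlocks₂₂ * (N.toBlocks₁₂)ᵀ)ᵀ * (-(N.toBlocks₂₂))
            * (Z₀ + pinv N.toBlocks₂₂ * (N.toBlocks₁₂)ᵀ)
          = -((Z₀ + pinv N.toBlocks₂₂ * (N.toBlocks₁₂)ᵀ)ᵀ * N.toBlocks₂₂
            * (Z₀ + pinv N.toBlocks₂₂ * (N.toBlocks₁₂)ᵀ)) := by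
        rw [Matrix.mul_neg, Matrix.neg_mul]
      rw [hneg']
      abel
    rw [heq] at hsum
    exact hsum
  exact ⟨hNs, hApsd, hker, hSN⟩


end
end

section
/- Let N := [E 𝐗]Φ̂[E 𝐗]ᵀ ∈ S^{2n+m} with lower-right block N₂₂ ∈ S^{n+m}, let ρ := rank N₂₂, let V ∈ ℝ^{(n+m)×ρ} have orthonormal columns spanning im N₂₂, write V = [V₊; V₋] with V₊ ∈ ℝ^{n×ρ} the first n rows and V₋ ∈ ℝ^{m×ρ} the last m rows, and set N̄ := diag(I_n,V)ᵀ N diag(I_n,V) ∈ S^{n+ρ}. (i) If N ∈ Π_{n,n+m} and there exist P̄ ≻ 0 ∈ S^n, Ȳ ∈ ℝ^{ρ×n}, and ᾱ > 0 such that the (n+ρ+n)-dimensional block matrix [[P̄,0,0],[0,0_ρ,Ȳ],[0,Ȳᵀ,P̄]] − ᾱ·diag(N̄,0_n) ≻ 0 and P̄ = V₊Ȳ, then there exists β > 0 such that ℳ(P̄, V₋Ȳ, β) − ᾱ·diag(N,0_n) ⪰ 0. (ii) Conversely, if there exist P ≻ 0 ∈ S^n, L ∈ ℝ^{m×n}, α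 ≥ 0, β > 0 such that ℳ(P,L,β) − α·diag(N,0_n) ⪰ 0, then N ∈ Π_{n,n+m} and there exists ᾱ ≥ 0 such that the two conditions of (i) hold with P̄ = P and Ȳ = Vᵀ[P; L], where [P; L] ∈ ℝ^{(n+m)×n} stacks P on top of L. -/
open Matrix

noncomputable section

/-- `ℳ(P,L,β)` with block rows/columns of sizes `(n,n,m,n)`. -/
def Mcal {n m : ℕ} (P : Matrix (Fin n) (Fin n) ℝ) (L : Matrix (Fin m) (Fin n) ℝ) (β : ℝ) :
    Matrix (SRows n m ⊕ Fin n) (SRows n m ⊕ Fin n) ℝ :=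
  fromBlocks
    (fromBlocks (P - β • (1 : Matrix (Fin n) (Fin n) ℝ)) 0 0 (fromBlocks (-P) (-Lᵀ) (-L) 0))
    (fromRows (0 : Matrix (Fin n) (Fin n) ℝ) (fromRows (0 : Matrix (Fin n) (Fin n) ℝ) L))
    (fromCols (0 : Matrix (Fin n) (Fin n) ℝ) (fromCols (0 : Matrix (Fin n) (Fin n) ℝ) Lᵀ))
    P

/-- `diag(N, 0_n)` : the `(3n+m)×(3n+m)` matrix with `N` in the upper-left block. -/
def dN {n m : ℕ} (N : Matrix (SRows n m) (SRows n m) ℝ) :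
    Matrix (SRows n m ⊕ Fin n) (SRows n m ⊕ Fin n) ℝ :=
  fromBlocks N 0 0 0

/-- Data informativity for quadratic stabilization. -/
def InfQStab {n m T nh : ℕ} (Xp X : Matrix (Fin n) (Fin T) ℝ) (U : Matrix (Fin m) (Fin T) ℝ)
    (E : Matrix (SRows n m) (Fin nh) ℝ)
    (Φ : Matrix (Fin nh ⊕ Fin T) (Fin nh ⊕ Fin T) ℝ) : Prop :=
  ∃ (P : Matrix (Fin n) (Fin n) ℝ) (K : Matrix (Fin m) (Fin n) ℝ), P.PosDef ∧
    ∀ AB ∈ SigmaSet Xp X U E Φ,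
      (P - (AB.1 + AB.2 * K) * P * (AB.1 + AB.2 * K)ᵀ).PosDef

/-- `V₊`: the first `n` rows of `V`. -/
def Vplus {n m ρ : ℕ} (V : Matrix (Fin n ⊕ Fin m) (Fin ρ) ℝ) : Matrix (Fin n) (Fin ρ) ℝ :=
  V.submatrix Sum.inl id

/-- `V₋`: the last `m` rows of `V`. -/
def Vminus {n m ρ : ℕ} (V : Matrix (Fin n ⊕ Fin m) (Fin ρ) ℝ) : Matrix (Fin m) (Fin ρ) ℝ :=
  V.submatrix Sum.inr id

/-- `N̄ = diag(I_n, V)ᵀ N diag(I_n, V)`. -/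
def Nbar {n m ρ : ℕ} (N : Matrix (SRows n m) (SRows n m) ℝ)
    (V : Matrix (Fin n ⊕ Fin m) (Fin ρ) ℝ) :
    Matrix (Fin n ⊕ Fin ρ) (Fin n ⊕ Fin ρ) ℝ :=
  (fromBlocks (1 : Matrix (Fin n) (Fin n) ℝ) 0 0 V)ᵀ * N *
    fromBlocks (1 : Matrix (Fin n) (Fin n) ℝ) 0 0 V

/-- The strict LMI `[[P̄,0,0],[0,0,Ȳ],[0,Ȳᵀ,P̄]] - ᾱ diag(N̄,0_n) ≻ 0`. -/
def corLMI {n ρ : ℕ} (Nb : Matrix (Fin n ⊕ Fin ρ) (Fin n ⊕ Fin ρ) ℝ)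
    (Pb : Matrix (Fin n) (Fin n) ℝ) (Yb : Matrix (Fin ρ) (Fin n) ℝ) (ab : ℝ) : Prop :=
  (fromBlocks (fromBlocks Pb 0 0 (0 : Matrix (Fin ρ) (Fin ρ) ℝ))
      (fromRows (0 : Matrix (Fin n) (Fin n) ℝ) Yb)
      (fromCols (0 : Matrix (Fin n) (Fin n) ℝ) Ybᵀ) Pb -
    ab • fromBlocks Nb 0 0 (0 : Matrix (Fin n) (Fin n) ℝ)).PosDef

namespace Stmt7Aux

variable {k l : Type*} [Fintype k] [Fintype l]

lemma psd_congr {A : Matrix k k ℝ} (hA : A.PosSemidef) (B : Matrix l k ℝ) :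
    (B * A * Bᵀ).PosSemidef := by
  simpa [Matrix.conjTranspose_eq_transpose_of_trivial] using hA.mul_mul_conjTranspose_same B

lemma psd_congr' {A : Matrix k k ℝ} (hA : A.PosSemidef) (B : Matrix k l ℝ) :
    (Bᵀ * A * B).PosSemidef := by
  simpa [Matrix.conjTranspose_eq_transpose_of_trivial] using hA.conjTranspose_mul_mul_same B

lemma eq_of_mulVec_eq {A B : Matrix k l ℝ} [DecidableEq l]
    (h : ∀ v : l → ℝ, A *ᵥ v = B *ᵥ v) : A = B := by
  ext i j
  have := congrFun (h (Pi.single j 1)) i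
  simpa [Matrix.mulVec_single] using this

lemma psd_quad_zero {A : Matrix k k ℝ} (hA : A.PosSemidef) {x : k → ℝ}
    (h : x ⬝ᵥ A *ᵥ x = 0) : A *ᵥ x = 0 := by
  have := (hA.dotProduct_mulVec_zero_iff x).mp (by simpa using h)
  exact this

/-- Penrose uniqueness: if `B` satisfies the four Penrose equations for `A` then `pinv A = B`. -/
lemma pinv_eq {A B : Matrix k k ℝ} (h1 : A * B * A = A) (h2 : B * A * B = B)
    (h3 : (A * B)ᵀ = A * B) (h4 : (B * A)ᵀ = B * A) : pinv A = B := by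
  have hex : ∃ C : Matrix k k ℝ,
      A * C * A = A ∧ C * A * C = C ∧ (A * C)ᵀ = A * C ∧ (C * A)ᵀ = C * A :=
    ⟨B, h1, h2, h3, h4⟩
  rw [pinv, dif_pos hex]
  obtain ⟨g1, g2, g3, g4⟩ := hex.choose_spec
  set C := hex.choose with hC
  -- A*B = A*C
  have e1 : A * B = A * C := by
    calc A * B = (A * C * A) * B := by rw [g1]
      _ = (A * C) * (A * B) := by simp only [Matrix.mul_assoc]
      _ = (A * C)ᵀ * (A * B)ᵀ := by rw [g3, h3]
      _ = (Cᵀ * Aᵀ) * (Bᵀ * Aᵀ) := by rw [Matrix.transpose_mul, Matrix.transpose_mul]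
      _ = Cᵀ * (A * B * A)ᵀ := by
          rw [Matrix.transpose_mul (A * B) A, Matrix.transpose_mul A B]
          simp only [Matrix.mul_assoc]
      _ = Cᵀ * Aᵀ := by rw [h1]
      _ = (A * C)ᵀ := by rw [Matrix.transpose_mul]
      _ = A * C := g3
  -- B*A = C*A
  have e2 : B * A = C * A := by
    calc B * A = B * (A * C * A) := by rw [g1]
      _ = (B * A) * (C * A) := by simp only [Matrix.mul_assoc]
      _ = (B * A)ᵀ * (C * A)ᵀ := by rw [h4, g4]
      _ = (Aᵀ * Bᵀ) * (Aᵀ * Cᵀ) := by rw [Matrix.transpose_mul, Matrix.transpose_mul]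
      _ = (A * B * A)ᵀ * Cᵀ := by
          rw [Matrix.transpose_mul (A * B) A, Matrix.transpose_mul A B]
          simp only [Matrix.mul_assoc]
      _ = Aᵀ * Cᵀ := by rw [h1]
      _ = (C * A)ᵀ := by rw [Matrix.transpose_mul]
      _ = C * A := g4
  calc C = C * A * C := g2.symm
    _ = (B * A) * C := by rw [e2]
    _ = B * (A * C) := by rw [Matrix.mul_assoc]
    _ = B * (A * B) := by rw [e1]
    _ = B * A * B := by rw [Matrix.mul_assoc]
    _ = B := h2

/-- A positive definite real matrix dominates `ε • 1` for some `ε > 0`. -/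
lemma exists_eps {A : Matrix k k ℝ} [DecidableEq k] (hA : A.PosDef) :
    ∃ ε : ℝ, 0 < ε ∧ (A - ε • 1).PosSemidef := by
  rcases isEmpty_or_nonempty k with hk | hk
  · refine ⟨1, one_pos, ⟨?_, fun x => ?_⟩⟩
    · ext i j; exact isEmptyElim i
    · simp [Finsupp.sum, Finset.eq_empty_of_isEmpty x.support]
  · have hH := hA.isHermitian
    have hne : (Finset.univ : Finset k).Nonempty := Finset.univ_nonempty
    set ε := Finset.univ.inf' hne hH.eigenvalues with hε
    have hεpos : 0 < ε := by
      obtain ⟨i, _, hi⟩ := Finset.exists_mem_eq_inf' hne hH.eigenvalues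
      rw [hε, hi]
      exact hA.eigenvalues_pos i
    refine ⟨ε, hεpos, ?_⟩
    have hU : (hH.eigenvectorUnitary : Matrix k k ℝ) *
        (star (hH.eigenvectorUnitary : Matrix k k ℝ)) = 1 :=
      (Matrix.mem_unitaryGroup_iff).mp hH.eigenvectorUnitary.2
    have key : A - ε • 1 = (hH.eigenvectorUnitary : Matrix k k ℝ) *
        (Matrix.diagonal (fun i => hH.eigenvalues i - ε)) *
        (star (hH.eigenvectorUnitary : Matrix k k ℝ)) := by
      have hd : Matrix.diagonal (fun i => hH.eigenvalues i - ε) =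
          Matrix.diagonal (RCLike.ofReal ∘ hH.eigenvalues) - ε • 1 := by
        ext i j
        by_cases h : i = j <;> simp [Matrix.diagonal, Matrix.one_apply, h]
      have hsm : (hH.eigenvectorUnitary : Matrix k k ℝ) * (ε • 1) *
          (star (hH.eigenvectorUnitary : Matrix k k ℝ)) = ε • 1 := by
        rw [Matrix.mul_smul, Matrix.mul_one, Matrix.smul_mul, hU]
      calc A - ε • 1 = (hH.eigenvectorUnitary : Matrix k k ℝ) *
            Matrix.diagonal (RCLike.ofReal ∘ hH.eigenvalues) *
            (star (hH.eigenvectorUnitary : Matrix k k ℝ)) -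
            (hH.eigenvectorUnitary : Matrix k k ℝ) * (ε • 1) *
            (star (hH.eigenvectorUnitary : Matrix k k ℝ)) := by
              rw [hsm]; congr 1; exact hH.spectral_theorem
        _ = (hH.eigenvectorUnitary : Matrix k k ℝ) *
            (Matrix.diagonal (RCLike.ofReal ∘ hH.eigenvalues) - ε • 1) *
            (star (hH.eigenvectorUnitary : Matrix k k ℝ)) := by
              rw [Matrix.mul_sub, Matrix.sub_mul]
        _ = _ := by rw [hd]
    rw [key]
    have hdiag : (Matrix.diagonal (fun i => hH.eigenvalues i - ε)).PosSemidef :=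
      Matrix.posSemidef_diagonal_iff.mpr fun i =>
        sub_nonneg.mpr (Finset.inf'_le _ (Finset.mem_univ i))
    have := hdiag.mul_mul_conjTranspose_same (hH.eigenvectorUnitary : Matrix k k ℝ)
    simpa [Matrix.star_eq_conjTranspose] using this

section Schur

variable {k l : Type*} [Fintype k] [Fintype l]

lemma herm_of_symm {A : Matrix k k ℝ} (h : Aᵀ = A) : A.IsHermitian := by
  rw [Matrix.IsHermitian, Matrix.conjTranspose_eq_transpose_of_trivial, h]

lemma symm_of_herm {A : Matrix k k ℝ} (h : A.IsHermitian) : Aᵀ = A := by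
  rw [← Matrix.conjTranspose_eq_transpose_of_trivial]; exact h

lemma elim_ne_zero_of_left {x : k → ℝ} {y : l → ℝ} (hx : x ≠ 0) :
    Sum.elim x y ≠ 0 := fun h => hx (funext fun i => congrFun h (Sum.inl i))

lemma psd_fromBlocks₂₂_iff {A : Matrix k k ℝ} {B : Matrix k l ℝ} {D : Matrix l l ℝ}
    [DecidableEq l] (hD : D.PosDef) :
    (fromBlocks A B Bᵀ D).PosSemidef ↔ (A - B * D⁻¹ * Bᵀ).PosSemidef := by
  haveI := hD.isUnit.invertible
  have hBH : Bᵀ = Bᴴ := (Matrix.conjTranspose_eq_transpose_of_trivial B).symm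
  rw [show (fromBlocks A B Bᵀ D) = fromBlocks A B Bᴴ D by rw [hBH]]
  rw [show A - B * D⁻¹ * Bᵀ = A - B * D⁻¹ * Bᴴ by rw [hBH]]
  exact Matrix.PosDef.fromBlocks₂₂ A B hD

lemma posDef_fromBlocks₂₂_mpr {A : Matrix k k ℝ} {B : Matrix k l ℝ} {D : Matrix l l ℝ}
    [DecidableEq l] (hD : D.PosDef) (hS : (A - B * D⁻¹ * Bᵀ).PosDef) :
    (fromBlocks A B Bᵀ D).PosDef := by
  haveI := hD.isUnit.invertible
  have hBH : Bᵀ = Bᴴ := (Matrix.conjTranspose_eq_transpose_of_trivial B).symm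
  rw [show (fromBlocks A B Bᵀ D) = fromBlocks A B Bᴴ D by rw [hBH]]
  rw [Matrix.posDef_iff_dotProduct_mulVec]
  constructor
  · refine (Matrix.IsHermitian.fromBlocks₂₂ A B hD.1).mpr ?_
    rw [← hBH]; exact hS.1
  · intro x hx
    rw [← Sum.elim_comp_inl_inr x] at hx ⊢
    rw [Matrix.dotProduct_mulVec, Matrix.schur_complement_eq₂₂ A B _ _ hD.1]
    rcases eq_or_ne (x ∘ Sum.inl) 0 with h1 | h1
    · have h2 : x ∘ Sum.inr ≠ 0 := by
        intro h2; exact hx (by rw [h1, h2]; ext (i | i) <;> rfl)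
      have t2 : star (x ∘ Sum.inl) ᵥ* (A - B * D⁻¹ * Bᴴ) ⬝ᵥ (x ∘ Sum.inl) = 0 := by
        rw [h1]; simp
      have t1 : 0 < star ((D⁻¹ * Bᴴ) *ᵥ (x ∘ Sum.inl) + x ∘ Sum.inr) ᵥ* D ⬝ᵥ
          ((D⁻¹ * Bᴴ) *ᵥ (x ∘ Sum.inl) + x ∘ Sum.inr) := by
        have hv : (D⁻¹ * Bᴴ) *ᵥ (x ∘ Sum.inl) + x ∘ Sum.inr ≠ 0 := by
          rw [h1]; simpa using h2
        have := hD.dotProduct_mulVec_pos hv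
        rwa [Matrix.dotProduct_mulVec] at this
      rw [t2]; linarith
    · have t1 : 0 ≤ star ((D⁻¹ * Bᴴ) *ᵥ (x ∘ Sum.inl) + x ∘ Sum.inr) ᵥ* D ⬝ᵥ
          ((D⁻¹ * Bᴴ) *ᵥ (x ∘ Sum.inl) + x ∘ Sum.inr) := by
        have := hD.posSemidef.dotProduct_mulVec_nonneg ((D⁻¹ * Bᴴ) *ᵥ (x ∘ Sum.inl) + x ∘ Sum.inr)
        rwa [Matrix.dotProduct_mulVec] at this
      have t2 : 0 < star (x ∘ Sum.inl) ᵥ* (A - B * D⁻¹ * Bᴴ) ⬝ᵥ (x ∘ Sum.inl) := by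
        have := hS.dotProduct_mulVec_pos h1
        rw [Matrix.dotProduct_mulVec] at this
        rwa [hBH] at this
      linarith

lemma posDef_fromBlocks₂₂_mp {A : Matrix k k ℝ} {B : Matrix k l ℝ} {D : Matrix l l ℝ}
    [DecidableEq l] (hD : D.PosDef) (h : (fromBlocks A B Bᵀ D).PosDef) :
    (A - B * D⁻¹ * Bᵀ).PosDef := by
  haveI := hD.isUnit.invertible
  have hBH : Bᵀ = Bᴴ := (Matrix.conjTranspose_eq_transpose_of_trivial B).symm
  rw [show (fromBlocks A B Bᵀ D) = fromBlocks A B Bᴴ D by rw [hBH]] at h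
  rw [show A - B * D⁻¹ * Bᵀ = A - B * D⁻¹ * Bᴴ by rw [hBH]]
  rw [Matrix.posDef_iff_dotProduct_mulVec]
  constructor
  · exact (Matrix.IsHermitian.fromBlocks₂₂ A B hD.1).mp h.1
  · intro x hx
    have := h.dotProduct_mulVec_pos (x := Sum.elim x (-((D⁻¹ * Bᴴ) *ᵥ x))) (elim_ne_zero_of_left hx)
    rw [Matrix.dotProduct_mulVec, Matrix.schur_complement_eq₂₂ A B _ _ hD.1] at this
    simp only [add_neg_cancel, star_zero, Matrix.zero_vecMul, zero_dotProduct,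
      zero_add] at this
    rwa [Matrix.dotProduct_mulVec]

end Schur

end Stmt7Aux


section MoreAux

open Stmt7Aux

set_option linter.unusedSectionVars false

lemma proj_fix {p q : Type*} [Fintype p] [Fintype q] [DecidableEq p] [DecidableEq q]
    {V : Matrix p q ℝ} {S : Matrix p p ℝ} (hV : Vᵀ * V = 1)
    (hspan : LinearMap.range V.mulVecLin = LinearMap.range S.mulVecLin) :
    V * Vᵀ * S = S := by
  apply eq_of_mulVec_eq; intro v
  have hmem : S *ᵥ v ∈ LinearMap.range V.mulVecLin := by
    rw [hspan]; exact ⟨v, by simp [Matrix.mulVecLin_apply]⟩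
  obtain ⟨u, hu⟩ := hmem
  rw [Matrix.mulVecLin_apply] at hu
  calc (V * Vᵀ * S) *ᵥ v = (V * Vᵀ) *ᵥ (S *ᵥ v) := by
        rw [← Matrix.mulVec_mulVec]
    _ = (V * (Vᵀ * V)) *ᵥ u := by
        rw [← hu, Matrix.mulVec_mulVec, Matrix.mul_assoc]
    _ = V *ᵥ u := by rw [hV, Matrix.mul_one]
    _ = S *ᵥ v := hu

lemma right_proj_eq {p r : Type*} [Fintype p] [Fintype r] [DecidableEq p]
    {W : Matrix p p ℝ} {S : Matrix p p ℝ} {M : Matrix r p ℝ}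
    (hproj : S * W = S)
    (hker : ∀ x, S *ᵥ x = 0 → M *ᵥ x = 0) : M * W = M := by
  apply eq_of_mulVec_eq; intro v
  have h0 : S *ᵥ (v - W *ᵥ v) = 0 := by
    rw [Matrix.mulVec_sub, Matrix.mulVec_mulVec, hproj, sub_self]
  have h1 := hker _ h0
  rw [Matrix.mulVec_sub, Matrix.mulVec_mulVec, sub_eq_zero] at h1
  exact h1.symm

lemma masterSchur {n m : ℕ} {P : Matrix (Fin n) (Fin n) ℝ} (hP : P.PosDef)
    (L : Matrix (Fin m) (Fin n) ℝ) (β a : ℝ) (N : Matrix (SRows n m) (SRows n m) ℝ)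
    (hN21 : N.toBlocks₂₁ = (N.toBlocks₁₂)ᵀ) :
    (Mcal P L β - a • dN N).PosSemidef ↔
      (fromBlocks (P - β • (1 : Matrix (Fin n) (Fin n) ℝ) - a • N.toBlocks₁₁)
        (-(a • N.toBlocks₁₂)) (-(a • N.toBlocks₁₂))ᵀ
        (-(fromRows P L * P⁻¹ * (fromRows P L)ᵀ) - a • N.toBlocks₂₂)).PosSemidef := by
  have hPdet : IsUnit P.det := isUnit_iff_ne_zero.mpr (ne_of_gt hP.det_pos)
  have hPsymm : Pᵀ = P := symm_of_herm hP.1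
  obtain ⟨N11, N12, N21, N22, rfl⟩ : ∃ a b c d, N = fromBlocks a b c d :=
    ⟨_, _, _, _, (Matrix.fromBlocks_toBlocks N).symm⟩
  simp only [Matrix.toBlocks_fromBlocks₁₁, Matrix.toBlocks_fromBlocks₁₂,
    Matrix.toBlocks_fromBlocks₂₁, Matrix.toBlocks_fromBlocks₂₂] at hN21 ⊢
  set B : Matrix (SRows n m) (Fin n) ℝ := fromRows 0 (fromRows 0 L) with hB
  have hBt : (fromCols (0 : Matrix (Fin n) (Fin n) ℝ) (fromCols 0 Lᵀ)) = Bᵀ := by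
    simp [hB, Matrix.transpose_fromRows]
  have hM : Mcal P L β - a • dN (fromBlocks N11 N12 N21 N22) =
      fromBlocks (fromBlocks (P - β • 1 - a • N11) (-(a • N12)) (-(a • N21))
          (fromBlocks (-P) (-Lᵀ) (-L) 0 - a • N22)) B Bᵀ P := by
    rw [Mcal, dN, hBt]
    simp only [Matrix.fromBlocks_smul, smul_zero, sub_eq_add_neg, Matrix.fromBlocks_neg,
      neg_zero, Matrix.fromBlocks_add, add_zero, zero_add]
    rfl
  rw [hM, psd_fromBlocks₂₂_iff hP]
  have hBPB : B * P⁻¹ * Bᵀ =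
      fromBlocks 0 0 0 (fromBlocks 0 0 0 (L * P⁻¹ * Lᵀ)) := by
    rw [← hBt, hB, Matrix.fromRows_mul, Matrix.fromRows_mul_fromCols,
      Matrix.fromRows_mul, Matrix.fromRows_mul_fromCols]
    simp
  have hKPK : fromRows P L * P⁻¹ * (fromRows P L)ᵀ =
      fromBlocks P Lᵀ L (L * P⁻¹ * Lᵀ) := by
    rw [Matrix.transpose_fromRows, hPsymm, Matrix.fromRows_mul,
      Matrix.fromRows_mul_fromCols, Matrix.mul_nonsing_inv _ hPdet]
    rw [show L * P⁻¹ * P = L by rw [Matrix.mul_assoc, Matrix.nonsing_inv_mul _ hPdet,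
      Matrix.mul_one]]
    rw [Matrix.one_mul, Matrix.one_mul]
  rw [hBPB]
  have key : fromBlocks (P - β • 1 - a • N11) (-(a • N12)) (-(a • N21))
        (fromBlocks (-P) (-Lᵀ) (-L) 0 - a • N22) -
        fromBlocks 0 0 0 (fromBlocks 0 0 0 (L * P⁻¹ * Lᵀ)) =
      fromBlocks (P - β • 1 - a • N11) (-(a • N12)) (-(a • N12))ᵀ
        (-(fromRows P L * P⁻¹ * (fromRows P L)ᵀ) - a • N22) := by
    rw [hKPK, hN21]
    ext i j
    rcases i with i | i | i <;> rcases j with j | j | j <;>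
      simp [Matrix.fromBlocks_apply₁₁, Matrix.fromBlocks_apply₁₂, Matrix.fromBlocks_apply₂₁,
        Matrix.fromBlocks_apply₂₂, Matrix.sub_apply, Matrix.add_apply, Matrix.neg_apply,
        Matrix.smul_apply, Matrix.transpose_apply] <;> ring
  rw [key]

end MoreAux


section MoreAux2

open Stmt7Aux

set_option linter.unusedSectionVars false

variable {k l : Type*} [Fintype k] [Fintype l]

lemma psd_smul {A : Matrix k k ℝ} (hA : A.PosSemidef) {c : ℝ} (hc : 0 ≤ c) :
    (c • A).PosSemidef := by
  rw [Matrix.posSemidef_iff_dotProduct_mulVec]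
  constructor
  · rw [Matrix.IsHermitian, Matrix.conjTranspose_smul]
    rw [hA.1]
    norm_num
  · intro x
    rw [Matrix.smul_mulVec, dotProduct_smul]
    exact mul_nonneg hc (hA.dotProduct_mulVec_nonneg x)

lemma quad_conj (K : Matrix k l ℝ) (M : Matrix l l ℝ) (x : k → ℝ) :
    x ⬝ᵥ (K * M * Kᵀ) *ᵥ x = (Kᵀ *ᵥ x) ⬝ᵥ M *ᵥ (Kᵀ *ᵥ x) := by
  rw [← Matrix.mulVec_mulVec, ← Matrix.mulVec_mulVec, Matrix.mulVec_transpose,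
    Matrix.dotProduct_mulVec x, Matrix.dotProduct_mulVec]

lemma schur_identity (N11 : Matrix k k ℝ) (N12 : Matrix k l ℝ) (N22 : Matrix l l ℝ)
    (D : Matrix l l ℝ) (Z0 : Matrix k l ℝ)
    (hDs : Dᵀ = D) (h22 : N22ᵀ = N22)
    (hd1 : N12 * D * N22 = N12) (hd2 : D * N22 * D = D) :
    N11 - N12 * D * N12ᵀ =
      (N11 + N12 * Z0ᵀ + Z0 * N12ᵀ + Z0 * N22 * Z0ᵀ) +
        (Z0ᵀ + D * N12ᵀ)ᵀ * (-N22) * (Z0ᵀ + D * N12ᵀ) := by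
  have e2 : N22 * (D * N12ᵀ) = N12ᵀ := by
    have h := congrArg Matrix.transpose hd1
    rw [Matrix.transpose_mul, Matrix.transpose_mul, hDs, h22] at h
    exact h
  have e3 : N12 * (D * (N22 * Z0ᵀ)) = N12 * Z0ᵀ := by
    calc N12 * (D * (N22 * Z0ᵀ)) = (N12 * D * N22) * Z0ᵀ := by
          simp only [Matrix.mul_assoc]
      _ = N12 * Z0ᵀ := by rw [hd1]
  have e4 : N12 * (D * (N22 * (D * N12ᵀ))) = N12 * (D * N12ᵀ) := by
    rw [e2]
  have ht : (Z0ᵀ + D * N12ᵀ)ᵀ = Z0 + N12 * D := by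
    rw [Matrix.transpose_add, Matrix.transpose_transpose, Matrix.transpose_mul, hDs,
      Matrix.transpose_transpose]
  rw [ht]
  simp only [Matrix.add_mul, Matrix.mul_add, Matrix.neg_mul, Matrix.mul_neg,
    Matrix.mul_assoc, e2, e3, e4]
  abel

lemma dot_self_nonneg (x : k → ℝ) : 0 ≤ x ⬝ᵥ x :=
  Finset.sum_nonneg fun i _ => mul_self_nonneg (x i)

lemma dot_self_pos {x : k → ℝ} (hx : x ≠ 0) : 0 < x ⬝ᵥ x := by
  rcases lt_or_eq_of_le (dot_self_nonneg x) with h | h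
  · exact h
  · exact absurd (dotProduct_self_eq_zero.mp h.symm) hx

end MoreAux2


section MoreAux3

open Stmt7Aux

set_option linter.unusedSectionVars false

variable {k l : Type*} [Fintype k] [Fintype l]

lemma star_vec (x : k → ℝ) : star x = x := funext fun i => star_trivial (x i)

lemma psd2 {A : Matrix k k ℝ} (hA : A.PosSemidef) (x : k → ℝ) : 0 ≤ x ⬝ᵥ A *ᵥ x := by
  have := hA.dotProduct_mulVec_nonneg x; rwa [_root_.star_vec] at this

lemma pd2 {A : Matrix k k ℝ} (hA : A.PosDef) {x : k → ℝ} (hx : x ≠ 0) :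
    0 < x ⬝ᵥ A *ᵥ x := by
  have := hA.dotProduct_mulVec_pos hx; rwa [_root_.star_vec] at this

lemma pd_mk {A : Matrix k k ℝ} (h1 : Aᵀ = A) (h2 : ∀ x, x ≠ 0 → 0 < x ⬝ᵥ A *ᵥ x) :
    A.PosDef := by
  refine Matrix.PosDef.of_dotProduct_mulVec_pos (herm_of_symm h1) fun x hx => ?_
  rw [_root_.star_vec]; exact h2 x hx

lemma psd_quad_zero' {A : Matrix k k ℝ} (hA : A.PosSemidef) {x : k → ℝ}
    (h : x ⬝ᵥ A *ᵥ x = 0) : A *ᵥ x = 0 := by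
  apply (hA.dotProduct_mulVec_zero_iff x).mp
  rwa [_root_.star_vec]

/-- Every real PD matrix is bounded above by `c • 1` for some `c > 0`. -/
lemma exists_upper {A : Matrix k k ℝ} [DecidableEq k] (hA : A.PosDef) :
    ∃ c : ℝ, 0 < c ∧ (c • 1 - A).PosSemidef := by
  rcases isEmpty_or_nonempty k with hk | hk
  · refine ⟨1, one_pos, ⟨?_, fun x => ?_⟩⟩
    · ext i j; exact isEmptyElim i
    · simp [Finsupp.sum, Finset.eq_empty_of_isEmpty x.support]
  · have hH := hA.isHermitian
    have hne : (Finset.univ : Finset k).Nonempty := Finset.univ_nonempty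
    set c := max (Finset.univ.sup' hne hH.eigenvalues) 1 with hc
    have hcpos : (0 : ℝ) < c := lt_of_lt_of_le one_pos (le_max_right _ _)
    refine ⟨c, hcpos, ?_⟩
    have hU : (hH.eigenvectorUnitary : Matrix k k ℝ) *
        (star (hH.eigenvectorUnitary : Matrix k k ℝ)) = 1 :=
      (Matrix.mem_unitaryGroup_iff).mp hH.eigenvectorUnitary.2
    have hsm : (hH.eigenvectorUnitary : Matrix k k ℝ) * (c • 1) *
        (star (hH.eigenvectorUnitary : Matrix k k ℝ)) = c • 1 := by
      rw [Matrix.mul_smul, Matrix.mul_one, Matrix.smul_mul, hU]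
    have hd : Matrix.diagonal (fun i => c - hH.eigenvalues i) =
        c • 1 - Matrix.diagonal (RCLike.ofReal ∘ hH.eigenvalues) := by
      ext i j
      by_cases h : i = j <;> simp [Matrix.diagonal, Matrix.one_apply, h]
    have key : c • 1 - A = (hH.eigenvectorUnitary : Matrix k k ℝ) *
        (Matrix.diagonal (fun i => c - hH.eigenvalues i)) *
        (star (hH.eigenvectorUnitary : Matrix k k ℝ)) := by
      calc c • 1 - A = (hH.eigenvectorUnitary : Matrix k k ℝ) * (c • 1) *
            (star (hH.eigenvectorUnitary : Matrix k k ℝ)) -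
            (hH.eigenvectorUnitary : Matrix k k ℝ) *
            Matrix.diagonal (RCLike.ofReal ∘ hH.eigenvalues) *
            (star (hH.eigenvectorUnitary : Matrix k k ℝ)) := by
              rw [hsm]; congr 1; exact hH.spectral_theorem
        _ = (hH.eigenvectorUnitary : Matrix k k ℝ) *
            (c • 1 - Matrix.diagonal (RCLike.ofReal ∘ hH.eigenvalues)) *
            (star (hH.eigenvectorUnitary : Matrix k k ℝ)) := by
              rw [Matrix.mul_sub, Matrix.sub_mul]
        _ = _ := by rw [hd]
    rw [key]
    have hdiag : (Matrix.diagonal (fun i => c - hH.eigenvalues i)).PosSemidef :=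
      Matrix.posSemidef_diagonal_iff.mpr fun i =>
        sub_nonneg.mpr (le_trans (Finset.le_sup' _ (Finset.mem_univ i)) (le_max_left _ _))
    have := hdiag.mul_mul_conjTranspose_same (hH.eigenvectorUnitary : Matrix k k ℝ)
    simpa [Matrix.star_eq_conjTranspose] using this

lemma diag_cong {p q s : Type*} [Fintype p] [Fintype q] [Fintype s] [DecidableEq p]
    (V : Matrix q s ℝ) (A : Matrix p p ℝ) (B : Matrix p q ℝ) (C : Matrix q p ℝ)
    (Dm : Matrix q q ℝ) :
    (fromBlocks (1 : Matrix p p ℝ) 0 0 V)ᵀ * fromBlocks A B C Dm *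
      fromBlocks (1 : Matrix p p ℝ) 0 0 V = fromBlocks A (B * V) (Vᵀ * C) (Vᵀ * Dm * V) := by
  rw [Matrix.fromBlocks_transpose, Matrix.fromBlocks_multiply, Matrix.fromBlocks_multiply]
  simp [Matrix.mul_assoc]

lemma diag_cong' {p q s : Type*} [Fintype p] [Fintype q] [Fintype s] [DecidableEq p]
    [Fintype s] (V : Matrix q s ℝ) (A : Matrix p p ℝ) (B : Matrix p s ℝ) (C : Matrix s p ℝ)
    (Dm : Matrix s s ℝ) :
    fromBlocks (1 : Matrix p p ℝ) 0 0 V * fromBlocks A B C Dm *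
      (fromBlocks (1 : Matrix p p ℝ) 0 0 V)ᵀ = fromBlocks A (B * Vᵀ) (V * C) (V * Dm * Vᵀ) := by
  rw [Matrix.fromBlocks_transpose, Matrix.fromBlocks_multiply, Matrix.fromBlocks_multiply]
  simp [Matrix.mul_assoc]

lemma corLMI_iff {n ρ : ℕ} (Nb : Matrix (Fin n ⊕ Fin ρ) (Fin n ⊕ Fin ρ) ℝ)
    (Pb : Matrix (Fin n) (Fin n) ℝ) (Yb : Matrix (Fin ρ) (Fin n) ℝ) (ab : ℝ) :
    corLMI Nb Pb Yb ab ↔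
      (fromBlocks (fromBlocks Pb 0 0 (0 : Matrix (Fin ρ) (Fin ρ) ℝ) - ab • Nb)
        (fromRows (0 : Matrix (Fin n) (Fin n) ℝ) Yb)
        (fromRows (0 : Matrix (Fin n) (Fin n) ℝ) Yb)ᵀ Pb).PosDef := by
  rw [corLMI]
  have h : fromBlocks (fromBlocks Pb 0 0 (0 : Matrix (Fin ρ) (Fin ρ) ℝ))
      (fromRows (0 : Matrix (Fin n) (Fin n) ℝ) Yb)
      (fromCols (0 : Matrix (Fin n) (Fin n) ℝ) Ybᵀ) Pb -
      ab • fromBlocks Nb 0 0 (0 : Matrix (Fin n) (Fin n) ℝ) =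
      fromBlocks (fromBlocks Pb 0 0 (0 : Matrix (Fin ρ) (Fin ρ) ℝ) - ab • Nb)
        (fromRows (0 : Matrix (Fin n) (Fin n) ℝ) Yb)
        (fromRows (0 : Matrix (Fin n) (Fin n) ℝ) Yb)ᵀ Pb := by
    rw [show fromCols (0 : Matrix (Fin n) (Fin n) ℝ) Ybᵀ =
        (fromRows (0 : Matrix (Fin n) (Fin n) ℝ) Yb)ᵀ by
      simp [Matrix.transpose_fromRows]]
    simp only [Matrix.fromBlocks_smul, smul_zero, sub_eq_add_neg, Matrix.fromBlocks_neg,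
      neg_zero, Matrix.fromBlocks_add, add_zero]
  rw [h]

lemma toRows₁_mul {a b c d : Type*} [Fintype c] (A : Matrix (a ⊕ b) c ℝ) (B : Matrix c d ℝ) :
    Matrix.toRows₁ (A * B) = Matrix.toRows₁ A * B := by
  ext i j; simp [Matrix.toRows₁, Matrix.mul_apply]

lemma fromRows_Vplus {n m ρ : ℕ} (V : Matrix (Fin n ⊕ Fin m) (Fin ρ) ℝ) :
    fromRows (Vplus V) (Vminus V) = V := by
  ext (i | i) j <;> rfl

lemma elim_eq_zero_iff {x : k → ℝ} {y : l → ℝ} :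
    Sum.elim x y = 0 ↔ x = 0 ∧ y = 0 := by
  constructor
  · intro h
    exact ⟨funext fun i => congrFun h (Sum.inl i), funext fun i => congrFun h (Sum.inr i)⟩
  · rintro ⟨rfl, rfl⟩
    ext (i | i) <;> rfl

lemma cancel_left {p q r : Type*} [Fintype p] [Fintype q] [Fintype r] [DecidableEq q]
    {V : Matrix p q ℝ} (hV : Vᵀ * V = 1) (X : Matrix q r ℝ) : Vᵀ * (V * X) = X := by
  rw [← Matrix.mul_assoc, hV, Matrix.one_mul]

end MoreAux3

open Stmt7Aux

set_option maxHeartbeats 2000000 in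
theorem stmt7 {n m T nh : ℕ} (hn : 0 < n) (hm : 0 < m) (hT : 0 < T) (hnh : 0 < nh)
    (Astar : Matrix (Fin n) (Fin n) ℝ) (Bstar : Matrix (Fin n) (Fin m) ℝ)
    (Xps Xs Xp X ΔXp ΔX : Matrix (Fin n) (Fin T) ℝ) (Us U ΔU : Matrix (Fin m) (Fin T) ℝ)
    (E : Matrix (SRows n m) (Fin nh) ℝ)
    (Φ : Matrix (Fin nh ⊕ Fin T) (Fin nh ⊕ Fin T) ℝ)
    (hΦ : Φ ∈ PiSet (Fin nh) (Fin T))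
    (hclean : Xps = Astar * Xs + Bstar * Us)
    (hXp : Xp = Xps + ΔXp) (hX : X = Xs + ΔX) (hU : U = Us + ΔU)
    (hΔ : bigX ΔXp ΔX ΔU ∈ Dset E Φ)
    (ρ : ℕ) (hρ : ρ = ((Nmat Xp X U E Φ).toBlocks₂₂).rank)
    (V : Matrix (Fin n ⊕ Fin m) (Fin ρ) ℝ)
    (hVorth : Vᵀ * V = 1)
    (hVspan : LinearMap.range V.mulVecLin =
      LinearMap.range ((Nmat Xp X U E Φ).toBlocks₂₂).mulVecLin) :
    (Nmat Xp X U E Φ ∈ PiSet (Fin n) (Fin n ⊕ Fin m) →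
      ∀ (Pb : Matrix (Fin n) (Fin n) ℝ) (Yb : Matrix (Fin ρ) (Fin n) ℝ) (ab : ℝ),
        Pb.PosDef → 0 < ab →
        corLMI (Nbar (Nmat Xp X U E Φ) V) Pb Yb ab →
        Pb = Vplus V * Yb →
        ∃ β : ℝ, 0 < β ∧
          (Mcal Pb (Vminus V * Yb) β - ab • dN (Nmat Xp X U E Φ)).PosSemidef) ∧
    (∀ (P : Matrix (Fin n) (Fin n) ℝ) (L : Matrix (Fin m) (Fin n) ℝ) (α β : ℝ),
      P.PosDef → 0 ≤ α → 0 < β →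
      (Mcal P L β - α • dN (Nmat Xp X U E Φ)).PosSemidef →
      Nmat Xp X U E Φ ∈ PiSet (Fin n) (Fin n ⊕ Fin m) ∧
      ∃ ab : ℝ, 0 ≤ ab ∧
        corLMI (Nbar (Nmat Xp X U E Φ) V) P (Vᵀ * fromRows P L) ab ∧
        P = Vplus V * (Vᵀ * fromRows P L)) := by
  classical
  obtain ⟨Δh, hΔhZ, hΔeq⟩ := hΔ
  have hΦs : Φᵀ = Φ := hΦ.1
  set N : Matrix (SRows n m) (SRows n m) ℝ := Nmat Xp X U E Φ with hNdef
  have hNsymm : Nᵀ = N := by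
    rw [hNdef]
    simp only [Nmat]
    rw [Matrix.transpose_mul, Matrix.transpose_mul, Matrix.transpose_transpose, hΦs]
    simp only [Matrix.mul_assoc]
  have hN21 : N.toBlocks₂₁ = (N.toBlocks₁₂)ᵀ := by
    ext i j
    exact congrFun (congrFun hNsymm (Sum.inl j)) (Sum.inr i)
  have hN22s : (N.toBlocks₂₂)ᵀ = N.toBlocks₂₂ := by
    ext i j
    exact congrFun (congrFun hNsymm (Sum.inr i)) (Sum.inr j)
  have hNblocks : N = fromBlocks N.toBlocks₁₁ N.toBlocks₁₂ (N.toBlocks₁₂)ᵀ N.toBlocks₂₂ := by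
    rw [← hN21]
    exact (Matrix.fromBlocks_toBlocks N).symm
  have hVVS : V * Vᵀ * N.toBlocks₂₂ = N.toBlocks₂₂ := proj_fix hVorth hVspan
  have hSVV : N.toBlocks₂₂ * (V * Vᵀ) = N.toBlocks₂₂ := by
    have h := congrArg Matrix.transpose hVVS
    simp only [Matrix.transpose_mul, Matrix.transpose_transpose] at h
    rw [hN22s] at h
    exact h
  have hN22C : N.toBlocks₂₂ = V * (Vᵀ * N.toBlocks₂₂ * V) * Vᵀ := by
    have h1 : V * (Vᵀ * N.toBlocks₂₂ * V) * Vᵀ = V * Vᵀ * N.toBlocks₂₂ * (V * Vᵀ) := by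
      simp only [Matrix.mul_assoc]
    rw [h1, hVVS, hSVV]
  have hCs : (Vᵀ * N.toBlocks₂₂ * V)ᵀ = Vᵀ * N.toBlocks₂₂ * V := by
    simp only [Matrix.transpose_mul, Matrix.transpose_transpose, hN22s, Matrix.mul_assoc]
  set W : Matrix (Fin n) (SRows n m) ℝ := sysRow Astar Bstar with hWdef
  set Z0 : Matrix (Fin n) (Fin n ⊕ Fin m) ℝ := fromCols Astar Bstar with hZ0def
  have key1 : W * bigX ΔXp ΔX ΔU = ΔXp - Astar * ΔX - Bstar * ΔU := by
    rw [hWdef]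
    simp only [sysRow, bigX]
    rw [Matrix.fromCols_mul_fromRows, Matrix.one_mul, Matrix.fromCols_mul_fromRows]
    simp only [Matrix.mul_neg]
    abel
  have key2 : W * bigX Xp X U = ΔXp - Astar * ΔX - Bstar * ΔU := by
    rw [hWdef]
    simp only [sysRow, bigX]
    rw [Matrix.fromCols_mul_fromRows, Matrix.one_mul, Matrix.fromCols_mul_fromRows,
      hXp, hX, hU, hclean]
    simp only [Matrix.mul_neg, Matrix.mul_add]
    abel
  have hWX : W * bigX Xp X U = W * E * Δh := by
    rw [key2, ← key1, hΔeq, Matrix.mul_assoc]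
  have hWNW : (W * N * Wᵀ).PosSemidef := by
    have hmem : ((fromRows (1 : Matrix (Fin nh) (Fin nh) ℝ) Δhᵀ)ᵀ * Φ *
        fromRows 1 Δhᵀ).PosSemidef := hΔhZ
    have hWF : W * fromCols E (bigX Xp X U) =
        (W * E) * (fromRows (1 : Matrix (Fin nh) (Fin nh) ℝ) Δhᵀ)ᵀ := by
      rw [Matrix.mul_fromCols, hWX, Matrix.transpose_fromRows, Matrix.transpose_one,
        Matrix.transpose_transpose, Matrix.mul_fromCols, Matrix.mul_one]
    have hNW : W * N * Wᵀ = (W * E) * ((fromRows (1 : Matrix (Fin nh) (Fin nh) ℝ) Δhᵀ)ᵀ * Φ *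
        fromRows (1 : Matrix (Fin nh) (Fin nh) ℝ) Δhᵀ) * (W * E)ᵀ := by
      rw [hNdef]
      simp only [Nmat]
      rw [show W * (fromCols E (bigX Xp X U) * Φ * (fromCols E (bigX Xp X U))ᵀ) * Wᵀ =
          (W * fromCols E (bigX Xp X U)) * Φ * (W * fromCols E (bigX Xp X U))ᵀ from by
        rw [Matrix.transpose_mul]
        simp only [Matrix.mul_assoc]]
      rw [hWF, Matrix.transpose_mul, Matrix.transpose_transpose]
      simp only [Matrix.mul_assoc]
    rw [hNW]
    exact psd_congr hmem (W * E)
  have hWexp : W * N * Wᵀ = N.toBlocks₁₁ + N.toBlocks₁₂ * Z0ᵀ + Z0 * (N.toBlocks₁₂)ᵀ +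
      Z0 * N.toBlocks₂₂ * Z0ᵀ := by
    have hrw : W * N * Wᵀ =
        W * fromBlocks N.toBlocks₁₁ N.toBlocks₁₂ (N.toBlocks₁₂)ᵀ N.toBlocks₂₂ * Wᵀ := by
      rw [← hNblocks]
    rw [hrw, hWdef]
    simp only [sysRow]
    rw [← hZ0def, Matrix.transpose_fromCols, Matrix.transpose_one,
      Matrix.fromCols_mul_fromBlocks, Matrix.fromCols_mul_fromRows]
    simp only [Matrix.one_mul, Matrix.mul_one, Matrix.add_mul]
    abel
  constructor
  · -- Part (i)
    intro hPi Pb Yb ab hPb hab hcor hPbeq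
    obtain ⟨hsym, hpsd22, hkerP, hschurP⟩ := hPi
    have hPdet : IsUnit Pb.det := isUnit_iff_ne_zero.mpr (ne_of_gt hPb.det_pos)
    have hPsymm : Pbᵀ = Pb := symm_of_herm hPb.1
    set L : Matrix (Fin m) (Fin n) ℝ := Vminus V * Yb with hLdef
    set K : Matrix (Fin n ⊕ Fin m) (Fin n) ℝ := fromRows Pb L with hKdef
    have hKeq : K = V * Yb := by
      rw [hKdef, hLdef, hPbeq, ← Matrix.fromRows_mul, fromRows_Vplus]
    have hN12VV : N.toBlocks₁₂ * (V * Vᵀ) = N.toBlocks₁₂ := right_proj_eq hSVV hkerP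
    rw [corLMI_iff] at hcor
    have hH := posDef_fromBlocks₂₂_mp hPb hcor
    have hNbar : Nbar N V = fromBlocks N.toBlocks₁₁ (N.toBlocks₁₂ * V)
        (Vᵀ * (N.toBlocks₁₂)ᵀ) (Vᵀ * N.toBlocks₂₂ * V) := by
      rw [Nbar]
      nth_rewrite 1 [hNblocks]
      rw [diag_cong]
    have hsub : fromRows (0 : Matrix (Fin n) (Fin n) ℝ) Yb * Pb⁻¹ *
        (fromRows (0 : Matrix (Fin n) (Fin n) ℝ) Yb)ᵀ =
        fromBlocks 0 0 0 (Yb * Pb⁻¹ * Ybᵀ) := by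
      rw [Matrix.transpose_fromRows, Matrix.fromRows_mul, Matrix.fromRows_mul_fromCols]
      simp only [Matrix.zero_mul, Matrix.mul_zero, Matrix.transpose_zero]
    have hHeq : fromBlocks Pb 0 0 (0 : Matrix (Fin ρ) (Fin ρ) ℝ) - ab • Nbar N V -
        fromRows (0 : Matrix (Fin n) (Fin n) ℝ) Yb * Pb⁻¹ *
        (fromRows (0 : Matrix (Fin n) (Fin n) ℝ) Yb)ᵀ =
        fromBlocks (Pb - ab • N.toBlocks₁₁) (-(ab • (N.toBlocks₁₂ * V)))
          (-(ab • (Vᵀ * (N.toBlocks₁₂)ᵀ)))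
          (-(ab • (Vᵀ * N.toBlocks₂₂ * V)) - Yb * Pb⁻¹ * Ybᵀ) := by
      rw [hsub, hNbar]
      simp only [Matrix.fromBlocks_smul, sub_eq_add_neg, Matrix.fromBlocks_neg,
        Matrix.fromBlocks_add, smul_zero, neg_zero, add_zero, zero_add]
      all_goals (rw [Matrix.fromBlocks_inj]; refine ⟨?_, ?_, ?_, ?_⟩ <;> module)
    rw [hHeq] at hH
    obtain ⟨ε, hε0, hHeps⟩ := exists_eps hH
    refine ⟨ε, hε0, ?_⟩
    rw [masterSchur hPb L ε ab N hN21, ← hKdef]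
    have hVVY : V * (Vᵀ * (N.toBlocks₁₂)ᵀ) = (N.toBlocks₁₂)ᵀ := by
      have h := congrArg Matrix.transpose hN12VV
      simp only [Matrix.transpose_mul, Matrix.transpose_transpose] at h
      rw [Matrix.mul_assoc] at h
      exact h
    have hJJt : fromBlocks (1 : Matrix (Fin n) (Fin n) ℝ) 0 0 V *
        (fromBlocks (1 : Matrix (Fin n) (Fin n) ℝ) 0 0 V)ᵀ =
        fromBlocks (1 : Matrix (Fin n) (Fin n) ℝ) 0 0 (V * Vᵀ) := by
      rw [Matrix.fromBlocks_transpose, Matrix.fromBlocks_multiply]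
      simp
    have hkey : fromBlocks (Pb - ε • 1 - ab • N.toBlocks₁₁) (-(ab • N.toBlocks₁₂))
        (-(ab • N.toBlocks₁₂))ᵀ (-(K * Pb⁻¹ * Kᵀ) - ab • N.toBlocks₂₂) =
        fromBlocks (1 : Matrix (Fin n) (Fin n) ℝ) 0 0 V *
          (fromBlocks (Pb - ab • N.toBlocks₁₁) (-(ab • (N.toBlocks₁₂ * V)))
            (-(ab • (Vᵀ * (N.toBlocks₁₂)ᵀ)))
            (-(ab • (Vᵀ * N.toBlocks₂₂ * V)) - Yb * Pb⁻¹ * Ybᵀ) - ε • 1) *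
          (fromBlocks (1 : Matrix (Fin n) (Fin n) ℝ) 0 0 V)ᵀ +
        ε • fromBlocks 0 0 0 (V * Vᵀ) := by
      rw [Matrix.mul_sub, Matrix.sub_mul, diag_cong']
      rw [Matrix.mul_smul, Matrix.mul_one, Matrix.smul_mul, hJJt]
      have f12 : -(ab • (N.toBlocks₁₂ * V)) * Vᵀ = -(ab • N.toBlocks₁₂) := by
        rw [Matrix.neg_mul, Matrix.smul_mul, Matrix.mul_assoc, hN12VV]
      have f21 : V * -(ab • (Vᵀ * (N.toBlocks₁₂)ᵀ)) = (-(ab • N.toBlocks₁₂))ᵀ := by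
        rw [Matrix.mul_neg, Matrix.mul_smul, hVVY, Matrix.transpose_neg,
          Matrix.transpose_smul]
      have f22 : V * (-(ab • (Vᵀ * N.toBlocks₂₂ * V)) - Yb * Pb⁻¹ * Ybᵀ) * Vᵀ =
          -(ab • N.toBlocks₂₂) - K * Pb⁻¹ * Kᵀ := by
        rw [Matrix.mul_sub, Matrix.sub_mul, Matrix.mul_neg, Matrix.neg_mul,
          Matrix.mul_smul, Matrix.smul_mul,
          show V * (Vᵀ * N.toBlocks₂₂ * V) * Vᵀ = N.toBlocks₂₂ from hN22C.symm]
        congr 1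
        rw [hKeq, Matrix.transpose_mul]
        simp only [Matrix.mul_assoc]
      rw [f12, f21, f22]
      simp only [Matrix.fromBlocks_smul, sub_eq_add_neg, Matrix.fromBlocks_neg,
        Matrix.fromBlocks_add, smul_zero, neg_zero, add_zero, zero_add]
      rw [Matrix.fromBlocks_inj]
      refine ⟨?_, ?_, ?_, ?_⟩ <;> module
    rw [hkey]
    have hps1 : (fromBlocks (1 : Matrix (Fin n) (Fin n) ℝ) 0 0 V *
        (fromBlocks (Pb - ab • N.toBlocks₁₁) (-(ab • (N.toBlocks₁₂ * V)))
          (-(ab • (Vᵀ * (N.toBlocks₁₂)ᵀ)))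
          (-(ab • (Vᵀ * N.toBlocks₂₂ * V)) - Yb * Pb⁻¹ * Ybᵀ) - ε • 1) *
        (fromBlocks (1 : Matrix (Fin n) (Fin n) ℝ) 0 0 V)ᵀ).PosSemidef :=
      psd_congr hHeps _
    have hps2 : (ε • fromBlocks (0 : Matrix (Fin n) (Fin n) ℝ) 0 0 (V * Vᵀ)).PosSemidef := by
      apply psd_smul _ (le_of_lt hε0)
      have h := psd_congr (Matrix.PosSemidef.one)
        (fromBlocks (0 : Matrix (Fin n) (Fin n) ℝ) 0 0 V)
      rw [Matrix.mul_one] at h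
      have heq : fromBlocks (0 : Matrix (Fin n) (Fin n) ℝ) 0 0 V *
          (fromBlocks (0 : Matrix (Fin n) (Fin n) ℝ) 0 0 V)ᵀ =
          fromBlocks (0 : Matrix (Fin n) (Fin n) ℝ) 0 0 (V * Vᵀ) := by
        rw [Matrix.fromBlocks_transpose, Matrix.fromBlocks_multiply]
        simp
      rwa [heq] at h
    exact hps1.add hps2
  · -- Part (ii)
    intro P L α β hP hα hβ hMpsd
    have hPdet : IsUnit P.det := isUnit_iff_ne_zero.mpr (ne_of_gt hP.det_pos)
    have hPsymm : Pᵀ = P := symm_of_herm hP.1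
    have hPinv : P⁻¹.PosDef := hP.inv
    set K : Matrix (Fin n ⊕ Fin m) (Fin n) ℝ := fromRows P L with hKdef
    have hQQ : (fromBlocks (P - β • 1 - α • N.toBlocks₁₁) (-(α • N.toBlocks₁₂))
        (-(α • N.toBlocks₁₂))ᵀ
        (-(K * P⁻¹ * Kᵀ) - α • N.toBlocks₂₂)).PosSemidef :=
      (masterSchur hP L β α N hN21).mp hMpsd
    have hKPKpsd : (K * P⁻¹ * Kᵀ).PosSemidef := psd_congr hPinv.posSemidef K
    have hD0psd : (-(K * P⁻¹ * Kᵀ) - α • N.toBlocks₂₂).PosSemidef := by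
      have h := hQQ.submatrix Sum.inr
      have he : (fromBlocks (P - β • 1 - α • N.toBlocks₁₁) (-(α • N.toBlocks₁₂))
          (-(α • N.toBlocks₁₂))ᵀ
          (-(K * P⁻¹ * Kᵀ) - α • N.toBlocks₂₂)).submatrix Sum.inr Sum.inr =
          -(K * P⁻¹ * Kᵀ) - α • N.toBlocks₂₂ := rfl
      rwa [he] at h
    -- positivity of α
    have hα0 : 0 < α := by
      rcases eq_or_lt_of_le hα with h0 | h0
      · exfalso
        set u : Fin n → ℝ := Pi.single ⟨0, hn⟩ 1 with hu
        have hune : u ≠ 0 := by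
          intro h
          have := congrFun h ⟨0, hn⟩
          simp [hu] at this
        have hKT : Kᵀ *ᵥ Sum.elim u 0 = P *ᵥ u := by
          rw [hKdef, Matrix.transpose_fromRows, Matrix.fromCols_mulVec_sumElim]
          simp [hPsymm]
        have hPu : P *ᵥ u ≠ 0 := by
          intro h
          have hgt := pd2 hP hune
          rw [h, dotProduct_zero] at hgt
          exact lt_irrefl _ hgt
        have hq := psd2 hD0psd (Sum.elim u 0)
        have hc : Sum.elim u 0 ⬝ᵥ (-(K * P⁻¹ * Kᵀ) - α • N.toBlocks₂₂) *ᵥ Sum.elim u 0 =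
            -((Kᵀ *ᵥ Sum.elim u 0) ⬝ᵥ P⁻¹ *ᵥ (Kᵀ *ᵥ Sum.elim u 0)) := by
          rw [← h0, zero_smul, sub_zero, Matrix.neg_mulVec, dotProduct_neg, quad_conj]
        have hgt := pd2 hPinv (show Kᵀ *ᵥ Sum.elim u 0 ≠ 0 by rw [hKT]; exact hPu)
        rw [hc] at hq
        linarith
      · exact h0
    -- N22 ⪯ 0
    have hN22psd : (-(N.toBlocks₂₂)).PosSemidef := by
      have hsum : (α • (-(N.toBlocks₂₂))).PosSemidef := by
        have heq : α • (-(N.toBlocks₂₂)) =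
            (-(K * P⁻¹ * Kᵀ) - α • N.toBlocks₂₂) + K * P⁻¹ * Kᵀ := by
          rw [smul_neg]
          abel
        rw [heq]
        exact hD0psd.add hKPKpsd
      have h := psd_smul hsum (le_of_lt (inv_pos.mpr hα0))
      rwa [smul_smul, inv_mul_cancel₀ (ne_of_gt hα0), one_smul] at h
    -- kernel conditions
    have hkerK : ∀ x, N.toBlocks₂₂ *ᵥ x = 0 → Kᵀ *ᵥ x = 0 := by
      intro x hx
      have hquad : x ⬝ᵥ (-(K * P⁻¹ * Kᵀ) - α • N.toBlocks₂₂) *ᵥ x =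
          -((Kᵀ *ᵥ x) ⬝ᵥ P⁻¹ *ᵥ (Kᵀ *ᵥ x)) := by
        rw [Matrix.sub_mulVec, Matrix.smul_mulVec, hx, smul_zero, sub_zero,
          Matrix.neg_mulVec, dotProduct_neg, quad_conj]
      have h1 := psd2 hD0psd x
      by_contra hne
      have hgt := pd2 hPinv hne
      rw [hquad] at h1
      linarith
    have hkerN12 : ∀ x, N.toBlocks₂₂ *ᵥ x = 0 → N.toBlocks₁₂ *ᵥ x = 0 := by
      intro x hx
      have hKx := hkerK x hx
      have hD0x : (-(K * P⁻¹ * Kᵀ) - α • N.toBlocks₂₂) *ᵥ x = 0 := by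
        rw [Matrix.sub_mulVec, Matrix.smul_mulVec, hx, smul_zero, sub_zero,
          Matrix.neg_mulVec, ← Matrix.mulVec_mulVec, ← Matrix.mulVec_mulVec, hKx,
          Matrix.mulVec_zero, Matrix.mulVec_zero, neg_zero]
      have hquad0 : (Sum.elim (0 : Fin n → ℝ) x) ⬝ᵥ (fromBlocks (P - β • 1 - α • N.toBlocks₁₁)
          (-(α • N.toBlocks₁₂)) (-(α • N.toBlocks₁₂))ᵀ
          (-(K * P⁻¹ * Kᵀ) - α • N.toBlocks₂₂)) *ᵥ (Sum.elim (0 : Fin n → ℝ) x) = 0 := by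
        rw [Matrix.fromBlocks_mulVec, sumElim_dotProduct_sumElim]
        simp [hD0x]
      have hzero := psd_quad_zero' hQQ hquad0
      rw [Matrix.fromBlocks_mulVec] at hzero
      have hcomp : -(α • N.toBlocks₁₂) *ᵥ x = 0 := by
        funext i
        have h := congrFun hzero (Sum.inl i)
        simpa [Matrix.mulVec_zero] using h
      rw [Matrix.neg_mulVec, neg_eq_zero, Matrix.smul_mulVec] at hcomp
      exact (smul_eq_zero.mp hcomp).resolve_left (ne_of_gt hα0)
    -- the compressed matrix C and its negative-definiteness
    have hCneg : (-(Vᵀ * N.toBlocks₂₂ * V)).PosDef := by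
      refine pd_mk (by rw [Matrix.transpose_neg, hCs]) ?_
      intro u hu
      have hq : u ⬝ᵥ (-(Vᵀ * N.toBlocks₂₂ * V)) *ᵥ u =
          (V *ᵥ u) ⬝ᵥ (-(N.toBlocks₂₂)) *ᵥ (V *ᵥ u) := by
        have hrw : -(Vᵀ * N.toBlocks₂₂ * V) = Vᵀ * (-(N.toBlocks₂₂)) * (Vᵀ)ᵀ := by
          rw [Matrix.transpose_transpose, Matrix.mul_neg, Matrix.neg_mul]
        rw [hrw, quad_conj, Matrix.transpose_transpose]
      have hge : 0 ≤ u ⬝ᵥ (-(Vᵀ * N.toBlocks₂₂ * V)) *ᵥ u := by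
        rw [hq]
        exact psd2 hN22psd (V *ᵥ u)
      rcases lt_or_eq_of_le hge with h | h
      · exact h
      · exfalso
        have h0 : (-(N.toBlocks₂₂)) *ᵥ (V *ᵥ u) = 0 := by
          apply psd_quad_zero' hN22psd
          rw [← hq, ← h]
        have hN22Vu : N.toBlocks₂₂ *ᵥ (V *ᵥ u) = 0 := by
          rwa [Matrix.neg_mulVec, neg_eq_zero] at h0
        obtain ⟨y, hy⟩ : ∃ y, N.toBlocks₂₂ *ᵥ y = V *ᵥ u := by
          have hmem : V.mulVecLin u ∈ LinearMap.range (N.toBlocks₂₂).mulVecLin := by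
            rw [← hVspan]
            exact ⟨u, rfl⟩
          obtain ⟨y, hy⟩ := hmem
          exact ⟨y, by simpa [Matrix.mulVecLin_apply] using hy⟩
        have hu0 : u ⬝ᵥ u = 0 := by
          calc u ⬝ᵥ u = u ⬝ᵥ (Vᵀ * V) *ᵥ u := by rw [hVorth, Matrix.one_mulVec]
            _ = (V *ᵥ u) ⬝ᵥ (V *ᵥ u) := by
                rw [← Matrix.mulVec_mulVec, Matrix.dotProduct_mulVec, ← Matrix.mulVec_transpose,
                  Matrix.transpose_transpose]
            _ = (V *ᵥ u) ⬝ᵥ N.toBlocks₂₂ *ᵥ y := by rw [hy]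
            _ = (N.toBlocks₂₂ᵀ *ᵥ (V *ᵥ u)) ⬝ᵥ y := by
                rw [Matrix.dotProduct_mulVec, Matrix.mulVec_transpose]
            _ = 0 := by rw [hN22s, hN22Vu, zero_dotProduct]
        exact hu (dotProduct_self_eq_zero.mp hu0)
    have hCunit : IsUnit (Vᵀ * N.toBlocks₂₂ * V) := by
      have h := hCneg.isUnit
      simpa using h.neg
    have hCdetu : IsUnit (Vᵀ * N.toBlocks₂₂ * V).det :=
      (Matrix.isUnit_iff_isUnit_det _).mp hCunit
    have hCi1 : (Vᵀ * N.toBlocks₂₂ * V) * (Vᵀ * N.toBlocks₂₂ * V)⁻¹ = 1 :=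
      Matrix.mul_nonsing_inv _ hCdetu
    have hCi2 : (Vᵀ * N.toBlocks₂₂ * V)⁻¹ * (Vᵀ * N.toBlocks₂₂ * V) = 1 :=
      Matrix.nonsing_inv_mul _ hCdetu
    set C : Matrix (Fin ρ) (Fin ρ) ℝ := Vᵀ * N.toBlocks₂₂ * V with hCdef
    set D : Matrix (Fin n ⊕ Fin m) (Fin n ⊕ Fin m) ℝ := V * C⁻¹ * Vᵀ with hDdef
    have hDN22 : D * N.toBlocks₂₂ = V * Vᵀ := by
      have h1 : D * N.toBlocks₂₂ = V * (C⁻¹ * (Vᵀ * (V * (C * Vᵀ)))) := by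
        rw [hDdef]
        nth_rewrite 1 [hN22C]
        simp only [Matrix.mul_assoc]
      rw [h1, cancel_left hVorth, ← Matrix.mul_assoc C⁻¹ C, hCi2, Matrix.one_mul]
    have hN22D : N.toBlocks₂₂ * D = V * Vᵀ := by
      have h1 : N.toBlocks₂₂ * D = V * (C * (Vᵀ * (V * (C⁻¹ * Vᵀ)))) := by
        rw [hDdef]
        nth_rewrite 1 [hN22C]
        simp only [Matrix.mul_assoc]
      rw [h1, cancel_left hVorth, ← Matrix.mul_assoc C C⁻¹, hCi1, Matrix.one_mul]
    have hN12VV : N.toBlocks₁₂ * (V * Vᵀ) = N.toBlocks₁₂ := right_proj_eq hSVV hkerN12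
    have hd1 : N.toBlocks₁₂ * D * N.toBlocks₂₂ = N.toBlocks₁₂ := by
      rw [Matrix.mul_assoc, hDN22, hN12VV]
    have hd2 : D * N.toBlocks₂₂ * D = D := by
      rw [hDN22, hDdef]
      have h1 : V * Vᵀ * (V * C⁻¹ * Vᵀ) = V * (Vᵀ * (V * (C⁻¹ * Vᵀ))) := by
        simp only [Matrix.mul_assoc]
      rw [h1, cancel_left hVorth, ← Matrix.mul_assoc]
    have hDs : Dᵀ = D := by
      rw [hDdef]
      rw [Matrix.transpose_mul, Matrix.transpose_mul, Matrix.transpose_transpose,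
        Matrix.transpose_nonsing_inv, hCs]
      simp only [Matrix.mul_assoc]
    have hpinv : pinv (N.toBlocks₂₂) = D := by
      apply pinv_eq
      · rw [Matrix.mul_assoc, hDN22, hSVV]
      · exact hd2
      · rw [hN22D, Matrix.transpose_mul, Matrix.transpose_transpose]
      · rw [hDN22, Matrix.transpose_mul, Matrix.transpose_transpose]
    have hschur : (N.toBlocks₁₁ - N.toBlocks₁₂ * pinv (N.toBlocks₂₂) *
        (N.toBlocks₁₂)ᵀ).PosSemidef := by
      rw [hpinv, schur_identity N.toBlocks₁₁ N.toBlocks₁₂ N.toBlocks₂₂ D Z0 hDs hN22s hd1 hd2,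
        ← hWexp]
      exact hWNW.add (psd_congr' hN22psd (Z0ᵀ + D * (N.toBlocks₁₂)ᵀ))
    -- K = V Vᵀ K and the P-recovery identity
    have hKVV : Kᵀ * (V * Vᵀ) = Kᵀ := right_proj_eq hSVV hkerK
    have hVVK : V * (Vᵀ * K) = K := by
      have h := congrArg Matrix.transpose hKVV
      simp only [Matrix.transpose_mul, Matrix.transpose_transpose] at h
      rw [Matrix.mul_assoc] at h
      exact h
    have hPrec : P = Vplus V * (Vᵀ * K) := by
      have h1 : Matrix.toRows₁ K = P := by
        rw [hKdef]
        exact Matrix.toRows₁_fromRows P L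
      have h2 : Matrix.toRows₁ (V * (Vᵀ * K)) = Vplus V * (Vᵀ * K) := by
        rw [toRows₁_mul]
        rfl
      rw [← h1]
      nth_rewrite 1 [← hVVK]
      rw [h2]
    refine ⟨⟨hNsymm, hN22psd, hkerN12, hschur⟩, ?_⟩
    -- the strict LMI with ab := (1 + β / c) * α
    obtain ⟨c, hc0, hcP⟩ := exists_upper hP
    set s : ℝ := β / c with hs
    have hs0 : 0 < s := div_pos hβ hc0
    set ab : ℝ := (1 + s) * α with hab
    have hab0 : 0 ≤ ab := le_of_lt (mul_pos (by linarith) hα0)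
    refine ⟨ab, hab0, ?_, hPrec⟩
    rw [corLMI_iff]
    apply posDef_fromBlocks₂₂_mpr hP
    -- compute the Schur complement matrix
    have hNbar : Nbar N V = fromBlocks N.toBlocks₁₁ (N.toBlocks₁₂ * V)
        (Vᵀ * (N.toBlocks₁₂)ᵀ) C := by
      rw [Nbar]
      nth_rewrite 1 [hNblocks]
      rw [diag_cong]
    have hsub : fromRows (0 : Matrix (Fin n) (Fin n) ℝ) (Vᵀ * K) * P⁻¹ *
        (fromRows (0 : Matrix (Fin n) (Fin n) ℝ) (Vᵀ * K))ᵀ =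
        fromBlocks 0 0 0 (Vᵀ * K * P⁻¹ * (Kᵀ * V)) := by
      rw [Matrix.transpose_fromRows, Matrix.fromRows_mul, Matrix.fromRows_mul_fromCols]
      simp only [Matrix.zero_mul, Matrix.mul_zero, Matrix.transpose_zero, Matrix.transpose_mul,
        Matrix.transpose_transpose, Matrix.mul_assoc]
    have e12 : -(α • N.toBlocks₁₂) * V = -(α • (N.toBlocks₁₂ * V)) := by
      rw [Matrix.neg_mul, Matrix.smul_mul]
    have e21 : Vᵀ * (-(α • N.toBlocks₁₂))ᵀ = -(α • (Vᵀ * (N.toBlocks₁₂)ᵀ)) := by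
      rw [Matrix.transpose_neg, Matrix.transpose_smul, Matrix.mul_neg, Matrix.mul_smul]
    have e22 : Vᵀ * (-(K * P⁻¹ * Kᵀ) - α • N.toBlocks₂₂) * V =
        -(Vᵀ * K * P⁻¹ * (Kᵀ * V)) - α • C := by
      rw [Matrix.mul_sub, Matrix.sub_mul, Matrix.mul_neg, Matrix.neg_mul,
        Matrix.mul_smul, Matrix.smul_mul, hCdef]
      simp only [Matrix.mul_assoc]
    have hSchurEq : fromBlocks P 0 0 (0 : Matrix (Fin ρ) (Fin ρ) ℝ) - ab • Nbar N V -
        fromRows (0 : Matrix (Fin n) (Fin n) ℝ) (Vᵀ * K) * P⁻¹ *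
        (fromRows (0 : Matrix (Fin n) (Fin n) ℝ) (Vᵀ * K))ᵀ =
        (1 + s) • ((fromBlocks (1 : Matrix (Fin n) (Fin n) ℝ) 0 0 V)ᵀ *
          (fromBlocks (P - β • 1 - α • N.toBlocks₁₁) (-(α • N.toBlocks₁₂))
            (-(α • N.toBlocks₁₂))ᵀ (-(K * P⁻¹ * Kᵀ) - α • N.toBlocks₂₂)) *
          fromBlocks (1 : Matrix (Fin n) (Fin n) ℝ) 0 0 V) +
        fromBlocks (((1 + s) * β) • 1 - s • P) 0 0 (s • (Vᵀ * K * P⁻¹ * (Kᵀ * V))) := by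
      rw [hsub, hNbar, diag_cong, e12, e21, e22, hab]
      simp only [Matrix.fromBlocks_smul, sub_eq_add_neg, Matrix.fromBlocks_neg,
        Matrix.fromBlocks_add, smul_zero, neg_zero, add_zero, zero_add]
      rw [Matrix.fromBlocks_inj]
      refine ⟨?_, ?_, ?_, ?_⟩ <;> module
    rw [hSchurEq]
    -- abbreviations
    have hQsym : (Vᵀ * K * P⁻¹ * (Kᵀ * V))ᵀ = Vᵀ * K * P⁻¹ * (Kᵀ * V) := by
      rw [Matrix.transpose_mul, Matrix.transpose_mul, Matrix.transpose_mul,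
        Matrix.transpose_mul, Matrix.transpose_nonsing_inv, hPsymm,
        Matrix.transpose_transpose, Matrix.transpose_transpose]
      simp only [Matrix.mul_assoc]
    have hQQsym : (fromBlocks (P - β • 1 - α • N.toBlocks₁₁) (-(α • N.toBlocks₁₂))
        (-(α • N.toBlocks₁₂))ᵀ (-(K * P⁻¹ * Kᵀ) - α • N.toBlocks₂₂))ᵀ =
        fromBlocks (P - β • 1 - α • N.toBlocks₁₁) (-(α • N.toBlocks₁₂))
        (-(α • N.toBlocks₁₂))ᵀ (-(K * P⁻¹ * Kᵀ) - α • N.toBlocks₂₂) :=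
      symm_of_herm hQQ.1
    have hQ'psd : (Vᵀ * K * P⁻¹ * (Kᵀ * V)).PosSemidef := by
      have h := psd_congr' hKPKpsd V
      have heq : Vᵀ * (K * P⁻¹ * Kᵀ) * V = Vᵀ * K * P⁻¹ * (Kᵀ * V) := by
        simp only [Matrix.mul_assoc]
      rwa [heq] at h
    have hJq : ∀ z : (Fin n ⊕ Fin ρ) → ℝ,
        z ⬝ᵥ ((fromBlocks (1 : Matrix (Fin n) (Fin n) ℝ) 0 0 V)ᵀ *
          (fromBlocks (P - β • 1 - α • N.toBlocks₁₁) (-(α • N.toBlocks₁₂))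
            (-(α • N.toBlocks₁₂))ᵀ (-(K * P⁻¹ * Kᵀ) - α • N.toBlocks₂₂)) *
          fromBlocks (1 : Matrix (Fin n) (Fin n) ℝ) 0 0 V) *ᵥ z =
        (fromBlocks (1 : Matrix (Fin n) (Fin n) ℝ) 0 0 V *ᵥ z) ⬝ᵥ
          (fromBlocks (P - β • 1 - α • N.toBlocks₁₁) (-(α • N.toBlocks₁₂))
            (-(α • N.toBlocks₁₂))ᵀ (-(K * P⁻¹ * Kᵀ) - α • N.toBlocks₂₂)) *ᵥ
          (fromBlocks (1 : Matrix (Fin n) (Fin n) ℝ) 0 0 V *ᵥ z) := by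
      intro z
      have h := quad_conj (fromBlocks (1 : Matrix (Fin n) (Fin n) ℝ) 0 0 V)ᵀ
        (fromBlocks (P - β • 1 - α • N.toBlocks₁₁) (-(α • N.toBlocks₁₂))
            (-(α • N.toBlocks₁₂))ᵀ (-(K * P⁻¹ * Kᵀ) - α • N.toBlocks₂₂)) z
      rwa [Matrix.transpose_transpose] at h
    apply pd_mk
    · have hGsym : ((fromBlocks (1 : Matrix (Fin n) (Fin n) ℝ) 0 0 V)ᵀ *
          (fromBlocks (P - β • 1 - α • N.toBlocks₁₁) (-(α • N.toBlocks₁₂))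
            (-(α • N.toBlocks₁₂))ᵀ (-(K * P⁻¹ * Kᵀ) - α • N.toBlocks₂₂)) *
          fromBlocks (1 : Matrix (Fin n) (Fin n) ℝ) 0 0 V)ᵀ =
          (fromBlocks (1 : Matrix (Fin n) (Fin n) ℝ) 0 0 V)ᵀ *
          (fromBlocks (P - β • 1 - α • N.toBlocks₁₁) (-(α • N.toBlocks₁₂))
            (-(α • N.toBlocks₁₂))ᵀ (-(K * P⁻¹ * Kᵀ) - α • N.toBlocks₂₂)) *
          fromBlocks (1 : Matrix (Fin n) (Fin n) ℝ) 0 0 V := by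
        rw [Matrix.transpose_mul, Matrix.transpose_mul, Matrix.transpose_transpose, hQQsym]
        simp only [Matrix.mul_assoc]
      have hMsym : (fromBlocks (((1 + s) * β) • 1 - s • P) 0 0
          (s • (Vᵀ * K * P⁻¹ * (Kᵀ * V))))ᵀ =
          fromBlocks (((1 + s) * β) • 1 - s • P) 0 0
          (s • (Vᵀ * K * P⁻¹ * (Kᵀ * V))) := by
        rw [Matrix.fromBlocks_transpose, Matrix.transpose_zero, Matrix.transpose_zero,
          Matrix.transpose_sub, Matrix.transpose_smul, Matrix.transpose_smul,
          Matrix.transpose_one, hPsymm, Matrix.transpose_smul, hQsym]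
      rw [Matrix.transpose_add, Matrix.transpose_smul, hGsym, hMsym]
    · intro x hx
      rw [← Sum.elim_comp_inl_inr x] at hx ⊢
      set y : Fin n → ℝ := x ∘ Sum.inl with hy
      set u : Fin ρ → ℝ := x ∘ Sum.inr with hu
      have hJz : fromBlocks (1 : Matrix (Fin n) (Fin n) ℝ) 0 0 V *ᵥ Sum.elim y u =
          Sum.elim y (V *ᵥ u) := by
        rw [Matrix.fromBlocks_mulVec]
        simp
      rw [Matrix.add_mulVec, dotProduct_add, Matrix.smul_mulVec,
        dotProduct_smul, hJq, hJz]
      have hq2 : Sum.elim y u ⬝ᵥ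
          (fromBlocks (((1 + s) * β) • 1 - s • P) 0 0
            (s • (Vᵀ * K * P⁻¹ * (Kᵀ * V)))) *ᵥ Sum.elim y u =
          ((1 + s) * β) * (y ⬝ᵥ y) - s * (y ⬝ᵥ P *ᵥ y) +
            s * (u ⬝ᵥ (Vᵀ * K * P⁻¹ * (Kᵀ * V)) *ᵥ u) := by
        rw [Matrix.fromBlocks_mulVec, sumElim_dotProduct_sumElim]
        simp only [Sum.elim_comp_inl, Sum.elim_comp_inr, Matrix.zero_mulVec, add_zero,
          zero_add, Matrix.sub_mulVec, Matrix.smul_mulVec, Matrix.one_mulVec,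
          dotProduct_sub, dotProduct_smul, smul_eq_mul]
        try ring
      rw [hq2, smul_eq_mul]
      have hqQQ : 0 ≤ (Sum.elim y (V *ᵥ u)) ⬝ᵥ
          (fromBlocks (P - β • 1 - α • N.toBlocks₁₁) (-(α • N.toBlocks₁₂))
            (-(α • N.toBlocks₁₂))ᵀ (-(K * P⁻¹ * Kᵀ) - α • N.toBlocks₂₂)) *ᵥ
          (Sum.elim y (V *ᵥ u)) := psd2 hQQ _
      have hQ'q : 0 ≤ u ⬝ᵥ (Vᵀ * K * P⁻¹ * (Kᵀ * V)) *ᵥ u := psd2 hQ'psd u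
      rcases eq_or_ne y 0 with hy0 | hy0
      · -- y = 0, u ≠ 0
        have hu0 : u ≠ 0 := by
          intro h
          exact hx (by rw [hy0, h]; exact elim_eq_zero_iff.mpr ⟨rfl, rfl⟩)
        rw [hy0] at hqQQ ⊢
        have hXdef : (Sum.elim (0 : Fin n → ℝ) (V *ᵥ u)) ⬝ᵥ
            (fromBlocks (P - β • 1 - α • N.toBlocks₁₁) (-(α • N.toBlocks₁₂))
              (-(α • N.toBlocks₁₂))ᵀ (-(K * P⁻¹ * Kᵀ) - α • N.toBlocks₂₂)) *ᵥ
            (Sum.elim (0 : Fin n → ℝ) (V *ᵥ u)) =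
            (V *ᵥ u) ⬝ᵥ (-(K * P⁻¹ * Kᵀ) - α • N.toBlocks₂₂) *ᵥ (V *ᵥ u) := by
          rw [Matrix.fromBlocks_mulVec, sumElim_dotProduct_sumElim]
          simp [Sum.elim_comp_inl, Sum.elim_comp_inr]
        have hsplit : (V *ᵥ u) ⬝ᵥ (-(K * P⁻¹ * Kᵀ) - α • N.toBlocks₂₂) *ᵥ (V *ᵥ u) +
            u ⬝ᵥ (Vᵀ * K * P⁻¹ * (Kᵀ * V)) *ᵥ u = α * (u ⬝ᵥ (-C) *ᵥ u) := by
          have h1 : u ⬝ᵥ (Vᵀ * (-(K * P⁻¹ * Kᵀ) - α • N.toBlocks₂₂) * V) *ᵥ u =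
              (V *ᵥ u) ⬝ᵥ (-(K * P⁻¹ * Kᵀ) - α • N.toBlocks₂₂) *ᵥ (V *ᵥ u) := by
            have h := quad_conj Vᵀ (-(K * P⁻¹ * Kᵀ) - α • N.toBlocks₂₂) u
            rwa [Matrix.transpose_transpose] at h
          rw [← h1, e22]
          rw [Matrix.sub_mulVec, Matrix.neg_mulVec, Matrix.smul_mulVec,
            dotProduct_sub, dotProduct_neg, dotProduct_smul,
            Matrix.neg_mulVec, dotProduct_neg]
          simp only [smul_eq_mul]
          ring
        rw [hXdef] at hqQQ ⊢
        have hCq : 0 < u ⬝ᵥ (-C) *ᵥ u := pd2 hCneg hu0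
        simp only [zero_dotProduct, dotProduct_zero, Matrix.mulVec_zero,
          mul_zero, zero_sub, sub_zero, neg_zero, zero_add, add_zero]
        nlinarith [mul_pos hs0 (mul_pos hα0 hCq), hqQQ, hQ'q, hsplit, hs0]
      · -- y ≠ 0
        have hyy : 0 < y ⬝ᵥ y := dot_self_pos hy0
        have hPy : y ⬝ᵥ P *ᵥ y ≤ c * (y ⬝ᵥ y) := by
          have h := psd2 hcP y
          rw [Matrix.sub_mulVec, Matrix.smul_mulVec, Matrix.one_mulVec,
            dotProduct_sub, dotProduct_smul, smul_eq_mul] at h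
          linarith
        have hsc : s * c = β := by
          rw [hs]
          field_simp
        have hb1 : 0 ≤ (1 + s) * ((Sum.elim y (V *ᵥ u)) ⬝ᵥ
            (fromBlocks (P - β • 1 - α • N.toBlocks₁₁) (-(α • N.toBlocks₁₂))
              (-(α • N.toBlocks₁₂))ᵀ (-(K * P⁻¹ * Kᵀ) - α • N.toBlocks₂₂)) *ᵥ
            (Sum.elim y (V *ᵥ u))) :=
          mul_nonneg (by linarith) hqQQ
        have hb2 : 0 ≤ s * (u ⬝ᵥ (Vᵀ * K * P⁻¹ * (Kᵀ * V)) *ᵥ u) :=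
          mul_nonneg (le_of_lt hs0) hQ'q
        have hb3 : s * (y ⬝ᵥ P *ᵥ y) ≤ s * (c * (y ⬝ᵥ y)) :=
          mul_le_mul_of_nonneg_left hPy (le_of_lt hs0)
        have hb4 : s * (c * (y ⬝ᵥ y)) = β * (y ⬝ᵥ y) := by
          rw [← hsc]; ring
        have hb5 : 0 < s * (β * (y ⬝ᵥ y)) := mul_pos hs0 (mul_pos hβ hyy)
        nlinarith [hb1, hb2, hb3, hb4, hb5]

end
end

section
/- Define Ψ_j := diag(E_j,U_j) Φ_j diag(E_j,U_j)ᵀ ∈ S^{n_d+T_Σ} for j = 1,…,J and Ψ := diag(I_{n_d},U) Φ diag(I_{n_d},U)ᵀ ∈ S^{n_d+T_Σ}. If ⋂_{j=1}^J Z_{n_d,T_Σ}(Ψ_j) ⊆ Z_{n_d,T_Σ}(Ψ), then 𝒟_str ⊆ 𝒟̄(Φ). -/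
open Matrix

noncomputable section

/-- Selector matrix `U_j = [0; I_{T_j}; 0]` placing the `j`-th block inside the
stacked index `Σ_k T_k`. -/
def Usel {J : ℕ} (TT : Fin J → ℕ) (j : Fin J) :
    Matrix ((k : Fin J) × Fin (TT k)) (Fin (TT j)) ℝ :=
  Matrix.of fun i t => if i = ⟨j, t⟩ then 1 else 0

/-- `U = Σ_j U_j F_j`. -/
def Umat {J T : ℕ} (TT : Fin J → ℕ) (F : (j : Fin J) → Matrix (Fin (TT j)) (Fin T) ℝ) :
    Matrix ((k : Fin J) × Fin (TT k)) (Fin T) ℝ :=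
  ∑ j, Usel TT j * F j

/-- The structured perturbation set `𝒟_str`. -/
def DstrSet {J nd T : ℕ} (nn TT : Fin J → ℕ)
    (E : (j : Fin J) → Matrix (Fin nd) (Fin (nn j)) ℝ)
    (F : (j : Fin J) → Matrix (Fin (TT j)) (Fin T) ℝ)
    (Φs : (j : Fin J) → Matrix (Fin (nn j) ⊕ Fin (TT j)) (Fin (nn j) ⊕ Fin (TT j)) ℝ) :
    Set (Matrix (Fin nd) (Fin T) ℝ) :=
  {Δ | ∃ Δs : (j : Fin J) → Matrix (Fin (nn j)) (Fin (TT j)) ℝ,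
      (∀ j, (Δs j)ᵀ ∈ ZSet (Φs j)) ∧ Δ = ∑ j, E j * Δs j * F j}

/-- `𝒟̄(Φ)`. -/
def DbarSet {nd T : ℕ} (Φ : Matrix (Fin nd ⊕ Fin T) (Fin nd ⊕ Fin T) ℝ) :
    Set (Matrix (Fin nd) (Fin T) ℝ) :=
  {Δ | Δᵀ ∈ ZSet Φ}

/-- `Ψ_j = diag(E_j, U_j) Φ_j diag(E_j, U_j)ᵀ`. -/
def PsiJ {J nd : ℕ} (nn TT : Fin J → ℕ)
    (E : (j : Fin J) → Matrix (Fin nd) (Fin (nn j)) ℝ)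
    (Φs : (j : Fin J) → Matrix (Fin (nn j) ⊕ Fin (TT j)) (Fin (nn j) ⊕ Fin (TT j)) ℝ)
    (j : Fin J) :
    Matrix (Fin nd ⊕ (k : Fin J) × Fin (TT k)) (Fin nd ⊕ (k : Fin J) × Fin (TT k)) ℝ :=
  fromBlocks (E j) 0 0 (Usel TT j) * Φs j * (fromBlocks (E j) 0 0 (Usel TT j))ᵀ

/-- `Ψ = diag(I, U) Φ diag(I, U)ᵀ`. -/
def PsiU {J nd T : ℕ} (TT : Fin J → ℕ)
    (F : (j : Fin J) → Matrix (Fin (TT j)) (Fin T) ℝ)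
    (Φ : Matrix (Fin nd ⊕ Fin T) (Fin nd ⊕ Fin T) ℝ) :
    Matrix (Fin nd ⊕ (k : Fin J) × Fin (TT k)) (Fin nd ⊕ (k : Fin J) × Fin (TT k)) ℝ :=
  fromBlocks (1 : Matrix (Fin nd) (Fin nd) ℝ) 0 0 (Umat TT F) * Φ *
    (fromBlocks (1 : Matrix (Fin nd) (Fin nd) ℝ) 0 0 (Umat TT F))ᵀ


lemma usel_tmul_self {J : ℕ} (TT : Fin J → ℕ) (j : Fin J) :
    (Usel TT j)ᵀ * Usel TT j = 1 := by
  ext t s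
  simp only [mul_apply, transpose_apply, Usel, of_apply, ite_mul, one_mul, zero_mul]
  rw [Finset.sum_ite_eq' Finset.univ (⟨j, t⟩ : (k : Fin J) × Fin (TT k))]
  simp [Matrix.one_apply, Sigma.mk.inj_iff, eq_comm]

lemma usel_tmul_ne {J : ℕ} (TT : Fin J → ℕ) {j k : Fin J} (h : j ≠ k) :
    (Usel TT j)ᵀ * Usel TT k = 0 := by
  ext t s
  simp only [mul_apply, transpose_apply, Usel, of_apply, ite_mul, one_mul, zero_mul]
  rw [Finset.sum_ite_eq' Finset.univ (⟨j, t⟩ : (k : Fin J) × Fin (TT k))]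
  simp [Sigma.mk.inj_iff, h]

lemma usel_tmul_sum {J : ℕ} (TT : Fin J → ℕ) (j : Fin J) {m : Type*} [Fintype m]
    (X : (k : Fin J) → Matrix (Fin (TT k)) m ℝ) :
    (Usel TT j)ᵀ * (∑ k, Usel TT k * X k) = X j := by
  rw [Matrix.mul_sum]
  rw [Finset.sum_eq_single j]
  · rw [← Matrix.mul_assoc, usel_tmul_self, Matrix.one_mul]
  · intro k _ hk
    rw [← Matrix.mul_assoc, usel_tmul_ne TT (Ne.symm hk), Matrix.zero_mul]
  · simp

theorem stmt14 {J nd T : ℕ} (hJ : 0 < J) (hnd : 0 < nd) (hT : 0 < T)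
    (nn TT : Fin J → ℕ)
    (E : (j : Fin J) → Matrix (Fin nd) (Fin (nn j)) ℝ)
    (F : (j : Fin J) → Matrix (Fin (TT j)) (Fin T) ℝ)
    (Φs : (j : Fin J) → Matrix (Fin (nn j) ⊕ Fin (TT j)) (Fin (nn j) ⊕ Fin (TT j)) ℝ)
    (hΦs : ∀ j, Φs j ∈ PiSet (Fin (nn j)) (Fin (TT j)))
    (Φ : Matrix (Fin nd ⊕ Fin T) (Fin nd ⊕ Fin T) ℝ)
    (hsub : (⋂ j, ZSet (PsiJ nn TT E Φs j)) ⊆ ZSet (PsiU TT F Φ)) :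
    DstrSet nn TT E F Φs ⊆ DbarSet Φ := by
  rintro Δ ⟨Δs, hZm, rfl⟩
  set Z : Matrix ((k : Fin J) × Fin (TT k)) (Fin nd) ℝ :=
    ∑ k, Usel TT k * ((Δs k)ᵀ * (E k)ᵀ) with hZdef
  have key : ∀ j, (fromBlocks (E j) 0 0 (Usel TT j))ᵀ * fromRows (1 : Matrix (Fin nd) (Fin nd) ℝ) Z
      = fromRows (1 : Matrix (Fin (nn j)) (Fin (nn j)) ℝ) (Δs j)ᵀ * (E j)ᵀ := by
    intro j
    rw [fromBlocks_transpose, fromBlocks_mul_fromRows, fromRows_mul, hZdef,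
      usel_tmul_sum TT j (fun k => (Δs k)ᵀ * (E k)ᵀ)]
    simp [Matrix.mul_one, Matrix.one_mul, Matrix.zero_mul]
  have hmem : Z ∈ ⋂ j, ZSet (PsiJ nn TT E Φs j) := by
    simp only [Set.mem_iInter]
    intro j
    show ((fromRows (1 : Matrix (Fin nd) (Fin nd) ℝ) Z)ᵀ * PsiJ nn TT E Φs j * fromRows (1 : Matrix (Fin nd) (Fin nd) ℝ) Z).PosSemidef
    have e1 : (fromRows (1 : Matrix (Fin nd) (Fin nd) ℝ) Z)ᵀ * PsiJ nn TT E Φs j * fromRows (1 : Matrix (Fin nd) (Fin nd) ℝ) Z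
        = E j * ((fromRows (1 : Matrix (Fin (nn j)) (Fin (nn j)) ℝ) (Δs j)ᵀ)ᵀ * Φs j * fromRows (1 : Matrix (Fin (nn j)) (Fin (nn j)) ℝ) (Δs j)ᵀ) * (E j)ᵀ := by
      calc (fromRows (1 : Matrix (Fin nd) (Fin nd) ℝ) Z)ᵀ * PsiJ nn TT E Φs j * fromRows (1 : Matrix (Fin nd) (Fin nd) ℝ) Z
          = ((fromBlocks (E j) 0 0 (Usel TT j))ᵀ * fromRows (1 : Matrix (Fin nd) (Fin nd) ℝ) Z)ᵀ * Φs j *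
            ((fromBlocks (E j) 0 0 (Usel TT j))ᵀ * fromRows (1 : Matrix (Fin nd) (Fin nd) ℝ) Z) := by
            simp only [PsiJ, transpose_mul, transpose_transpose, Matrix.mul_assoc]
        _ = E j * ((fromRows (1 : Matrix (Fin (nn j)) (Fin (nn j)) ℝ) (Δs j)ᵀ)ᵀ * Φs j * fromRows (1 : Matrix (Fin (nn j)) (Fin (nn j)) ℝ) (Δs j)ᵀ) * (E j)ᵀ := by
            rw [key j]
            simp only [transpose_mul, transpose_transpose, Matrix.mul_assoc]
    rw [e1]
    simpa only [conjTranspose_eq_transpose_of_trivial] using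
      (hZm j).mul_mul_conjTranspose_same (E j)
  have hfin := hsub hmem
  have key' : (fromBlocks (1 : Matrix (Fin nd) (Fin nd) ℝ) 0 0 (Umat TT F))ᵀ * fromRows (1 : Matrix (Fin nd) (Fin nd) ℝ) Z
      = fromRows (1 : Matrix (Fin nd) (Fin nd) ℝ) ((∑ j, E j * Δs j * F j)ᵀ) := by
    rw [fromBlocks_transpose, fromBlocks_mul_fromRows]
    have hU : (Umat TT F)ᵀ * Z = (∑ j, E j * Δs j * F j)ᵀ := by
      rw [Umat, transpose_sum, Matrix.sum_mul, transpose_sum]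
      refine Finset.sum_congr rfl fun j _ => ?_
      rw [transpose_mul, Matrix.mul_assoc, hZdef,
        usel_tmul_sum TT j (fun k => (Δs k)ᵀ * (E k)ᵀ)]
      simp [Matrix.mul_assoc]
    rw [hU]
    simp [Matrix.mul_one, Matrix.one_mul, Matrix.zero_mul]
  show ((fromRows (1 : Matrix (Fin nd) (Fin nd) ℝ) (∑ j, E j * Δs j * F j)ᵀ)ᵀ * Φ * fromRows (1 : Matrix (Fin nd) (Fin nd) ℝ) (∑ j, E j * Δs j * F j)ᵀ).PosSemidef
  have e2 : (fromRows (1 : Matrix (Fin nd) (Fin nd) ℝ) Z)ᵀ * PsiU TT F Φ * fromRows (1 : Matrix (Fin nd) (Fin nd) ℝ) Z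
      = (fromRows (1 : Matrix (Fin nd) (Fin nd) ℝ) (∑ j, E j * Δs j * F j)ᵀ)ᵀ * Φ * fromRows (1 : Matrix (Fin nd) (Fin nd) ℝ) (∑ j, E j * Δs j * F j)ᵀ := by
    calc (fromRows (1 : Matrix (Fin nd) (Fin nd) ℝ) Z)ᵀ * PsiU TT F Φ * fromRows (1 : Matrix (Fin nd) (Fin nd) ℝ) Z
        = ((fromBlocks (1 : Matrix (Fin nd) (Fin nd) ℝ) 0 0 (Umat TT F))ᵀ * fromRows (1 : Matrix (Fin nd) (Fin nd) ℝ) Z)ᵀ * Φ *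
          ((fromBlocks (1 : Matrix (Fin nd) (Fin nd) ℝ) 0 0 (Umat TT F))ᵀ * fromRows (1 : Matrix (Fin nd) (Fin nd) ℝ) Z) := by
          simp only [PsiU, transpose_mul, transpose_transpose, Matrix.mul_assoc]
      _ = _ := by rw [key']
  exact e2 ▸ hfin


end
end

section
/- The following two feasibility problems are equivalent (one is feasible if and only if the other is). Problem (I): find Φ ∈ S^{(2n+m)+T}, scalars α₁,…,α_J ≥ 0, P ≻ 0 ∈ S^n, L ∈ ℝ^{m×n}, α ≥ 0, and β > 0 such that diag(I_{2n+m},U) Φ diag(I_{2n+m},U)ᵀ − Σ_{j=1}^J α_j · diag(E_j,U_j) Φ_j diag(E_j,U_j)ᵀ ⪰ 0 and ℳ(P,L,β) − α·diag(N(Φ),0_n) ⪰ 0. Problem (II): find Φ ∈ S^{(2n+m)+T}, scalars α₁,…,α_J ≥ 0, P ≻ 0 ∈ S^n, L ∈ ℝ^{m×n}, and β > 0 such that the same first inequality holds and ℳ(P,L,β) − diag(N(Φ),0_n) ⪰ 0. -/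
open Matrix

noncomputable section

/-- `N(Φ) = [I_{2n+m} 𝐗] Φ [I_{2n+m} 𝐗]ᵀ`. -/
def NPhi {n m T : ℕ} (Xd : Matrix (SRows n m) (Fin T) ℝ)
    (Φ : Matrix (SRows n m ⊕ Fin T) (SRows n m ⊕ Fin T) ℝ) :
    Matrix (SRows n m) (SRows n m) ℝ :=
  fromCols (1 : Matrix (SRows n m) (SRows n m) ℝ) Xd * Φ *
    (fromCols (1 : Matrix (SRows n m) (SRows n m) ℝ) Xd)ᵀ

/-- The outer-approximation LMI
`diag(I,U) Φ diag(I,U)ᵀ - Σ_j α_j diag(E_j,U_j) Φ_j diag(E_j,U_j)ᵀ ⪰ 0`. -/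
def Cond1 {n m T J : ℕ} (nn TT : Fin J → ℕ)
    (E : (j : Fin J) → Matrix (SRows n m) (Fin (nn j)) ℝ)
    (F : (j : Fin J) → Matrix (Fin (TT j)) (Fin T) ℝ)
    (Φs : (j : Fin J) → Matrix (Fin (nn j) ⊕ Fin (TT j)) (Fin (nn j) ⊕ Fin (TT j)) ℝ)
    (Φ : Matrix (SRows n m ⊕ Fin T) (SRows n m ⊕ Fin T) ℝ) (αs : Fin J → ℝ) : Prop :=
  (fromBlocks (1 : Matrix (SRows n m) (SRows n m) ℝ) 0 0 (Umat TT F) * Φ *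
      (fromBlocks (1 : Matrix (SRows n m) (SRows n m) ℝ) 0 0 (Umat TT F))ᵀ -
    ∑ j, αs j • (fromBlocks (E j) 0 0 (Usel TT j) * Φs j *
      (fromBlocks (E j) 0 0 (Usel TT j))ᵀ)).PosSemidef

lemma psd_smul' {k : Type*} [Fintype k] {M : Matrix k k ℝ} (h : M.PosSemidef) {a : ℝ}
    (ha : 0 ≤ a) : (a • M).PosSemidef := by
  refine ⟨?_, fun x => ?_⟩
  · have h1 := h.1
    unfold Matrix.IsHermitian at h1 ⊢
    rw [Matrix.conjTranspose_smul, h1]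
    simp
  simpa [Matrix.smul_mulVec, Finsupp.mul_sum, mul_assoc, mul_left_comm] using mul_nonneg ha (h.2 x)

theorem stmt17 {n m T J : ℕ} (hn : 0 < n) (hm : 0 < m) (hT : 0 < T) (hJ : 0 < J)
    (nn TT : Fin J → ℕ)
    (E : (j : Fin J) → Matrix (SRows n m) (Fin (nn j)) ℝ)
    (F : (j : Fin J) → Matrix (Fin (TT j)) (Fin T) ℝ)
    (Φs : (j : Fin J) → Matrix (Fin (nn j) ⊕ Fin (TT j)) (Fin (nn j) ⊕ Fin (TT j)) ℝ)
    (hΦs : ∀ j, Φs j ∈ PiSet (Fin (nn j)) (Fin (TT j)))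
    (Xd : Matrix (SRows n m) (Fin T) ℝ) :
    (∃ (Φ : Matrix (SRows n m ⊕ Fin T) (SRows n m ⊕ Fin T) ℝ) (αs : Fin J → ℝ)
        (P : Matrix (Fin n) (Fin n) ℝ) (Lm : Matrix (Fin m) (Fin n) ℝ) (α β : ℝ),
      Φ.IsSymm ∧ (∀ j, 0 ≤ αs j) ∧ P.PosDef ∧ 0 ≤ α ∧ 0 < β ∧
      Cond1 nn TT E F Φs Φ αs ∧
      (Mcal P Lm β - α • dN (NPhi Xd Φ)).PosSemidef) ↔
    (∃ (Φ : Matrix (SRows n m ⊕ Fin T) (SRows n m ⊕ Fin T) ℝ) (αs : Fin J → ℝ)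
        (P : Matrix (Fin n) (Fin n) ℝ) (Lm : Matrix (Fin m) (Fin n) ℝ) (β : ℝ),
      Φ.IsSymm ∧ (∀ j, 0 ≤ αs j) ∧ P.PosDef ∧ 0 < β ∧
      Cond1 nn TT E F Φs Φ αs ∧
      (Mcal P Lm β - dN (NPhi Xd Φ)).PosSemidef) := by
  constructor
  · rintro ⟨Φ, αs, P, L, α, β, hsym, hαs, hP, hα, hβ, h1, h2⟩
    refine ⟨α • Φ, fun j => α * αs j, P, L, β, ?_, fun j => mul_nonneg hα (hαs j),
      hP, hβ, ?_, ?_⟩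
    · unfold Matrix.IsSymm at hsym ⊢
      rw [Matrix.transpose_smul, hsym]
    · unfold Cond1 at h1 ⊢
      have key : fromBlocks (1 : Matrix (SRows n m) (SRows n m) ℝ) 0 0 (Umat TT F) * (α • Φ) *
          (fromBlocks (1 : Matrix (SRows n m) (SRows n m) ℝ) 0 0 (Umat TT F))ᵀ -
          ∑ j, (α * αs j) • (fromBlocks (E j) 0 0 (Usel TT j) * Φs j *
            (fromBlocks (E j) 0 0 (Usel TT j))ᵀ) =
          α • (fromBlocks (1 : Matrix (SRows n m) (SRows n m) ℝ) 0 0 (Umat TT F) * Φ *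
          (fromBlocks (1 : Matrix (SRows n m) (SRows n m) ℝ) 0 0 (Umat TT F))ᵀ -
          ∑ j, αs j • (fromBlocks (E j) 0 0 (Usel TT j) * Φs j *
            (fromBlocks (E j) 0 0 (Usel TT j))ᵀ)) := by
        rw [Matrix.mul_smul, Matrix.smul_mul, smul_sub, Finset.smul_sum]
        simp_rw [smul_smul]
      rw [key]
      exact psd_smul' h1 hα
    · have hN : NPhi Xd (α • Φ) = α • NPhi Xd Φ := by
        unfold NPhi
        rw [Matrix.mul_smul (fromCols (1 : Matrix (SRows n m) (SRows n m) ℝ) Xd) α Φ, Matrix.smul_mul]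
      have hd : dN (α • NPhi Xd Φ) = α • dN (NPhi Xd Φ) := by
        unfold dN
        ext (i | i) (j | j) <;> simp [Matrix.fromBlocks]
      rw [hN, hd]
      exact h2
  · rintro ⟨Φ, αs, P, L, β, hsym, hαs, hP, hβ, h1, h2⟩
    exact ⟨Φ, αs, P, L, 1, β, hsym, hαs, hP, zero_le_one, hβ, h1, by rwa [one_smul]⟩


end
end
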